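/- arXiv:1504.01681 — 4 statements merged into one kernel-verified Lean document; each statement's English description precedes it below -/
import Mathlib

section
/- Suppose X and Y are s-sets and φ: X → Y is a bijection such that φ(x) ≡ x (mod t) for all x ∈ X. Then there is a unique element w of the affine symmetric group W̃_s such that φ(x) = ẘ(x) for all x ∈ X, where ẘ denotes the image of w under the level-t action on ℤ. -/
/-- A partition: a weakly decreasing, eventually-zero sequence of naturals
(0-indexed: `f i` is the `(i+1)`-th part). -/
structure Partn where
  f : ℕ → ℕ
  antitone : Antitone f
  eventually_zero : ∃ N, ∀ i, N ≤ i → f i = 0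

/-- The beta-set `B(λ) = {λ_i - i : i ≥ 1}`. -/
def betaSet (p : Partn) : Set ℤ := {b | ∃ i : ℕ, b = (p.f i : ℤ) - (i + 1)}

/-- `conjCount p j` is the `(j+1)`-th part of the conjugate partition. -/
noncomputable def conjCount (p : Partn) (j : ℕ) : ℕ := Set.ncard {i : ℕ | j + 1 ≤ p.f i}

/-- Hook length of the cell in row `r+1`, column `c+1` (1-indexed formula
`1 + (λ_r - r) + (λ'_c - c)`). -/
noncomputable def hookLen (p : Partn) (r c : ℕ) : ℤ :=
  1 + ((p.f r : ℤ) - (r + 1)) + ((conjCount p c : ℤ) - (c + 1))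

/-- `p` is an `s`-core: no hook length is divisible by `s`. -/
def IsCore (s : ℕ) (p : Partn) : Prop :=
  ∀ r c : ℕ, c < p.f r → ¬ ((s : ℤ) ∣ hookLen p r c)

/-- `p` is self-conjugate. -/
def SelfConj (p : Partn) : Prop := ∀ j, p.f j = conjCount p j

/-- The `s`-set of an `s`-core: `S(λ) = (B(λ)+s) \ B(λ)`. -/
def sSet (s : ℕ) (p : Partn) : Set ℤ := {x | x - s ∈ betaSet p ∧ x ∉ betaSet p}

/-- An `s`-set: `s` integers, pairwise incongruent mod `s`, summing to `C(s,2)`. -/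
def IsSSet (s : ℕ) (X : Set ℤ) : Prop :=
  X.ncard = s ∧ (∀ a ∈ X, ∀ b ∈ X, a ≠ b → ¬ ((s : ℤ) ∣ (a - b))) ∧
    (∑ᶠ x ∈ X, x) = (s.choose 2 : ℤ)

/-- The affine symmetric group `W̃_s`, as a set of permutations of `ℤ`:
`w(m+s) = w(m)+s` and `w(0)+⋯+w(s-1) = C(s,2)`. -/
def AffSymSet (s : ℕ) : Set (Equiv.Perm ℤ) :=
  {w | (∀ m : ℤ, w (m + s) = w m + s) ∧
    (∑ i ∈ Finset.range s, w (i : ℤ)) = (s.choose 2 : ℤ)}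

/-- The underlying function of the Coxeter generator `w_i` of `W̃_s`, where `a = i - 1`:
swaps `m` and `m+1` whenever `m ≡ i - 1 (mod s)`. -/
def genFun (s : ℕ) (a : ℤ) : ℤ → ℤ := fun m =>
  if (s : ℤ) ∣ (m - a) then m + 1 else if (s : ℤ) ∣ (m - a - 1) then m - 1 else m

lemma genFun_involutive (s : ℕ) (hs : 2 ≤ s) (a : ℤ) :
    Function.Involutive (genFun s a) := by
  have h1 : ¬ ((s : ℤ) ∣ 1) := by
    intro h
    have := Int.le_of_dvd one_pos h
    omega
  intro m
  unfold genFun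
  by_cases hA : (s : ℤ) ∣ (m - a)
  · rw [if_pos hA]
    have hB : ¬ (s : ℤ) ∣ (m + 1 - a) := by
      intro h
      have := dvd_sub h hA
      rw [show m + 1 - a - (m - a) = 1 by ring] at this
      exact h1 this
    rw [if_neg hB, if_pos (by rw [show m + 1 - a - 1 = m - a by ring]; exact hA)]
    ring
  · rw [if_neg hA]
    by_cases hB : (s : ℤ) ∣ (m - a - 1)
    · rw [if_pos hB, if_pos (by rw [show m - 1 - a = m - a - 1 by ring]; exact hB)]
      ring
    · rw [if_neg hB, if_neg hA, if_neg hB]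

/-- The Coxeter generator `w_i` of `W̃_s`, where `a = i - 1`. -/
def genPerm (s : ℕ) (hs : 2 ≤ s) (a : ℤ) : Equiv.Perm ℤ :=
  (genFun_involutive s hs a).toPerm

/-- The constant `c = (s-1)(t-1)/2`. -/
def lc (s t : ℕ) : ℤ := (((s : ℤ) - 1) * ((t : ℤ) - 1)) / 2

/-- The image `ẘ_i` of the generator `w_i` under the level `t` action on `ℤ`:
`m ↦ m + t` if `m ≡ (i-1)t - c (mod s)`, `m ↦ m - t` if `m ≡ it - c (mod s)`,
`m ↦ m` otherwise. -/
def levelGenFun (s t : ℕ) (i : ℤ) : ℤ → ℤ := fun m =>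
  if (s : ℤ) ∣ (m - ((i - 1) * t - lc s t)) then m + t
  else if (s : ℤ) ∣ (m - (i * t - lc s t)) then m - t
  else m

/-- `Φ` is (the restriction to `W̃_s` of) the level `t` action of `W̃_s` on `ℤ`:
a multiplicative map on `W̃_s` sending each generator `w_i` to `ẘ_i`. -/
def IsLevelTAction (s t : ℕ) (hs : 2 ≤ s) (Φ : Equiv.Perm ℤ → Equiv.Perm ℤ) : Prop :=
  (∀ w v : Equiv.Perm ℤ, w ∈ AffSymSet s → v ∈ AffSymSet s → Φ (w * v) = Φ w * Φ v) ∧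
  (∀ i m : ℤ, Φ (genPerm s hs (i - 1)) m = levelGenFun s t i m)

/-- Removing a rim hook of length `t`, in terms of beta-sets:
`μ` is obtained from `λ` by removing a rim `t`-hook. -/
def RemoveHook (t : ℕ) (p q : Partn) : Prop :=
  ∃ b ∈ betaSet p, b - t ∉ betaSet p ∧ betaSet q = insert (b - t) (betaSet p \ {b})


namespace AW

lemma per_add_mul (s : ℕ) {w : ℤ → ℤ} (hw : ∀ m : ℤ, w (m + s) = w m + s) :
    ∀ (k m : ℤ), w (m + k * s) = w m + k * s := by
  intro k
  induction k using Int.induction_on with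
  | zero => simp
  | succ n ih => intro m; have := hw (m + n * s); push_cast at *
                 rw [show m + (n+1)*s = (m + n * s) + s by ring, this, ih]; ring
  | pred n ih => intro m
                 have h3 := ih m
                 have key : w (m + (-(n:ℤ)-1) * s + s) = w m + -(n:ℤ)*s := by
                   rw [show m + (-(n:ℤ)-1) * s + s = m + -(n:ℤ)*s by ring, h3]
                 have h2 : w (m + (-(n:ℤ)-1) * s + s) = w (m + (-(n:ℤ)-1)*s) + s := hw _
                 have : w (m + (-(n:ℤ)-1)*s) = w m + -(n:ℤ)*s - s := by omega
                 rw [this]; ring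

lemma diff_per (s : ℕ) {w : ℤ → ℤ} (hw : ∀ m : ℤ, w (m + s) = w m + s)
    {m m' : ℤ} (h : (s:ℤ) ∣ m' - m) : w m' - m' = w m - m := by
  obtain ⟨k, hk⟩ := h
  have hm : m' = m + k * s := by linarith [hk]
  rw [hm, per_add_mul s hw k m]; ring

lemma residue_inj (s : ℕ) (w : Equiv.Perm ℤ) (hw : ∀ m : ℤ, w (m + s) = w m + s)
    {m m' : ℤ} (h : (s:ℤ) ∣ (w m' - w m)) : (s:ℤ) ∣ m' - m := by
  obtain ⟨k, hk⟩ := h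
  have : w m' = w (m + k * s) := by rw [per_add_mul s hw k m]; linarith
  have := w.injective this
  exact ⟨k, by linarith⟩

lemma not_dvd_small (s : ℕ) {x : ℤ} (h1 : x ≠ 0) (h2 : -(s:ℤ) < x) (h3 : x < s) :
    ¬ (s:ℤ) ∣ x := by
  intro h
  rcases lt_trichotomy x 0 with hx | hx | hx
  · have := Int.le_of_dvd (by omega : (0:ℤ) < -x) (dvd_neg.mpr h)
    omega
  · exact h1 hx
  · have := Int.le_of_dvd hx h
    omega

lemma sum_range_id_int (s : ℕ) : ∑ i ∈ Finset.range s, (i:ℤ) = (s.choose 2 : ℤ) := by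
  have h1 := Finset.sum_range_id_mul_two s
  have h2 : s.choose 2 = s * (s-1) / 2 := Nat.choose_two_right s
  have h3 : (∑ i ∈ Finset.range s, (i:ℤ)) = ((∑ i ∈ Finset.range s, i : ℕ) : ℤ) := by
    push_cast; rfl
  rw [h3]
  have : (∑ i ∈ Finset.range s, i) = s.choose 2 := by omega
  rw [this]

lemma dvd_emod_sub (s : ℕ) (x : ℤ) : (s:ℤ) ∣ (x % s - x) :=
  ⟨-(x / s), by have := Int.mul_ediv_add_emod x s; linarith⟩

lemma sum_window (s : ℕ) (hs : 0 < s) (w : Equiv.Perm ℤ)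
    (hw : ∀ m : ℤ, w (m + s) = w m + s) (f : ℤ → ℤ) :
    ∑ i ∈ Finset.range s, f ((w i) % s) = ∑ i ∈ Finset.range s, f (i : ℤ) := by
  classical
  set g : ℕ → ℕ := fun i => ((w i) % s).toNat with hg
  have hsz : (0:ℤ) < s := by exact_mod_cast hs
  have hbd : ∀ i : ℕ, 0 ≤ (w i) % s ∧ (w i) % s < s := fun i =>
    ⟨Int.emod_nonneg _ (by omega), Int.emod_lt_of_pos _ hsz⟩
  have hmem : ∀ i ∈ Finset.range s, g i ∈ Finset.range s := by
    intro i _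
    have := hbd i
    simp only [g, Finset.mem_range]
    omega
  have hinj : ∀ i ∈ Finset.range s, ∀ j ∈ Finset.range s, g i = g j → i = j := by
    intro i hi j hj hij
    simp only [Finset.mem_range] at hi hj
    have hb1 := hbd i; have hb2 := hbd j
    have heq : (w i) % s = (w j) % s := by simp only [g] at hij; omega
    have hdvd : (s:ℤ) ∣ (w (j:ℤ) - w (i:ℤ)) := by
      have d1 := dvd_emod_sub s (w i)
      have d2 := dvd_emod_sub s (w j)
      have h5 : w (j:ℤ) - w (i:ℤ) = ((w i) % s - w i) - ((w j) % s - w j) := by omega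
      rw [h5]
      exact dvd_sub d1 d2
    have hd := residue_inj s w hw hdvd
    rcases eq_or_ne i j with h | h
    · exact h
    · exfalso
      refine not_dvd_small s (x := (j:ℤ) - i) ?_ ?_ ?_ hd <;> push_cast <;> omega
  have himg : (Finset.range s).image g = Finset.range s := by
    apply Finset.eq_of_subset_of_card_le
    · intro x hx
      obtain ⟨i, hi, rfl⟩ := Finset.mem_image.mp hx
      exact hmem i hi
    · rw [Finset.card_image_of_injOn (fun x hx y hy h => hinj x hx y hy h)]
  calc ∑ i ∈ Finset.range s, f ((w i) % s)
      = ∑ i ∈ Finset.range s, (fun r : ℕ => f (r:ℤ)) (g i) := by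
        apply Finset.sum_congr rfl
        intro i _
        simp only [g]
        congr 1
        have := hbd i
        omega
    _ = ∑ x ∈ (Finset.range s).image g, (fun r : ℕ => f (r:ℤ)) x :=
        (Finset.sum_image (f := fun r : ℕ => f (r:ℤ)) (fun x hx y hy h => hinj x hx y hy h)).symm
    _ = ∑ i ∈ Finset.range s, f (i:ℤ) := by rw [himg]

end AW



namespace AW2
open AW

lemma one_mem_aff (s : ℕ) : (1 : Equiv.Perm ℤ) ∈ AffSymSet s := by
  constructor
  · intro m; rfl
  · simpa using sum_range_id_int s

lemma mul_mem_aff {s : ℕ} (hs : 0 < s) {u v : Equiv.Perm ℤ}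
    (hu : u ∈ AffSymSet s) (hv : v ∈ AffSymSet s) : u * v ∈ AffSymSet s := by
  obtain ⟨hup, hus⟩ := hu
  obtain ⟨hvp, hvs⟩ := hv
  constructor
  · intro m
    simp only [Equiv.Perm.mul_apply]
    rw [hvp, hup]
  · have key : ∀ i : ℕ, u (v (i:ℤ)) = u ((v i) % s) + (v i - (v i) % s) := by
      intro i
      obtain ⟨k, hk⟩ := dvd_emod_sub s (v i)
      have h2 : (v (i:ℤ)) % s + (-k) * s = v i := by linarith
      calc u (v (i:ℤ)) = u ((v i) % s + (-k)*s) := by rw [h2]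
        _ = u ((v i)%s) + (-k)*s := per_add_mul s hup (-k) _
        _ = u ((v i)%s) + (v i - (v i)%s) := by linarith
    have h1 : ∑ i ∈ Finset.range s, u (v (i:ℤ))
        = (∑ i ∈ Finset.range s, u ((v i) % s))
          + ((∑ i ∈ Finset.range s, v (i:ℤ)) - ∑ i ∈ Finset.range s, ((v i) % s)) := by
      rw [← Finset.sum_sub_distrib, ← Finset.sum_add_distrib]
      exact Finset.sum_congr rfl (fun i _ => by rw [key i])
    have h3 : ∑ i ∈ Finset.range s, u ((v i) % s) = ∑ i ∈ Finset.range s, u (i:ℤ) :=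
      sum_window s hs v hvp u
    have h4 : ∑ i ∈ Finset.range s, ((v i) % s) = ∑ i ∈ Finset.range s, (i:ℤ) :=
      sum_window s hs v hvp (fun x => x)
    simp only [Equiv.Perm.mul_apply]
    rw [h1, h3, h4, hus, hvs, sum_range_id_int s]
    ring

lemma indicator_sum (s : ℕ) (hs : 0 < s) (a : ℤ) :
    ∑ i ∈ Finset.range s, (if (s:ℤ) ∣ ((i:ℤ) - a) then (1:ℤ) else 0) = 1 := by
  have hsz : (0:ℤ) < s := by exact_mod_cast hs
  set i0 : ℕ := (a % s).toNat with hi0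
  have hb : 0 ≤ a % s ∧ a % s < s := ⟨Int.emod_nonneg _ (by omega), Int.emod_lt_of_pos _ hsz⟩
  have hmem : i0 ∈ Finset.range s := by simp only [Finset.mem_range, i0]; omega
  have hdvd0 : (s:ℤ) ∣ ((i0:ℤ) - a) := by
    have := dvd_emod_sub s a
    have hcast : (i0:ℤ) = a % s := by simp only [i0]; omega
    rw [hcast]; exact this
  rw [Finset.sum_eq_single_of_mem i0 hmem]
  · rw [if_pos hdvd0]
  · intro j hj hne
    rw [if_neg]
    intro hdvd
    have : (s:ℤ) ∣ ((j:ℤ) - i0) := by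
      have := dvd_sub hdvd hdvd0
      simpa using this
    simp only [Finset.mem_range] at hj
    refine not_dvd_small s (x := (j:ℤ) - i0) ?_ ?_ ?_ this <;>
      [skip; skip; skip] <;> push_cast <;> omega

lemma genPerm_apply (s : ℕ) (hs : 2 ≤ s) (a : ℤ) (m : ℤ) :
    genPerm s hs a m = genFun s a m := rfl

lemma gen_mem_aff (s : ℕ) (hs : 2 ≤ s) (a : ℤ) : genPerm s hs a ∈ AffSymSet s := by
  have h1 : ¬ ((s:ℤ) ∣ 1) := not_dvd_small s (by omega) (by push_cast; omega) (by push_cast; omega)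
  constructor
  · intro m
    show genFun s a (m + s) = genFun s a m + s
    unfold genFun
    have e1 : (s:ℤ) ∣ (m + s - a) ↔ (s:ℤ) ∣ (m - a) := by
      constructor <;> intro h
      · have := dvd_sub h (dvd_refl (s:ℤ)); simpa [show m + s - a - s = m - a by ring] using this
      · have := dvd_add h (dvd_refl (s:ℤ)); simpa [show m - a + s = m + s - a by ring] using this
    have e2 : (s:ℤ) ∣ (m + s - a - 1) ↔ (s:ℤ) ∣ (m - a - 1) := by
      constructor <;> intro h
      · have := dvd_sub h (dvd_refl (s:ℤ)); simpa [show m + s - a - 1 - s = m - a - 1 by ring] using this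
      · have := dvd_add h (dvd_refl (s:ℤ)); simpa [show m - a - 1 + s = m + s - a - 1 by ring] using this
    by_cases hA : (s:ℤ) ∣ (m - a)
    · rw [if_pos (e1.mpr hA), if_pos hA]; ring
    · rw [if_neg (fun h => hA (e1.mp h)), if_neg hA]
      by_cases hB : (s:ℤ) ∣ (m - a - 1)
      · rw [if_pos (e2.mpr hB), if_pos hB]; ring
      · rw [if_neg (fun h => hB (e2.mp h)), if_neg hB]
  · have key : ∀ i : ℕ, genPerm s hs a (i:ℤ) = (i:ℤ)
        + (if (s:ℤ) ∣ ((i:ℤ) - a) then (1:ℤ) else 0)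
        - (if (s:ℤ) ∣ ((i:ℤ) - (a+1)) then (1:ℤ) else 0) := by
      intro i
      show genFun s a i = _
      unfold genFun
      by_cases hA : (s:ℤ) ∣ ((i:ℤ) - a)
      · have hB : ¬ (s:ℤ) ∣ ((i:ℤ) - (a+1)) := by
          intro h
          have := dvd_sub hA h
          simpa [show (i:ℤ) - a - ((i:ℤ) - (a+1)) = 1 by ring] using (h1 (by
            have := dvd_sub hA h
            rwa [show (i:ℤ) - a - ((i:ℤ) - (a+1)) = 1 by ring] at this))
        rw [if_pos hA, if_pos hA, if_neg hB]; ring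
      · rw [if_neg hA, if_neg hA]
        by_cases hB : (s:ℤ) ∣ ((i:ℤ) - a - 1)
        · rw [if_pos hB, if_pos (by rwa [show (i:ℤ) - (a+1) = (i:ℤ) - a - 1 by ring])]; ring
        · rw [if_neg hB, if_neg (by rw [show (i:ℤ) - (a+1) = (i:ℤ) - a - 1 by ring]; exact hB)]; ring
    rw [Finset.sum_congr rfl (fun i _ => key i)]
    rw [Finset.sum_sub_distrib, Finset.sum_add_distrib,
      indicator_sum s (by omega) a, indicator_sum s (by omega) (a+1), sum_range_id_int s]
    ring

end AW2



namespace AW3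
open AW AW2

variable (s : ℕ)

lemma genFun_per (s : ℕ) (a : ℤ) (m : ℤ) : genFun s a (m + s) = genFun s a m + s := by
  unfold genFun
  have e1 : (s:ℤ) ∣ (m + s - a) ↔ (s:ℤ) ∣ (m - a) := by
    constructor <;> intro h
    · have := dvd_sub h (dvd_refl (s:ℤ)); simpa [show m + s - a - s = m - a by ring] using this
    · have := dvd_add h (dvd_refl (s:ℤ)); simpa [show m - a + s = m + s - a by ring] using this
  have e2 : (s:ℤ) ∣ (m + s - a - 1) ↔ (s:ℤ) ∣ (m - a - 1) := by
    constructor <;> intro h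
    · have := dvd_sub h (dvd_refl (s:ℤ)); simpa [show m + s - a - 1 - s = m - a - 1 by ring] using this
    · have := dvd_add h (dvd_refl (s:ℤ)); simpa [show m - a - 1 + s = m + s - a - 1 by ring] using this
  by_cases hA : (s:ℤ) ∣ (m - a)
  · rw [if_pos (e1.mpr hA), if_pos hA]; ring
  · rw [if_neg (fun h => hA (e1.mp h)), if_neg hA]
    by_cases hB : (s:ℤ) ∣ (m - a - 1)
    · rw [if_pos (e2.mpr hB), if_pos hB]; ring
    · rw [if_neg (fun h => hB (e2.mp h)), if_neg hB]

lemma genFun_per_sub (s : ℕ) (a : ℤ) (m : ℤ) : genFun s a (m - s) = genFun s a m - s := by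
  have := genFun_per s a (m - s)
  rw [show m - s + s = m by ring] at this
  omega

lemma genFun_bounds (s : ℕ) (a m : ℤ) : m - 1 ≤ genFun s a m ∧ genFun s a m ≤ m + 1 := by
  unfold genFun; split_ifs <;> omega

lemma genFun_at_a (s : ℕ) (hs : 2 ≤ s) (a : ℤ) : genFun s a a = a + 1 := by
  unfold genFun; rw [if_pos (by simp)]

lemma genFun_at_a1 (s : ℕ) (hs : 2 ≤ s) (a : ℤ) : genFun s a (a + 1) = a := by
  have h1 : ¬ ((s:ℤ) ∣ 1) := not_dvd_small s (by omega) (by omega) (by exact_mod_cast hs)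
  unfold genFun
  rw [if_neg (by rwa [show a + 1 - a = 1 by ring]), if_pos (by rw [show a+1-a-1 = 0 by ring]; exact dvd_zero _)]
  ring

lemma genFun_lt (s : ℕ) (hs : 2 ≤ s) (a : ℤ) {i j : ℤ} (hij : i < j)
    (hne : ¬ ((s:ℤ) ∣ (i - a) ∧ j = i + 1)) : genFun s a i < genFun s a j := by
  have h1 : ¬ ((s:ℤ) ∣ 1) := not_dvd_small s (by omega) (by omega) (by exact_mod_cast hs)
  unfold genFun
  by_cases hA : (s:ℤ) ∣ (i - a)
  · rw [if_pos hA]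
    have hj2 : i + 2 ≤ j := by
      rcases eq_or_lt_of_le (by omega : i + 1 ≤ j) with h | h
      · exact absurd ⟨hA, h.symm⟩ hne
      · omega
    by_cases hB : (s:ℤ) ∣ (j - a)
    · rw [if_pos hB]; omega
    · rw [if_neg hB]
      by_cases hC : (s:ℤ) ∣ (j - a - 1)
      · rw [if_pos hC]
        have hne2 : j ≠ i + 2 := by
          intro h
          apply h1
          have := dvd_sub hC hA
          rwa [show j - a - 1 - (i - a) = j - i - 1 by ring, h, show i + 2 - i - 1 = 1 by ring] at this
        omega
      · rw [if_neg hC]; omega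
  · rw [if_neg hA]
    by_cases hA2 : (s:ℤ) ∣ (i - a - 1)
    · rw [if_pos hA2]
      split_ifs with h h2 <;> omega
    · rw [if_neg hA2]
      by_cases hB : (s:ℤ) ∣ (j - a)
      · rw [if_pos hB]; omega
      · rw [if_neg hB]
        by_cases hC : (s:ℤ) ∣ (j - a - 1)
        · rw [if_pos hC]
          have : j ≠ i + 1 := by
            intro h
            apply hA
            rwa [h, show i + 1 - a - 1 = i - a by ring] at hC
          omega
        · rw [if_neg hC]; omega

/-- Inversions of a periodic permutation, first coordinate normalized to a window. -/
def Inv (s : ℕ) (w : Equiv.Perm ℤ) : Set (ℤ × ℤ) :=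
  {p | 0 ≤ p.1 ∧ p.1 < s ∧ p.1 < p.2 ∧ w p.2 < w p.1}

lemma inv_finite (s : ℕ) (hs : 0 < s) (w : Equiv.Perm ℤ)
    (hw : ∀ m : ℤ, w (m + s) = w m + s) : (Inv s w).Finite := by
  classical
  have hne : (Finset.range s).Nonempty := ⟨0, Finset.mem_range.mpr hs⟩
  set K : ℤ := (Finset.range s).inf' hne (fun i => w (i:ℤ) - i) with hK
  set M : ℤ := (Finset.range s).sup' hne (fun i => w (i:ℤ)) with hM
  have hKle : ∀ j : ℤ, K ≤ w j - j := by
    intro j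
    have hb : 0 ≤ j % s ∧ j % s < s :=
      ⟨Int.emod_nonneg _ (by positivity), Int.emod_lt_of_pos _ (by exact_mod_cast hs)⟩
    have hr : ((j % s).toNat : ℤ) = j % s := by omega
    have hmem : (j % s).toNat ∈ Finset.range s := Finset.mem_range.mpr (by omega)
    have h1 : K ≤ w (((j % s).toNat : ℕ) : ℤ) - (((j % s).toNat : ℕ) : ℤ) :=
      Finset.inf'_le (f := fun i : ℕ => w (i:ℤ) - i) hmem
    have h2 : w j - j = w ((j % s).toNat : ℤ) - ((j % s).toNat : ℤ) := by
      refine (diff_per s hw ?_).symm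
      rw [hr]
      exact dvd_emod_sub s j
    rw [h2]
    exact h1
  have hMle : ∀ i : ℤ, 0 ≤ i → i < s → w i ≤ M := by
    intro i h0 h1
    have hmem : i.toNat ∈ Finset.range s := Finset.mem_range.mpr (by omega)
    have := Finset.le_sup' (f := fun i : ℕ => w (i:ℤ)) hmem
    rwa [show ((i.toNat : ℤ)) = i by omega] at this
  apply Set.Finite.subset ((Set.finite_Icc (0:ℤ) s).prod (Set.finite_Icc (0:ℤ) (M - K)))
  rintro ⟨x, y⟩ ⟨h0, h1, h2, h3⟩
  dsimp only at h0 h1 h2 h3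
  constructor
  · simp only [Set.mem_Icc]; omega
  · simp only [Set.mem_Icc]
    have hKy := hKle y
    have hMx := hMle x h0 h1
    constructor <;> omega

lemma descent_step (s : ℕ) (hs : 2 ≤ s) (w : Equiv.Perm ℤ)
    (hw : ∀ m : ℤ, w (m + s) = w m + s) {a : ℤ} (ha0 : 0 ≤ a) (has : a < s)
    (hd : w (a + 1) < w a) :
    (Inv s (w * genPerm s hs a)).ncard < (Inv s w).ncard := by
  classical
  set g : ℤ → ℤ := genFun s a with hg
  have hginv : Function.Involutive g := by rw [hg]; exact genFun_involutive s hs a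
  have hgper : ∀ m : ℤ, g (m + s) = g m + s := by rw [hg]; exact genFun_per s a
  have hgper' : ∀ m : ℤ, g (m - s) = g m - s := by rw [hg]; exact genFun_per_sub s a
  have hga : g a = a + 1 := by rw [hg]; exact genFun_at_a s hs a
  have hga1 : g (a + 1) = a := by rw [hg]; exact genFun_at_a1 s hs a
  have hgb : ∀ m : ℤ, m - 1 ≤ g m ∧ g m ≤ m + 1 := by rw [hg]; exact genFun_bounds s a
  have hglt : ∀ i j : ℤ, i < j → ¬ ((s:ℤ) ∣ (i - a) ∧ j = i + 1) → g i < g j := by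
    intro i j h hn; rw [hg]; exact genFun_lt s hs a h hn
  set F : ℤ × ℤ → ℤ × ℤ := fun p =>
    if g p.1 < 0 then (g p.1 + s, g p.2 + s)
    else if (s:ℤ) ≤ g p.1 then (g p.1 - s, g p.2 - s) else (g p.1, g p.2) with hF
  set A := Inv s (w * genPerm s hs a) with hA
  set B := Inv s w with hB
  have happ : ∀ m : ℤ, (w * genPerm s hs a) m = w (g m) := by
    intro m; rw [hg]; rfl
  have hBfin : B.Finite := inv_finite s (by omega) w hw
  have hshift : ∀ p ∈ A, ∃ e : ℤ, (e = 0 ∨ e = s ∨ e = -s) ∧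
      F p = (g p.1 + e, g p.2 + e) ∧ 0 ≤ g p.1 + e ∧ g p.1 + e < s := by
    intro p hp
    obtain ⟨h0, h1, _, _⟩ := hp
    have hb := hgb p.1
    simp only [hF]
    split_ifs with h1' h2'
    · exact ⟨s, by tauto, by rw [Prod.mk.injEq]; constructor <;> ring, by omega, by omega⟩
    · exact ⟨-s, by tauto, by rw [Prod.mk.injEq]; constructor <;> ring, by omega, by omega⟩
    · exact ⟨0, by tauto, by rw [Prod.mk.injEq]; constructor <;> ring, by omega, by omega⟩
  have hexcl : ∀ p ∈ A, ¬ ((s:ℤ) ∣ (p.1 - a) ∧ p.2 = p.1 + 1) := by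
    rintro ⟨x, y⟩ hp ⟨hdvd, hy⟩
    obtain ⟨h0, h1, h2, h3⟩ := hp
    dsimp only at h0 h1 h2 h3 hdvd hy
    have hxa : x = a := by
      by_contra hne
      exact not_dvd_small s (by omega) (by omega) (by omega) hdvd
    rw [happ, happ, hy, hxa, hga1, hga] at h3
    omega
  have hmaps : ∀ p ∈ A, F p ∈ B ∧ F p ≠ (a, a + 1) := by
    rintro ⟨x, y⟩ hp
    have hp' := hp
    obtain ⟨h0, h1, h2, h3⟩ := hp'
    dsimp only at h0 h1 h2 h3
    rw [happ, happ] at h3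
    have hlt : g x < g y := hglt x y h2 (hexcl ⟨x, y⟩ hp)
    have hbx := hgb x
    obtain ⟨e, he, hFeq, hr0, hr1⟩ := hshift (x, y) hp
    dsimp only at hFeq
    try dsimp only at hr0 hr1
    constructor
    · rw [hFeq]
      refine ⟨by dsimp only; omega, by dsimp only; omega, by dsimp only; omega, ?_⟩
      dsimp only
      rcases he with rfl | rfl | rfl
      · simpa using h3
      · rw [hw, hw]; omega
      · have e1 : w (g x + -(s:ℤ)) = w (g x) - s := by
          have := hw (g x - s); rw [show g x - s + s = g x by ring] at this
          rw [show g x + -(s:ℤ) = g x - s by ring]; omega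
        have e2 : w (g y + -(s:ℤ)) = w (g y) - s := by
          have := hw (g y - s); rw [show g y - s + s = g y by ring] at this
          rw [show g y + -(s:ℤ) = g y - s by ring]; omega
        rw [e1, e2]
        omega
    · intro hFeq2
      rw [hFeq] at hFeq2
      rw [Prod.mk.injEq] at hFeq2
      obtain ⟨hx', hy'⟩ := hFeq2
      try dsimp only at hx' hy'
      have hge : ∀ m : ℤ, g (m + -e) = g m + -e := by
        rcases he with rfl | rfl | rfl
        · simp
        · intro m; have := hgper' m; rw [show m + -(s:ℤ) = m - s by ring]; omega
        · intro m; have := hgper m; rw [show m + -(-(s:ℤ)) = m + s by ring]; omega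
      have hxval : x = a + 1 - e := by
        have h6 : g x = a + -e := by omega
        have h7 : g (g x) = g (a + -e) := by rw [h6]
        rw [hginv x, hge a, hga] at h7
        omega
      have hyval : y = a - e := by
        have h6 : g y = (a + 1) + -e := by omega
        have h7 : g (g y) = g ((a+1) + -e) := by rw [h6]
        rw [hginv y, hge (a+1), hga1] at h7
        omega
      omega
  have hinj : Set.InjOn F A := by
    rintro ⟨x, y⟩ hp ⟨x', y'⟩ hp' heq
    have hpc := hp
    have hpc' := hp'
    obtain ⟨h0, h1, h2, h3⟩ := hpc
    obtain ⟨h0', h1', h2', h3'⟩ := hpc'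
    dsimp only at h0 h1 h2 h0' h1' h2'
    obtain ⟨e, he, hFeq, hr0, hr1⟩ := hshift (x, y) hp
    obtain ⟨e', he', hFeq', hr0', hr1'⟩ := hshift (x', y') hp' 
    rw [hFeq, hFeq'] at heq
    rw [Prod.mk.injEq] at heq
    obtain ⟨hc1, hc2⟩ := heq
    dsimp only at hc1 hc2 hr0 hr1 hr0' hr1'
    have hdvd : (s:ℤ) ∣ (g x - g x') := by
      have hee : g x - g x' = e' - e := by omega
      rw [hee]
      have de : (s:ℤ) ∣ e := by rcases he with rfl | rfl | rfl <;> simp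
      have de' : (s:ℤ) ∣ e' := by rcases he' with rfl | rfl | rfl <;> simp
      exact dvd_sub de' de
    have hdvd2 : (s:ℤ) ∣ (x - x') := by
      rw [hg] at hdvd
      exact residue_inj s (genPerm s hs a) (fun m => genFun_per s a m) (m := x') (m' := x) hdvd
    have hxx : x = x' := by
      by_contra hne
      exact not_dvd_small s (by omega) (by omega) (by omega) hdvd2
    subst hxx
    have hgy : g y = g y' := by omega
    have := hginv.injective hgy
    rw [this]
  have hsub : F '' A ⊆ B \ {(a, a+1)} := by
    rintro q ⟨p, hp, rfl⟩
    obtain ⟨hq1, hq2⟩ := hmaps p hp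
    exact ⟨hq1, by simpa using hq2⟩
  have hmem : (a, a+1) ∈ B := ⟨ha0, has, by omega, hd⟩
  calc A.ncard = (F '' A).ncard := (Set.ncard_image_of_injOn hinj).symm
    _ ≤ (B \ {(a, a+1)}).ncard := Set.ncard_le_ncard hsub (hBfin.diff)
    _ < B.ncard := Set.ncard_diff_singleton_lt_of_mem hmem hBfin

lemma no_descent_id (s : ℕ) (hs : 2 ≤ s) (w : Equiv.Perm ℤ) (hw : w ∈ AffSymSet s)
    (hnd : ∀ a : ℤ, 0 ≤ a → a < s → w a < w (a + 1)) : w = 1 := by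
  obtain ⟨hwp, hws⟩ := hw
  have hstep : ∀ m : ℤ, w m < w (m + 1) := by
    intro m
    have hb : 0 ≤ m % s ∧ m % s < s :=
      ⟨Int.emod_nonneg _ (by positivity), Int.emod_lt_of_pos _ (by exact_mod_cast (by omega : 0 < s))⟩
    have hd1 : (s:ℤ) ∣ (m - m % s) := by
      rw [show m - m % s = -(m % s - m) by ring]
      exact (dvd_neg).mpr (dvd_emod_sub s m)
    have h1 : w m - m = w (m % s) - (m % s) := diff_per s hwp hd1
    have h2 : w (m+1) - (m+1) = w (m % s + 1) - (m % s + 1) := by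
      refine diff_per s hwp ?_
      rw [show m + 1 - (m % s + 1) = m - m % s by ring]
      exact hd1
    have := hnd (m % s) hb.1 hb.2
    omega
  have hmono : StrictMono w := strictMono_int_of_lt_succ hstep
  have hsucc : ∀ m : ℤ, w (m + 1) = w m + 1 := by
    intro m
    by_contra hne
    have h2 : w m + 1 < w (m + 1) := by have := hstep m; omega
    set j := w.symm (w m + 1) with hj
    have hwj : w j = w m + 1 := Equiv.apply_symm_apply w _
    have hj1 : m < j := by
      have : w m < w j := by omega
      exact hmono.lt_iff_lt.mp this
    have hj2 : j < m + 1 := by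
      have : w j < w (m+1) := by omega
      exact hmono.lt_iff_lt.mp this
    omega
  have hlin : ∀ m : ℤ, w m = w 0 + m := by
    intro m
    induction m using Int.induction_on with
    | zero => simp
    | succ n ih => rw [hsucc]; omega
    | pred n ih => have := hsucc (-(n:ℤ)-1); rw [show -(n:ℤ)-1+1 = -(n:ℤ) by ring] at this
                   omega
  have hsum : ∑ i ∈ Finset.range s, w (i:ℤ) = (s:ℤ) * w 0 + ∑ i ∈ Finset.range s, (i:ℤ) := by
    have h5 : ∑ i ∈ Finset.range s, w (i:ℤ) = ∑ i ∈ Finset.range s, (w 0 + (i:ℤ)) :=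
      Finset.sum_congr rfl (fun i _ => hlin i)
    rw [h5, Finset.sum_add_distrib, Finset.sum_const, Finset.card_range, nsmul_eq_mul]
  rw [hws, sum_range_id_int s] at hsum
  have hw0 : w 0 = 0 := by
    have hsz : (s:ℤ) ≠ 0 := by positivity
    have : (s:ℤ) * w 0 = 0 := by omega
    exact (mul_eq_zero.mp this).resolve_left hsz
  apply Equiv.ext
  intro m
  rw [hlin m, hw0]
  simp

lemma gen_sq (s : ℕ) (hs : 2 ≤ s) (a : ℤ) : genPerm s hs a * genPerm s hs a = 1 := by
  apply Equiv.ext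
  intro m
  exact (genFun_involutive s hs a) m

lemma exists_word_aux (s : ℕ) (hs : 2 ≤ s) :
    ∀ n : ℕ, ∀ w : Equiv.Perm ℤ, w ∈ AffSymSet s → (Inv s w).ncard = n →
      ∃ l : List ℤ, w = (l.map (genPerm s hs)).prod := by
  intro n
  induction n using Nat.strong_induction_on with
  | _ n ih =>
    intro w hw hcard
    by_cases hdesc : ∃ a : ℤ, 0 ≤ a ∧ a < s ∧ w (a + 1) < w a
    · obtain ⟨a, ha0, has, hd⟩ := hdesc
      have hstep := descent_step s hs w hw.1 ha0 has hd
      rw [hcard] at hstep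
      obtain ⟨l, hl⟩ := ih _ hstep (w * genPerm s hs a)
        (mul_mem_aff (by omega) hw (gen_mem_aff s hs a)) rfl
      refine ⟨l ++ [a], ?_⟩
      rw [List.map_append, List.prod_append, ← hl]
      simp [mul_assoc, gen_sq s hs a]
    · refine ⟨[], ?_⟩
      simp only [List.map_nil, List.prod_nil]
      apply no_descent_id s hs w hw
      intro a ha0 has
      push_neg at hdesc
      have h1 := hdesc a ha0 has
      have h2 : w a ≠ w (a + 1) := fun h => by
        have := w.injective h; omega
      omega

lemma exists_word (s : ℕ) (hs : 2 ≤ s) (w : Equiv.Perm ℤ) (hw : w ∈ AffSymSet s) :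
    ∃ l : List ℤ, w = (l.map (genPerm s hs)).prod :=
  exists_word_aux s hs _ w hw rfl


end AW3



namespace AW4
open AW AW2 AW3

noncomputable def tinv (s t : ℕ) : ℤ := Int.gcdB s t

lemma htt (s t : ℕ) (hst : Nat.Coprime s t) : (s:ℤ) ∣ ((t:ℤ) * tinv s t - 1) := by
  have h := Int.gcd_eq_gcd_ab (s:ℤ) (t:ℤ)
  have h2 : Int.gcd (s:ℤ) (t:ℤ) = 1 := by
    rw [Int.gcd_natCast_natCast]; exact hst
  rw [h2] at h
  exact ⟨-(Int.gcdA s t), by push_cast at h ⊢; unfold tinv; linarith⟩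

lemma hcop (s t : ℕ) (hst : Nat.Coprime s t) : IsCoprime (s:ℤ) (t:ℤ) := by
  rw [Int.isCoprime_iff_gcd_eq_one, Int.gcd_natCast_natCast]
  exact hst

noncomputable def nmap (s t : ℕ) (m : ℤ) : ℤ := tinv s t * (m + lc s t)

noncomputable def LAct (s t : ℕ) (w : Equiv.Perm ℤ) (m : ℤ) : ℤ :=
  m + t * (w (nmap s t m) - nmap s t m)

lemma cond_iff (s t : ℕ) (hst : Nat.Coprime s t) (m b : ℤ) :
    (s:ℤ) ∣ (nmap s t m - b) ↔ (s:ℤ) ∣ (m - (b * t - lc s t)) := by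
  have htt' := htt s t hst
  constructor
  · intro h
    have h2 : (s:ℤ) ∣ (nmap s t m - b) * t := Dvd.dvd.mul_right h t
    have h3 : m - (b * t - lc s t)
        = (nmap s t m - b) * t - (m + lc s t) * ((t:ℤ) * tinv s t - 1) := by
      unfold nmap; ring
    rw [h3]
    exact dvd_sub h2 (Dvd.dvd.mul_left htt' _)
  · intro h
    have h2 : (nmap s t m - b) * t
        = (m - (b * t - lc s t)) + (m + lc s t) * ((t:ℤ) * tinv s t - 1) := by
      unfold nmap; ring
    have h3 : (s:ℤ) ∣ (nmap s t m - b) * t := by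
      rw [h2]; exact dvd_add h (Dvd.dvd.mul_left htt' _)
    exact (hcop s t hst).dvd_of_dvd_mul_right h3

lemma L_gen (s t : ℕ) (hs : 2 ≤ s) (hst : Nat.Coprime s t) (i m : ℤ) :
    LAct s t (genPerm s hs (i-1)) m = levelGenFun s t i m := by
  unfold LAct levelGenFun
  have hco : (genPerm s hs (i-1)) (nmap s t m) = genFun s (i-1) (nmap s t m) := rfl
  rw [hco]
  have e1 := cond_iff s t hst m (i-1)
  have e2 := cond_iff s t hst m i
  unfold genFun
  by_cases hA : (s:ℤ) ∣ (nmap s t m - (i-1))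
  · rw [if_pos hA, if_pos (e1.mp hA)]; ring
  · rw [if_neg hA, if_neg (fun h => hA (e1.mpr h))]
    by_cases hB : (s:ℤ) ∣ (nmap s t m - (i-1) - 1)
    · have hB' : (s:ℤ) ∣ (nmap s t m - i) := by
        rwa [show nmap s t m - i = nmap s t m - (i-1) - 1 by ring]
      rw [if_pos hB, if_pos (e2.mp hB')]; ring
    · have hB' : ¬ (s:ℤ) ∣ (nmap s t m - i) := by
        rw [show nmap s t m - i = nmap s t m - (i-1) - 1 by ring]; exact hB
      rw [if_neg hB, if_neg (fun h => hB' (e2.mpr h))]; ring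

lemma L_mul (s t : ℕ) (hst : Nat.Coprime s t) (w v : Equiv.Perm ℤ)
    (hw : ∀ m : ℤ, w (m + s) = w m + s) (m : ℤ) :
    LAct s t (w * v) m = LAct s t w (LAct s t v m) := by
  have key : ∀ k : ℤ, nmap s t (m + t * k) = nmap s t m + tinv s t * t * k := by
    intro k; unfold nmap; ring
  unfold LAct
  rw [key]
  set n := nmap s t m with hn
  have hdvd : (s:ℤ) ∣ ((n + tinv s t * t * (v n - n)) - v n) := by
    have h2 : (n + tinv s t * t * (v n - n)) - v n = ((t:ℤ) * tinv s t - 1) * (v n - n) := by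
      ring
    rw [h2]
    exact Dvd.dvd.mul_right (htt s t hst) _
  have hdiff := diff_per s hw hdvd
  have happ : (w * v) n = w (v n) := rfl
  rw [happ]
  linear_combination -(t:ℤ) * hdiff

lemma Phi_eq (s t : ℕ) (hs : 2 ≤ s) (hst : Nat.Coprime s t)
    (Φ : Equiv.Perm ℤ → Equiv.Perm ℤ) (hΦ : IsLevelTAction s t hs Φ) :
    ∀ w ∈ AffSymSet s, ∀ m : ℤ, Φ w m = LAct s t w m := by
  have hΦ1 : Φ 1 = 1 := by
    have h1 := hΦ.1 1 1 (one_mem_aff s) (one_mem_aff s)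
    rw [mul_one] at h1
    exact (left_eq_mul.mp h1)
  have hΦg : ∀ (a : ℤ) (m' : ℤ), Φ (genPerm s hs a) m' = LAct s t (genPerm s hs a) m' := by
    intro a m'
    have h2 := hΦ.2 (a+1) m'
    rw [show a + 1 - 1 = a by ring] at h2
    rw [h2]
    have h3 := L_gen s t hs hst (a+1) m'
    rw [show a + 1 - 1 = a by ring] at h3
    rw [h3]
  have hlist : ∀ l : List ℤ, ((l.map (genPerm s hs)).prod ∈ AffSymSet s) ∧
      ∀ m : ℤ, Φ ((l.map (genPerm s hs)).prod) m
        = LAct s t ((l.map (genPerm s hs)).prod) m := by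
    intro l
    induction l with
    | nil =>
      refine ⟨by simpa using one_mem_aff s, ?_⟩
      intro m
      rw [List.map_nil, List.prod_nil, hΦ1]
      show m = LAct s t 1 m
      unfold LAct
      simp
    | cons a l ih =>
      have hg := gen_mem_aff s hs a
      have hp := ih.1
      constructor
      · rw [List.map_cons, List.prod_cons]
        exact mul_mem_aff (by omega) hg hp
      · intro m
        rw [List.map_cons, List.prod_cons, hΦ.1 _ _ hg hp]
        rw [Equiv.Perm.mul_apply, ih.2 m, hΦg a _]
        rw [L_mul s t hst _ _ hg.1 m]
  intro w hw m
  obtain ⟨l, rfl⟩ := exists_word s hs w hw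
  exact (hlist l).2 m

end AW4



namespace AW5
open AW AW2 AW3 AW4

lemma sset_exists (s : ℕ) (hs : 2 ≤ s) (X : Set ℤ) (hX : IsSSet s X) (r : ℤ) :
    ∃ x, x ∈ X ∧ (s:ℤ) ∣ (x - r) := by
  classical
  obtain ⟨hc, hdist, _⟩ := hX
  have hfin : X.Finite := by
    by_contra h
    have := Set.Infinite.ncard h
    omega
  have hcard : hfin.toFinset.card = s := by
    rw [← Set.ncard_eq_toFinset_card X hfin]; exact hc
  have hsz : (0:ℤ) < s := by exact_mod_cast (by omega : 0 < s)
  have hsub : hfin.toFinset.image (fun x : ℤ => x % s) ⊆ Finset.Ico (0:ℤ) s := by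
    intro z hz
    obtain ⟨x, hx, rfl⟩ := Finset.mem_image.mp hz
    rw [Finset.mem_Ico]
    exact ⟨Int.emod_nonneg _ (by omega), Int.emod_lt_of_pos _ hsz⟩
  have hinj : ∀ x ∈ hfin.toFinset, ∀ y ∈ hfin.toFinset, x % (s:ℤ) = y % (s:ℤ) → x = y := by
    intro x hx y hy hxy
    by_contra hne
    refine hdist x (hfin.mem_toFinset.mp hx) y (hfin.mem_toFinset.mp hy) hne ?_
    have d1 := dvd_emod_sub s x
    have d2 := dvd_emod_sub s y
    have h5 : x - y = (y % s - y) - (x % s - x) := by omega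
    rw [h5]; exact dvd_sub d2 d1
  have himg : hfin.toFinset.image (fun x : ℤ => x % s) = Finset.Ico (0:ℤ) s := by
    apply Finset.eq_of_subset_of_card_le hsub
    rw [Finset.card_image_of_injOn (fun x hx y hy h => hinj x hx y hy h), hcard, Int.card_Ico]
    simp
  have hr : r % (s:ℤ) ∈ Finset.Ico (0:ℤ) (s:ℤ) := by
    rw [Finset.mem_Ico]
    exact ⟨Int.emod_nonneg _ (by omega), Int.emod_lt_of_pos _ hsz⟩
  rw [← himg] at hr
  obtain ⟨x, hx, hxr⟩ := Finset.mem_image.mp hr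
  refine ⟨x, hfin.mem_toFinset.mp hx, ?_⟩
  have d1 := dvd_emod_sub s x
  have d2 := dvd_emod_sub s r
  have h5 : x - r = (r % s - r) - (x % s - x) := by omega
  rw [h5]; exact dvd_sub d2 d1

open Classical in
noncomputable def repF (s : ℕ) (X : Set ℤ) (r : ℤ) : ℤ :=
  if h : ∃ x, x ∈ X ∧ (s:ℤ) ∣ (x - r) then h.choose else 0

lemma repF_spec (s : ℕ) (hs : 2 ≤ s) (X : Set ℤ) (hX : IsSSet s X) (r : ℤ) :
    repF s X r ∈ X ∧ (s:ℤ) ∣ (repF s X r - r) := by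
  have h := sset_exists s hs X hX r
  unfold repF
  rw [dif_pos h]
  exact h.choose_spec

lemma repF_eq (s : ℕ) (hs : 2 ≤ s) (X : Set ℤ) (hX : IsSSet s X) {x r : ℤ}
    (hx : x ∈ X) (hd : (s:ℤ) ∣ (x - r)) : repF s X r = x := by
  obtain ⟨hm, hdd⟩ := repF_spec s hs X hX r
  by_contra hne
  refine hX.2.1 (repF s X r) hm x hx hne ?_
  have h5 : repF s X r - x = (repF s X r - r) - (x - r) := by ring
  rw [h5]; exact dvd_sub hdd hd

noncomputable def xnF (s t : ℕ) (X : Set ℤ) (n : ℤ) : ℤ := repF s X ((t:ℤ) * n - lc s t)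

noncomputable def dF (s t : ℕ) (X : Set ℤ) (φ : ℤ → ℤ) (n : ℤ) : ℤ :=
  (φ (xnF s t X n) - xnF s t X n) / t

noncomputable def wfF (s t : ℕ) (X : Set ℤ) (φ : ℤ → ℤ) (n : ℤ) : ℤ :=
  n + dF s t X φ n

lemma key_inv (s t : ℕ) (hs : 2 ≤ s) (ht : 0 < t) (X Y : Set ℤ)
    (hX : IsSSet s X) (hY : IsSSet s Y) (φ ψ : ℤ → ℤ)
    (hmemφ : ∀ x ∈ X, φ x ∈ Y) (hmodφ : ∀ x ∈ X, (t:ℤ) ∣ (φ x - x))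
    (hinv : ∀ x ∈ X, ψ (φ x) = x) (n : ℤ) :
    wfF s t Y ψ (wfF s t X φ n) = n := by
  have htz : (t:ℤ) ≠ 0 := by positivity
  obtain ⟨hxmem, hxdvd⟩ := repF_spec s hs X hX ((t:ℤ) * n - lc s t)
  set x := repF s X ((t:ℤ) * n - lc s t) with hx
  have hxn : xnF s t X n = x := rfl
  have hdF : dF s t X φ n = (φ x - x) / t := by unfold dF; rw [hxn]
  have hdx : (t:ℤ) * dF s t X φ n = φ x - x := by
    rw [hdF]; exact Int.mul_ediv_cancel' (hmodφ x hxmem)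
  have hyn : xnF s t Y (wfF s t X φ n) = φ x := by
    apply repF_eq s hs Y hY (hmemφ x hxmem)
    unfold wfF
    have h5 : φ x - ((t:ℤ) * (n + dF s t X φ n) - lc s t) = x - ((t:ℤ) * n - lc s t) := by
      linear_combination -hdx
    rw [h5]
    exact hxdvd
  show wfF s t X φ n + dF s t Y ψ (wfF s t X φ n) = n
  have hdy : dF s t Y ψ (wfF s t X φ n) = - dF s t X φ n := by
    unfold dF
    rw [hyn, hinv x hxmem]
    have h5 : x - φ x = (t:ℤ) * (- dF s t X φ n) := by linear_combination hdx
    rw [h5, Int.mul_ediv_cancel_left _ htz, hxn, ← hdF]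
  rw [hdy]
  unfold wfF
  ring

lemma sum_reps (s : ℕ) (X : Set ℤ) (hfin : X.Finite) (hcard : X.ncard = s)
    (f : ℕ → ℤ) (hmem : ∀ n ∈ Finset.range s, f n ∈ X)
    (hinj : ∀ m ∈ Finset.range s, ∀ n ∈ Finset.range s, f m = f n → m = n) :
    ∑ n ∈ Finset.range s, f n = ∑ᶠ x ∈ X, x := by
  classical
  have himg : (Finset.range s).image f = hfin.toFinset := by
    apply Finset.eq_of_subset_of_card_le
    · intro x hx
      obtain ⟨n, hn, rfl⟩ := Finset.mem_image.mp hx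
      exact hfin.mem_toFinset.mpr (hmem n hn)
    · rw [Finset.card_image_of_injOn (fun x hx y hy h => hinj x hx y hy h),
        ← Set.ncard_eq_toFinset_card X hfin, hcard, Finset.card_range]
  have h0 : ∀ (G : Finset ℤ), (G : Set ℤ) = X → ∑ᶠ x ∈ X, x = ∑ x ∈ G, x := by
    rintro G rfl
    exact finsum_mem_coe_finset _ _
  have h1 := h0 hfin.toFinset hfin.coe_toFinset
  rw [h1, ← himg, Finset.sum_image (fun x hx y hy h => hinj x hx y hy h)]

end AW5


/-- If `φ : X → Y` is a bijection of `s`-sets with `φ(x) ≡ x (mod t)` for all `x ∈ X`,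
then there is a unique `w ∈ W̃_s` with `φ(x) = ẘ(x)` for all `x ∈ X`. -/
theorem unique_w_extending (s t : ℕ) (hs : 2 ≤ s) (ht : 0 < t) (hst : Nat.Coprime s t)
    (Φ : Equiv.Perm ℤ → Equiv.Perm ℤ) (hΦ : IsLevelTAction s t hs Φ)
    (X Y : Set ℤ) (hX : IsSSet s X) (hY : IsSSet s Y)
    (φ : ℤ → ℤ) (hφ : Set.BijOn φ X Y) (hmod : ∀ x ∈ X, (t : ℤ) ∣ (φ x - x)) :
    ∃! w : Equiv.Perm ℤ, w ∈ AffSymSet s ∧ ∀ x ∈ X, φ x = Φ w x := by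
  classical
  open AW AW2 AW3 AW4 AW5 in
  have htz : (t:ℤ) ≠ 0 := by positivity
  have hXfin : X.Finite := by
    by_contra h
    have := Set.Infinite.ncard h
    have := hX.1
    omega
  have hYfin : Y.Finite := by
    by_contra h
    have := Set.Infinite.ncard h
    have := hY.1
    omega
  set ψ : ℤ → ℤ := Function.invFunOn φ X with hψdef
  have himg : φ '' X = Y := hφ.image_eq
  have hinvl : ∀ x ∈ X, ψ (φ x) = x := fun x hx => hφ.injOn.leftInvOn_invFunOn hx
  have hψmem : ∀ y ∈ Y, ψ y ∈ X := by
    intro y hy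
    rw [← himg] at hy
    obtain ⟨x, hx, rfl⟩ := hy
    rw [hinvl x hx]; exact hx
  have hψinv : ∀ y ∈ Y, φ (ψ y) = y := by
    intro y hy
    rw [← himg] at hy
    obtain ⟨x, hx, rfl⟩ := hy
    rw [hinvl x hx]
  have hψmod : ∀ y ∈ Y, (t:ℤ) ∣ (ψ y - y) := by
    intro y hy
    rw [← himg] at hy
    obtain ⟨x, hx, rfl⟩ := hy
    rw [hinvl x hx, show x - φ x = -(φ x - x) by ring]
    exact dvd_neg.mpr (hmod x hx)
  have hφmem : ∀ x ∈ X, φ x ∈ Y := fun x hx => hφ.mapsTo hx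
  have linv : Function.LeftInverse (AW5.wfF s t Y ψ) (AW5.wfF s t X φ) :=
    fun n => AW5.key_inv s t hs ht X Y hX hY φ ψ hφmem hmod hinvl n
  have rinv : Function.RightInverse (AW5.wfF s t Y ψ) (AW5.wfF s t X φ) :=
    fun n => AW5.key_inv s t hs ht Y X hY hX ψ φ hψmem hψmod hψinv n
  set w0 : Equiv.Perm ℤ := ⟨AW5.wfF s t X φ, AW5.wfF s t Y ψ, linv, rinv⟩ with hw0
  have hw0app : ∀ n : ℤ, w0 n = n + AW5.dF s t X φ n := fun n => rfl
  -- basic facts about xnF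
  have hxmem : ∀ n : ℤ, AW5.xnF s t X n ∈ X :=
    fun n => (AW5.repF_spec s hs X hX _).1
  have hxdvd : ∀ n : ℤ, (s:ℤ) ∣ (AW5.xnF s t X n - ((t:ℤ) * n - lc s t)) :=
    fun n => (AW5.repF_spec s hs X hX _).2
  have hdx : ∀ n : ℤ, (t:ℤ) * AW5.dF s t X φ n = φ (AW5.xnF s t X n) - AW5.xnF s t X n := by
    intro n
    exact Int.mul_ediv_cancel' (hmod _ (hxmem n))
  -- periodicity
  have hxnshift : ∀ n : ℤ, AW5.xnF s t X (n + s) = AW5.xnF s t X n := by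
    intro n
    unfold AW5.xnF
    apply AW5.repF_eq s hs X hX (hxmem n)
    have h5 : AW5.xnF s t X n - ((t:ℤ) * (n + s) - lc s t)
        = (AW5.xnF s t X n - ((t:ℤ) * n - lc s t)) - (t:ℤ) * s := by ring
    rw [h5]
    exact dvd_sub (hxdvd n) (dvd_mul_left _ _)
  have hper : ∀ m : ℤ, w0 (m + s) = w0 m + s := by
    intro m
    rw [hw0app, hw0app]
    have : AW5.dF s t X φ (m + s) = AW5.dF s t X φ m := by
      unfold AW5.dF
      rw [hxnshift m]
    rw [this]
    ring
  -- injectivity of n ↦ xnF n on the window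
  have hxninj : ∀ m ∈ Finset.range s, ∀ n ∈ Finset.range s,
      AW5.xnF s t X (m:ℤ) = AW5.xnF s t X (n:ℤ) → m = n := by
    intro m hm n hn hmn
    simp only [Finset.mem_range] at hm hn
    have h1 := hxdvd (m:ℤ)
    have h2 := hxdvd (n:ℤ)
    rw [hmn] at h1
    have h3 : (s:ℤ) ∣ (((n:ℤ) - m) * t) := by
      have h4 : ((n:ℤ) - m) * t
          = (AW5.xnF s t X (n:ℤ) - ((t:ℤ) * m - lc s t))
            - (AW5.xnF s t X (n:ℤ) - ((t:ℤ) * n - lc s t)) := by ring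
      rw [h4]
      exact dvd_sub h1 h2
    have h5 : (s:ℤ) ∣ ((n:ℤ) - m) := (AW4.hcop s t hst).dvd_of_dvd_mul_right h3
    by_contra hne
    exact AW.not_dvd_small s (by omega) (by omega) (by omega) h5
  -- sums
  have hsum1 : ∑ n ∈ Finset.range s, AW5.xnF s t X (n:ℤ) = (s.choose 2 : ℤ) := by
    rw [AW5.sum_reps s X hXfin hX.1 _ (fun n _ => hxmem (n:ℤ)) hxninj]
    exact hX.2.2
  have hsum2 : ∑ n ∈ Finset.range s, φ (AW5.xnF s t X (n:ℤ)) = (s.choose 2 : ℤ) := by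
    rw [AW5.sum_reps s Y hYfin hY.1 _ (fun n _ => hφmem _ (hxmem (n:ℤ)))
      (fun m hm n hn h => hxninj m hm n hn (hφ.injOn (hxmem m) (hxmem n) h))]
    exact hY.2.2
  have hdsum : ∑ n ∈ Finset.range s, AW5.dF s t X φ (n:ℤ) = 0 := by
    have h6 : (t:ℤ) * ∑ n ∈ Finset.range s, AW5.dF s t X φ (n:ℤ) = 0 := by
      rw [Finset.mul_sum]
      have h7 : ∀ n ∈ Finset.range s, (t:ℤ) * AW5.dF s t X φ (n:ℤ)
          = φ (AW5.xnF s t X (n:ℤ)) - AW5.xnF s t X (n:ℤ) := fun n _ => hdx (n:ℤ)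
      rw [Finset.sum_congr rfl h7, Finset.sum_sub_distrib, hsum1, hsum2]
      ring
    exact (mul_eq_zero.mp h6).resolve_left htz
  have hwsum : ∑ i ∈ Finset.range s, w0 (i:ℤ) = (s.choose 2 : ℤ) := by
    have h8 : ∀ i ∈ Finset.range s, w0 (i:ℤ) = (i:ℤ) + AW5.dF s t X φ (i:ℤ) :=
      fun i _ => hw0app (i:ℤ)
    rw [Finset.sum_congr rfl h8, Finset.sum_add_distrib, hdsum, AW.sum_range_id_int s]
    ring
  have hw0mem : w0 ∈ AffSymSet s := ⟨hper, hwsum⟩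
  -- key congruence: for x ∈ X, xnF (nmap x) = x
  have hfix : ∀ x ∈ X, AW5.xnF s t X (AW4.nmap s t x) = x := by
    intro x hx
    apply AW5.repF_eq s hs X hX hx
    have h9 : x - ((t:ℤ) * AW4.nmap s t x - lc s t)
        = -((x + lc s t) * ((t:ℤ) * AW4.tinv s t - 1)) := by
      unfold AW4.nmap
      ring
    rw [h9]
    exact dvd_neg.mpr (Dvd.dvd.mul_left (AW4.htt s t hst) _)
  -- the extension property
  have hcond : ∀ x ∈ X, φ x = Φ w0 x := by
    intro x hx
    rw [AW4.Phi_eq s t hs hst Φ hΦ w0 hw0mem x]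
    unfold AW4.LAct
    rw [hw0app (AW4.nmap s t x)]
    have h10 := hdx (AW4.nmap s t x)
    rw [hfix x hx] at h10
    linear_combination -h10
  refine ⟨w0, ⟨hw0mem, hcond⟩, ?_⟩
  rintro w' ⟨hw'mem, hw'eq⟩
  apply Equiv.ext
  intro n
  rw [hw0app n]
  -- evaluate at x := xnF n
  have hx := hxmem n
  have hL := hw'eq (AW5.xnF s t X n) hx
  rw [AW4.Phi_eq s t hs hst Φ hΦ w' hw'mem] at hL
  unfold AW4.LAct at hL
  -- s ∣ nmap (xnF n) - n
  have hnd : (s:ℤ) ∣ (AW4.nmap s t (AW5.xnF s t X n) - n) := by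
    have h11 : (AW4.nmap s t (AW5.xnF s t X n) - n) * t
        = (AW5.xnF s t X n + lc s t) * ((t:ℤ) * AW4.tinv s t - 1)
          + (AW5.xnF s t X n - ((t:ℤ) * n - lc s t)) := by
      unfold AW4.nmap
      ring
    exact (AW4.hcop s t hst).dvd_of_dvd_mul_right
      (by rw [h11]; exact dvd_add (Dvd.dvd.mul_left (AW4.htt s t hst) _) (hxdvd n))
  have hdiff := AW.diff_per s hw'mem.1 hnd
  have h12 := hdx n
  -- hL : φ x = x + t * (w' (nmap x) - nmap x); hdiff converts to w' n - n
  rw [hdiff] at hL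
  have h13 : (t:ℤ) * (w' n - n) = (t:ℤ) * AW5.dF s t X φ n := by
    linear_combination -hL - h12
  have h14 := mul_left_cancel₀ htz h13
  omega
end

section
/- An s-core λ is also a t-core if and only if the point x_λ lies in the simplex SC_s(t) = {x ∈ P^s : x_i - x_{i-t} ≤ t for all i ∈ ℤ/sℤ}. -/
lemma conj_set_finite (p : Partn) (c : ℕ) : {i : ℕ | c + 1 ≤ p.f i}.Finite := by
  obtain ⟨N, hN⟩ := p.eventually_zero
  apply Set.Finite.subset (Set.finite_Iio N)
  intro j hj
  simp only [Set.mem_setOf_eq] at hj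
  simp only [Set.mem_Iio]
  by_contra h
  have := hN j (le_of_not_gt h)
  omega

lemma downset_mem_iff {S : Set ℕ} (hfin : S.Finite)
    (hdc : ∀ i j : ℕ, i ≤ j → j ∈ S → i ∈ S) (m : ℕ) : m ∈ S ↔ m < S.ncard := by
  rcases S.eq_empty_or_nonempty with h | h
  · simp [h]
  · have hne : hfin.toFinset.Nonempty := by
      rwa [← Set.Finite.toFinset_nonempty hfin] at h
    set M := hfin.toFinset.max' hne with hM
    have hMS : M ∈ S := by
      have := hfin.toFinset.max'_mem hne
      rwa [Set.Finite.mem_toFinset] at this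
    have hS : S = Set.Iic M := by
      ext a
      constructor
      · intro ha
        exact hfin.toFinset.le_max' a (by rwa [Set.Finite.mem_toFinset])
      · intro ha
        exact hdc a M ha hMS
    rw [hS]
    have : (Set.Iic M).ncard = M + 1 := by
      rw [← Nat.card_coe_set_eq, Nat.card_eq_card_toFinset]
      simp
    rw [this]
    simp

lemma conj_mem_iff (p : Partn) (c i : ℕ) : c + 1 ≤ p.f i ↔ i < conjCount p c :=
  downset_mem_iff (conj_set_finite p c)
    (fun i j hij hj => le_trans hj (p.antitone hij)) i

lemma conj_le_conj_zero (p : Partn) (c : ℕ) : conjCount p c ≤ conjCount p 0 :=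
  Set.ncard_le_ncard (fun j hj => by simp only [Set.mem_setOf_eq] at *; omega)
    (conj_set_finite p 0)

/-- γ_c := c - λ'_c ; it is not in the beta-set. -/
lemma gamma_not_mem (p : Partn) (c : ℕ) :
    ((c : ℤ) - conjCount p c) ∉ betaSet p := by
  rintro ⟨i, hi⟩
  by_cases h : i < conjCount p c
  · have h1 := (conj_mem_iff p c i).mpr h
    omega
  · have h1 : ¬ (c + 1 ≤ p.f i) := fun hc => h ((conj_mem_iff p c i).mp hc)
    have h2 : conjCount p c ≤ i := le_of_not_gt h
    omega

lemma hook_eq (p : Partn) (r c : ℕ) :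
    hookLen p r c = ((p.f r : ℤ) - (r + 1)) - ((c : ℤ) - conjCount p c) := by
  unfold hookLen; ring

lemma lt_iff_gamma_lt (p : Partn) (r c : ℕ) :
    c < p.f r ↔ ((c : ℤ) - conjCount p c) < ((p.f r : ℤ) - (r + 1)) := by
  constructor
  · intro h
    have h1 : r < conjCount p c := (conj_mem_iff p c r).mp h
    omega
  · intro h
    by_contra hc
    have h1 : ¬ (c + 1 ≤ p.f r) := by omega
    have h2 : ¬ (r < conjCount p c) := fun hr => h1 ((conj_mem_iff p c r).mpr hr)
    omega

lemma closure_iterate (p : Partn) (n : ℕ)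
    (hcl : ∀ b ∈ betaSet p, b - n ∈ betaSet p) :
    ∀ k : ℕ, ∀ b ∈ betaSet p, b - k * n ∈ betaSet p := by
  intro k
  induction k with
  | zero => simpa using fun b hb => hb
  | succ k ih =>
    intro b hb
    have := hcl _ (ih b hb)
    have heq : b - (k : ℤ) * n - n = b - (k + 1 : ℕ) * n := by push_cast; ring
    rwa [heq] at this

/-- strictly negative enough integers are in the beta-set -/
lemma neg_mem (p : Partn) (k : ℤ) (hk : k ≤ -(conjCount p 0 : ℤ) - 1) :
    k ∈ betaSet p := by
  refine ⟨(-k - 1).toNat, ?_⟩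
  have hi : ((-k - 1).toNat : ℤ) = -k - 1 := Int.toNat_of_nonneg (by omega)
  have hf : p.f (-k - 1).toNat = 0 := by
    by_contra h
    have h1 : 0 + 1 ≤ p.f (-k - 1).toNat := by omega
    have := (conj_mem_iff p 0 _).mp h1
    omega
  rw [hf, hi]
  push_cast
  ring

/-- gap lemma: an integer strictly between γ_c and γ_{c+1} is in the beta-set -/
lemma gap_mem (p : Partn) (c : ℕ) (m : ℤ)
    (h1 : ((c : ℤ) - conjCount p c) < m)
    (h2 : m < ((c : ℤ) + 1 - conjCount p (c + 1))) :
    m ∈ betaSet p := by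
  have hm : m ≤ (c : ℤ) := by omega
  set i := (c - m).toNat with hi
  have hiz : (i : ℤ) = c - m := Int.toNat_of_nonneg (by omega)
  have hlt : i < conjCount p c := by omega
  have hge : conjCount p (c+1) ≤ i := by omega
  have hf1 : c + 1 ≤ p.f i := (conj_mem_iff p c i).mpr hlt
  have hf2 : ¬ (c + 1 + 1 ≤ p.f i) := fun h => by
    have := (conj_mem_iff p (c+1) i).mp h; omega
  have hf : p.f i = c + 1 := by omega
  exact ⟨i, by rw [hf]; omega⟩

/-- Main combinatorial lemma: `p` is an `n`-core iff beta-set closed under subtracting n. -/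
lemma isCore_iff_closed (p : Partn) (n : ℕ) (hn : 0 < n) :
    IsCore n p ↔ ∀ b ∈ betaSet p, b - n ∈ betaSet p := by
  constructor
  · intro hcore b hb
    obtain ⟨r, hr⟩ := hb
    by_contra hnot
    set m : ℤ := b - n with hmdef
    have hm0 : -(conjCount p 0 : ℤ) ≤ m := by
      by_contra h
      push_neg at h
      exact hnot (neg_mem p m (by omega))
    set P : ℕ → Prop := fun c => ((c : ℤ) - conjCount p c) ≤ m with hP
    have hbdd : ∀ k : ℕ, P k → k ≤ (m + conjCount p 0).toNat := by
      intro k hk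
      have h1 := conj_le_conj_zero p k
      simp only [hP] at hk
      omega
    set c := Nat.findGreatest P (m + conjCount p 0).toNat with hc
    have hP0 : P 0 := by simp only [hP]; push_cast; omega
    have hPc : P c := Nat.findGreatest_spec (Nat.zero_le _) hP0
    have hnPc1 : ¬ P (c + 1) := by
      intro hcon
      have hle := hbdd (c + 1) hcon
      exact Nat.findGreatest_is_greatest (Nat.lt_succ_self c) hle hcon
    simp only [hP] at hPc hnPc1
    push_neg at hnPc1
    push_cast at hnPc1
    rcases lt_or_eq_of_le hPc with hlt | heq
    · exact hnot (gap_mem p c m hlt (by omega))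
    · have hcr : c < p.f r := by
        rw [lt_iff_gamma_lt]
        omega
      refine hcore r c hcr ?_
      rw [hook_eq]
      refine ⟨1, ?_⟩
      omega
  · intro hcl r c hrc hdvd
    rw [hook_eq] at hdvd
    have hpos : 0 < ((p.f r : ℤ) - (r + 1)) - ((c : ℤ) - conjCount p c) :=
      sub_pos.mpr ((lt_iff_gamma_lt p r c).mp hrc)
    obtain ⟨k, hk⟩ := hdvd
    have hk1 : 1 ≤ k := by nlinarith
    have hmem := closure_iterate p n hcl k.toNat _ ⟨r, rfl⟩
    have heq : ((p.f r : ℤ) - (r + 1)) - (k.toNat : ℤ) * n = ((c : ℤ) - conjCount p c) := by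
      rw [Int.toNat_of_nonneg (by omega)]
      linear_combination hk
    rw [heq] at hmem
    exact gamma_not_mem p c hmem

lemma memB_iff (s : ℕ) (hs : 2 ≤ s) (p : Partn)
    (hcl : ∀ b ∈ betaSet p, b - s ∈ betaSet p)
    (x : ZMod s → ℤ)
    (hx : ∀ i : ZMod s, x i ∈ sSet s p ∧ ((x i : ZMod s) = i)) (b : ℤ) :
    b ∈ betaSet p ↔ b ≤ x ((b : ZMod s)) - s := by
  haveI : NeZero s := ⟨by omega⟩
  set i := ((b : ZMod s)) with hi
  obtain ⟨q, hq⟩ : (s : ℤ) ∣ (x i - b) := by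
    rw [← ZMod.intCast_zmod_eq_zero_iff_dvd]
    push_cast
    rw [(hx i).2, hi]
    ring
  constructor
  · intro hb
    by_contra hcon
    push_neg at hcon
    have hq0 : q ≤ 0 := by nlinarith
    have hmem := closure_iterate p s hcl (-q).toNat b hb
    have heq : b - ((-q).toNat : ℤ) * s = x i := by
      rw [Int.toNat_of_nonneg (by omega)]
      linear_combination -hq
    rw [heq] at hmem
    exact (hx i).1.2 hmem
  · intro hb
    have hq1 : 1 ≤ q := by nlinarith
    have hmem := closure_iterate p s hcl (q - 1).toNat _ (hx i).1.1
    have heq : x i - (s : ℤ) - ((q - 1).toNat : ℤ) * s = b := by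
      rw [Int.toNat_of_nonneg (by omega)]
      linear_combination hq
    rwa [heq] at hmem


/-- Johnson's lemma: an `s`-core `λ` is a `t`-core iff the point `x_λ` lies in the
simplex `{x : x_i - x_{i-t} ≤ t for all i ∈ ℤ/sℤ}`. -/
theorem tcore_iff_simplex (s t : ℕ) (hs : 2 ≤ s) (ht : 0 < t) (hst : Nat.Coprime s t)
    (p : Partn) (hp : IsCore s p) (x : ZMod s → ℤ)
    (hx : ∀ i : ZMod s, x i ∈ sSet s p ∧ ((x i : ZMod s) = i)) :
    IsCore t p ↔ ∀ i : ZMod s, x i - x (i - (t : ZMod s)) ≤ (t : ℤ) := by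
  haveI : NeZero s := ⟨by omega⟩
  have hcl : ∀ b ∈ betaSet p, b - s ∈ betaSet p := (isCore_iff_closed p s (by omega)).mp hp
  have hmem := memB_iff s hs p hcl x hx
  rw [isCore_iff_closed p t ht]
  constructor
  · intro h i
    have hb := h _ (hx i).1.1
    rw [hmem] at hb
    have hres : ((x i - s - t : ℤ) : ZMod s) = i - (t : ZMod s) := by
      push_cast
      rw [(hx i).2]
      simp
    rw [hres] at hb
    omega
  · intro h b hb
    rw [hmem] at hb ⊢
    have hres : ((b - t : ℤ) : ZMod s) = (b : ZMod s) - (t : ZMod s) := by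
      push_cast
      ring
    rw [hres]
    have := h ((b : ZMod s))
    omega
end

section
/- The number of s-cores λ such that k - l < Ns for all k, l in the s-set of λ equals N^{s-1}. -/
namespace CBC

/-- beta sequence -/
def bseq (p : Partn) (i : ℕ) : ℤ := (p.f i : ℤ) - (i + 1)

lemma bseq_strictAnti (p : Partn) : StrictAnti (bseq p) := by
  apply strictAnti_nat_of_succ_lt
  intro n
  have h := p.antitone (Nat.le_succ n)
  simp only [bseq]
  have : (p.f (n+1) : ℤ) ≤ p.f n := by exact_mod_cast h
  push_cast
  omega

lemma mem_betaSet (p : Partn) (b : ℤ) : b ∈ betaSet p ↔ ∃ i, b = bseq p i := Iff.rfl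

/-- A finite downward-closed set of naturals is an initial segment. -/
lemma lt_ncard_iff_mem (S : Set ℕ) (hfin : S.Finite) (hdc : ∀ a b : ℕ, a ≤ b → b ∈ S → a ∈ S)
    (j : ℕ) : j < S.ncard ↔ j ∈ S := by
  rcases S.eq_empty_or_nonempty with h | h
  · simp [h]
  · have hne : hfin.toFinset.Nonempty := by
      simpa [Set.Finite.toFinset_nonempty] using h
    set M := hfin.toFinset.max' hne with hM
    have hMS : M ∈ S := by
      have := hfin.toFinset.max'_mem hne
      simpa using this
    have hSeq : S = Set.Iic M := by
      ext a
      constructor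
      · intro ha
        exact hfin.toFinset.le_max' a (by simpa using ha)
      · intro ha
        exact hdc a M ha hMS
    rw [hSeq]
    have : (Set.Iic M).ncard = M + 1 := by
      rw [← Nat.card_coe_set_eq, Nat.card_eq_fintype_card]
      simp
    rw [this]
    simp [Nat.lt_succ_iff]

lemma conjCount_lt_iff (p : Partn) (c j : ℕ) : j < conjCount p c ↔ c + 1 ≤ p.f j := by
  obtain ⟨n, hn⟩ := p.eventually_zero
  have hfin : {i : ℕ | c + 1 ≤ p.f i}.Finite := by
    apply Set.Finite.subset (Set.finite_Iio n)
    intro i hi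
    simp only [Set.mem_setOf_eq] at hi
    by_contra h
    simp only [Set.mem_Iio, not_lt] at h
    rw [hn i h] at hi
    omega
  have := lt_ncard_iff_mem {i : ℕ | c + 1 ≤ p.f i} hfin
    (fun a b hab hb => le_trans hb (p.antitone hab)) j
  exact this

lemma hook_eq (p : Partn) (r c : ℕ) :
    hookLen p r c = bseq p r - ((c : ℤ) - conjCount p c) := by
  unfold hookLen bseq; ring

lemma sub_conj_notMem (p : Partn) (c : ℕ) : ((c : ℤ) - conjCount p c) ∉ betaSet p := by
  rintro ⟨i, hi⟩
  rcases lt_or_ge i (conjCount p c) with h | h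
  · have hf : c + 1 ≤ p.f i := (conjCount_lt_iff p c i).mp h
    have h2 : (i : ℤ) < conjCount p c := by exact_mod_cast h
    have h3 : (c : ℤ) + 1 ≤ p.f i := by exact_mod_cast hf
    omega
  · have hf : ¬ (c + 1 ≤ p.f i) := by
      intro hc
      have := (conjCount_lt_iff p c i).mpr hc
      omega
    have h2 : (conjCount p c : ℤ) ≤ i := by exact_mod_cast h
    have h3 : (p.f i : ℤ) ≤ c := by
      have : p.f i ≤ c := by omega
      exact_mod_cast this
    omega

lemma bseq_shift_antitone (p : Partn) : Antitone (fun i : ℕ => bseq p i + i) := by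
  apply antitone_nat_of_succ_le
  intro n
  have h := bseq_strictAnti p (Nat.lt_succ_self n)
  simp only [Nat.succ_eq_add_one] at h
  push_cast
  omega

lemma exists_col (p : Partn) (e : ℤ) (he : e ∉ betaSet p) :
    ∃ c : ℕ, (c : ℤ) - conjCount p c = e := by
  obtain ⟨n, hn⟩ := p.eventually_zero
  set S : Set ℕ := {i | e < bseq p i} with hS
  have hbne : ∀ i, bseq p i ≠ e := by
    intro i h
    exact he ⟨i, h.symm⟩
  have hfin : S.Finite := by
    apply Set.Finite.subset (Set.finite_Iio (n + (-e).toNat + 1))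
    intro i hi
    simp only [hS, Set.mem_setOf_eq] at hi
    simp only [Set.mem_Iio]
    by_contra hge
    push_neg at hge
    have hfi : p.f i = 0 := hn i (by omega)
    have hbi : bseq p i = -(i : ℤ) - 1 := by
      simp only [bseq, hfi, Nat.cast_zero]
      ring
    have h1 : ((-e).toNat : ℤ) ≤ i := by exact_mod_cast (by omega : (-e).toNat ≤ i)
    have h2 : -e ≤ ((-e).toNat : ℤ) := Int.self_le_toNat _
    omega
  have hdc : ∀ a b : ℕ, a ≤ b → b ∈ S → a ∈ S := by
    intro a b hab hb
    simp only [hS, Set.mem_setOf_eq] at hb ⊢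
    exact lt_of_lt_of_le hb ((bseq_strictAnti p).antitone hab)
  set k := S.ncard with hk
  have hmem : ∀ j, j < k ↔ e < bseq p j := fun j => lt_ncard_iff_mem S hfin hdc j
  have hkn : ¬ (e < bseq p k) := by
    intro h
    exact absurd ((hmem k).mpr h) (lt_irrefl k)
  have hbk : bseq p k ≤ e - 1 := by
    have := hbne k
    omega
  have hpos : 0 ≤ e + k := by
    rcases le_or_gt 0 e with h | h
    · positivity
    · have h1 : (k : ℤ) < -e → False := by
        intro hlt
        apply hkn
        have : -(k : ℤ) - 1 ≤ bseq p k := by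
          simp only [bseq]
          have : (0:ℤ) ≤ p.f k := Int.ofNat_nonneg _
          omega
        omega
      have h1' : -e ≤ (k:ℤ) := by
        by_contra hx
        push_neg at hx
        exact h1 hx
      omega
  set c : ℕ := (e + k).toNat with hcdef
  have hc : (c : ℤ) = e + k := Int.toNat_of_nonneg hpos
  have hiff : ∀ j, j < conjCount p c ↔ j < k := by
    intro j
    rw [conjCount_lt_iff]
    constructor
    · intro hf
      by_contra hge
      push_neg at hge  -- k ≤ j
      have h1 : (p.f j : ℤ) ≤ p.f k := by exact_mod_cast p.antitone hge
      have h2 : (p.f k : ℤ) ≤ e + k := by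
        simp only [bseq] at hbk
        omega
      have h3 : (c : ℤ) + 1 ≤ p.f j := by exact_mod_cast hf
      have h4 : (k : ℤ) ≤ j := by exact_mod_cast hge
      omega
    · intro hj
      have hk1 : 1 ≤ k := by omega
      have hkm : e < bseq p (k-1) := (hmem (k-1)).mp (by omega)
      have hcast : ((k-1 : ℕ) : ℤ) = (k : ℤ) - 1 := by
        push_cast [hk1]
        ring
      have hf1 : e + k + 1 ≤ (p.f (k-1) : ℤ) := by
        simp only [bseq, hcast] at hkm
        omega
      have hf2 : (p.f (k-1) : ℤ) ≤ p.f j := by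
        exact_mod_cast p.antitone (by omega : j ≤ k - 1)
      have : (c : ℤ) + 1 ≤ (p.f j : ℤ) := by omega
      exact_mod_cast this
  have hcc : conjCount p c = k := by
    have h1 := hiff k
    have h2 := hiff (conjCount p c)
    omega
  exact ⟨c, by rw [hcc, hc]; ring⟩

lemma flush_pow (p : Partn) (s : ℕ) (hfl : ∀ b ∈ betaSet p, b - s ∈ betaSet p) :
    ∀ t : ℕ, ∀ b ∈ betaSet p, b - s * t ∈ betaSet p := by
  intro t
  induction t with
  | zero => intro b hb; simpa using hb
  | succ t ih =>
    intro b hb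
    have := hfl _ (ih b hb)
    have he : b - (s:ℤ) * ((t:ℕ)+1 : ℕ) = b - s * t - s := by push_cast; ring
    rw [he]
    exact this

lemma isCore_iff (p : Partn) (s : ℕ) (hs : 0 < s) :
    IsCore s p ↔ ∀ b ∈ betaSet p, b - s ∈ betaSet p := by
  constructor
  · intro hcore b hb
    by_contra hnot
    obtain ⟨r, hr⟩ := hb
    obtain ⟨c, hc⟩ := exists_col p (b - s) hnot
    have hcf : c < p.f r := by
      by_contra hge
      push_neg at hge
      have hlam : conjCount p c ≤ r := by
        by_contra h
        push_neg at h
        have := (conjCount_lt_iff p c r).mp h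
        omega
      have h1 : (conjCount p c : ℤ) ≤ r := by exact_mod_cast hlam
      have h2 : (p.f r : ℤ) ≤ c := by exact_mod_cast hge
      have h3 : (0:ℤ) < s := by exact_mod_cast hs
      omega
    apply hcore r c hcf
    rw [hook_eq, hc]
    have : bseq p r = b := by rw [hr]; rfl
    rw [this]
    exact ⟨1, by ring⟩
  · intro hfl r c hcf hdvd
    rw [hook_eq] at hdvd
    have hmem := sub_conj_notMem p c
    have hpos : 1 ≤ bseq p r - ((c:ℤ) - conjCount p c) := by
      have h1 : (c:ℤ) + 1 ≤ p.f r := by exact_mod_cast hcf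
      have h2 : r < conjCount p c := (conjCount_lt_iff p c r).mpr hcf
      have h2' : (r:ℤ) + 1 ≤ conjCount p c := by exact_mod_cast h2
      simp only [bseq]
      omega
    obtain ⟨t, ht⟩ := hdvd
    have htpos : 0 ≤ t := by
      by_contra h
      push_neg at h
      have hsn : (0:ℤ) ≤ s := by exact_mod_cast Nat.zero_le s
      have : (s:ℤ) * t ≤ 0 := mul_nonpos_of_nonneg_of_nonpos hsn (le_of_lt h)
      omega
    have hmem2 := flush_pow p s hfl t.toNat (bseq p r) ⟨r, rfl⟩
    have heq : bseq p r - (s:ℤ) * (t.toNat : ℤ) = (c:ℤ) - conjCount p c := by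
      rw [Int.toNat_of_nonneg htpos]
      omega
    rw [heq] at hmem2
    exact hmem hmem2

lemma betaSet_eq_range (p : Partn) : betaSet p = Set.range (bseq p) := by
  ext b
  simp only [betaSet, Set.mem_setOf_eq, Set.mem_range, bseq]
  exact ⟨fun ⟨i, h⟩ => ⟨i, h.symm⟩, fun ⟨i, h⟩ => ⟨i, h.symm⟩⟩

lemma ncard_Iio (m : ℕ) : (Set.Iio m).ncard = m := by
  rw [← Finset.coe_Iio, Set.ncard_coe_finset, Nat.card_Iio]

lemma charge_partn (p : Partn) (m : ℕ) (hm : ∀ i, m ≤ i → p.f i = 0) :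
    {y ∈ betaSet p | -(m:ℤ) ≤ y}.ncard = m := by
  have hset : {y ∈ betaSet p | -(m:ℤ) ≤ y} = bseq p '' (Set.Iio m) := by
    ext y
    constructor
    · rintro ⟨⟨i, hi⟩, hy⟩
      refine ⟨i, ?_, hi.symm⟩
      simp only [Set.mem_Iio]
      by_contra hge
      push_neg at hge
      have h0 : p.f i = 0 := hm i hge
      have : (m:ℤ) ≤ i := by exact_mod_cast hge
      rw [h0] at hi
      push_cast at hi
      omega
    · rintro ⟨i, hi, rfl⟩
      simp only [Set.mem_Iio] at hi
      refine ⟨⟨i, rfl⟩, ?_⟩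
      have : (i:ℤ) + 1 ≤ m := by exact_mod_cast hi
      simp only [bseq]
      have : (0:ℤ) ≤ p.f i := Int.ofNat_nonneg _
      omega
  rw [hset, Set.ncard_image_of_injOn ((bseq_strictAnti p).injective.injOn), ncard_Iio]

lemma strictAnti_range_eq {g h : ℕ → ℤ} (hg : StrictAnti g) (hh : StrictAnti h)
    (hr : Set.range g = Set.range h) : g = h := by
  have key : ∀ i, (∀ j, j < i → g j = h j) → g i = h i := by
    intro i ih
    obtain ⟨j, hj⟩ : g i ∈ Set.range h := by rw [← hr]; exact Set.mem_range_self i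
    obtain ⟨j', hj'⟩ : h i ∈ Set.range g := by rw [hr]; exact Set.mem_range_self i
    rcases lt_trichotomy (g i) (h i) with hlt | heq | hgt
    · exfalso
      have h1 : g i < g j' := by omega
      have h2 : j' < i := by
        by_contra hge
        push_neg at hge
        have := hg.antitone hge
        omega
      have := ih j' h2
      have := hh.injective (by omega : h j' = h i)
      omega
    · exact heq
    · exfalso
      have h1 : h i < h j := by omega
      have h2 : j < i := by
        by_contra hge
        push_neg at hge
        have := hh.antitone hge
        omega
      have := ih j h2
      have := hg.injective (by omega : g j = g i)
      omega
  funext i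
  exact Nat.strongRecOn i key

lemma betaSet_inj {p q : Partn} (h : betaSet p = betaSet q) : p = q := by
  have hb : bseq p = bseq q := by
    apply strictAnti_range_eq (bseq_strictAnti p) (bseq_strictAnti q)
    rw [← betaSet_eq_range, ← betaSet_eq_range, h]
  have hf : p.f = q.f := by
    funext i
    have := congrFun hb i
    simp only [bseq] at this
    omega
  cases p
  cases q
  simp only [Partn.mk.injEq]
  exact hf

open Classical in
noncomputable def maxOf (B : Set ℤ) : ℤ :=
  if h : ∃ x, x ∈ B ∧ ∀ y ∈ B, y ≤ x then h.choose else 0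

lemma maxOf_spec {B : Set ℤ} (hne : B.Nonempty) (hbdd : ∃ U, ∀ y ∈ B, y ≤ U) :
    maxOf B ∈ B ∧ ∀ y ∈ B, y ≤ maxOf B := by
  have h : ∃ x, x ∈ B ∧ ∀ y ∈ B, y ≤ x := by
    obtain ⟨U, hU⟩ := hbdd
    obtain ⟨lub, h1, h2⟩ := Int.exists_greatest_of_bdd (P := fun z => z ∈ B)
      ⟨U, fun z hz => hU z hz⟩ hne
    exact ⟨lub, h1, fun y hy => h2 y hy⟩
  rw [maxOf]
  rw [dif_pos h]
  exact h.choose_spec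

lemma strictAnti_int_shift {g : ℕ → ℤ} (hg : StrictAnti g) :
    Antitone (fun i : ℕ => g i + i) := by
  apply antitone_nat_of_succ_le
  intro n
  have := hg (Nat.lt_succ_self n)
  simp only [Nat.succ_eq_add_one] at this
  push_cast
  omega

lemma exists_partn (B : Set ℤ) (U L : ℤ) (hU : ∀ y ∈ B, y ≤ U)
    (hL : ∀ y : ℤ, y ≤ L → y ∈ B) (m₀ : ℕ) (hm₀ : -(m₀:ℤ) - 1 ≤ L)
    (hch : {y ∈ B | -(m₀:ℤ) ≤ y}.ncard = m₀) :
    ∃ p : Partn, betaSet p = B := by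
  classical
  set g : ℕ → ℤ := fun i => Nat.rec (maxOf B) (fun _ prev => maxOf (B ∩ Set.Iio prev)) i
    with hgdef
  have hg0 : g 0 = maxOf B := rfl
  have hgs : ∀ i, g (i+1) = maxOf (B ∩ Set.Iio (g i)) := fun i => rfl
  have hBne : B.Nonempty := ⟨L, hL L le_rfl⟩
  have h0 := maxOf_spec hBne ⟨U, hU⟩
  have hstep : ∀ i, g i ∈ B →
      g (i+1) ∈ B ∧ g (i+1) < g i ∧ ∀ y ∈ B, y < g i → y ≤ g (i+1) := by
    intro i hi
    have hne : (B ∩ Set.Iio (g i)).Nonempty := by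
      rcases lt_or_ge L (g i) with h | h
      · exact ⟨L, hL L le_rfl, h⟩
      · exact ⟨g i - 1, hL _ (by omega), by simp⟩
    have hbdd : ∃ U', ∀ y ∈ B ∩ Set.Iio (g i), y ≤ U' := ⟨U, fun y hy => hU y hy.1⟩
    have := maxOf_spec hne hbdd
    rw [← hgs i] at this
    exact ⟨this.1.1, this.1.2, fun y hy hlt => this.2 y ⟨hy, hlt⟩⟩
  have hmem : ∀ i, g i ∈ B := by
    intro i
    induction i with
    | zero => exact h0.1
    | succ n ih => exact (hstep n ih).1
  have hlt : ∀ i, g (i+1) < g i := fun i => (hstep i (hmem i)).2.1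
  have hbet : ∀ i, ∀ y ∈ B, y < g i → y ≤ g (i+1) := fun i => (hstep i (hmem i)).2.2
  have hanti : StrictAnti g := strictAnti_nat_of_succ_lt hlt
  have hchar : ∀ i, ∀ y ∈ B, (g i < y ↔ ∃ j, j < i ∧ y = g j) := by
    intro i
    induction i with
    | zero =>
      intro y hy
      constructor
      · intro h
        exact absurd (h0.2 y hy) (by omega)
      · rintro ⟨j, hj, _⟩
        omega
    | succ n ih =>
      intro y hy
      constructor
      · intro h
        rcases lt_trichotomy y (g n) with h1 | h1 | h1
        · exact absurd (hbet n y hy h1) (by omega)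
        · exact ⟨n, Nat.lt_succ_self n, h1⟩
        · obtain ⟨j, hj, hj2⟩ := (ih y hy).mp h1
          exact ⟨j, by omega, hj2⟩
      · rintro ⟨j, hj, rfl⟩
        have h1 : g n ≤ g j := hanti.antitone (by omega)
        have := hlt n
        omega
  -- the set above g i is the image of Iio i
  have himg : ∀ i : ℕ, {y ∈ B | g i < y} = g '' Set.Iio i := by
    intro i
    ext y
    constructor
    · rintro ⟨hyB, hy⟩
      obtain ⟨j, hj, rfl⟩ := (hchar i y hyB).mp hy
      exact ⟨j, hj, rfl⟩
    · rintro ⟨j, hj, rfl⟩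
      exact ⟨hmem j, (hchar i (g j) (hmem j)).mpr ⟨j, hj, rfl⟩⟩
  have hcard : ∀ i : ℕ, {y ∈ B | g i < y}.ncard = i := by
    intro i
    rw [himg i, Set.ncard_image_of_injOn hanti.injective.injOn, ncard_Iio]
  have hfinimg : ∀ i : ℕ, {y ∈ B | g i < y}.Finite := by
    intro i
    rw [himg i]
    exact ((Set.finite_Iio i).image g)
  have hfinch : {y ∈ B | -(m₀:ℤ) ≤ y}.Finite := by
    apply Set.Finite.subset (Set.finite_Icc (-(m₀:ℤ)) U)
    rintro y ⟨hyB, hy⟩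
    exact ⟨hy, hU y hyB⟩
  -- g m₀ = -m₀ - 1
  have hgm : g m₀ = -(m₀:ℤ) - 1 := by
    rcases lt_trichotomy (g m₀) (-(m₀:ℤ) - 1) with h | h | h
    · exfalso
      have hsub : insert (-(m₀:ℤ) - 1) {y ∈ B | -(m₀:ℤ) ≤ y} ⊆ {y ∈ B | g m₀ < y} := by
        rintro y (rfl | ⟨hyB, hy⟩)
        · exact ⟨hL _ hm₀, by omega⟩
        · exact ⟨hyB, by omega⟩
      have hle := Set.ncard_le_ncard hsub (hfinimg m₀)
      rw [Set.ncard_insert_of_notMem (by rintro ⟨_, hy⟩; omega) hfinch, hch, hcard m₀] at hle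
      omega
    · exact h
    · exfalso
      have hsub : insert (g m₀) {y ∈ B | g m₀ < y} ⊆ {y ∈ B | -(m₀:ℤ) ≤ y} := by
        rintro y (rfl | ⟨hyB, hy⟩)
        · exact ⟨hmem m₀, by omega⟩
        · exact ⟨hyB, by omega⟩
      have hle := Set.ncard_le_ncard hsub hfinch
      rw [Set.ncard_insert_of_notMem (by rintro ⟨_, hy⟩; omega) (hfinimg m₀), hch, hcard m₀]
        at hle
      omega
  have htail : ∀ i, m₀ ≤ i → g i = -(i:ℤ) - 1 := by
    intro i hi
    induction i, hi using Nat.le_induction with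
    | base => exact hgm
    | succ n hn ih =>
      have h1 : -(n:ℤ) - 2 ∈ B := hL _ (by push_cast; omega)
      have h2 : g (n+1) ≤ -(n:ℤ) - 2 := by
        have := hlt n
        rw [ih] at this
        omega
      have h3 : -(n:ℤ) - 2 ≤ g (n+1) := by
        apply hbet n _ h1
        rw [ih]
        omega
      push_cast
      omega
  have hrange : Set.range g = B := by
    apply Set.Subset.antisymm
    · rintro y ⟨i, rfl⟩
      exact hmem i
    · intro y hy
      by_contra hno
      simp only [Set.mem_range, not_exists] at hno
      have hlt' : ∀ i, y < g i := by
        intro i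
        rcases lt_trichotomy y (g i) with h | h | h
        · exact h
        · exact absurd h.symm (hno i)
        · obtain ⟨j, _, hj⟩ := (hchar i y hy).mp h
          exact absurd hj.symm (hno j)
      set i := m₀ + (-y).toNat + 1 with hi
      have h1 := hlt' i
      have h2 : g i = -(i:ℤ) - 1 := htail i (by omega)
      have h3 : -y ≤ ((-y).toNat : ℤ) := Int.self_le_toNat _
      have h4 : ((m₀ + (-y).toNat + 1 : ℕ) : ℤ) = (m₀:ℤ) + (-y).toNat + 1 := by push_cast; ring
      rw [h2, hi, h4] at h1
      omega
  -- build the partition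
  have hshift : ∀ i : ℕ, -1 ≤ g i + i := by
    intro i
    have h1 : g i + i ≥ g (max i m₀) + (max i m₀ : ℕ) := by
      have := strictAnti_int_shift hanti (le_max_left i m₀)
      simpa using this
    have h2 : g (max i m₀) = -((max i m₀ : ℕ):ℤ) - 1 := htail _ (le_max_right i m₀)
    omega
  refine ⟨⟨fun i => (g i + i + 1).toNat, ?_, ⟨m₀, ?_⟩⟩, ?_⟩
  · intro i j hij
    simp only
    have h1 : g j + j ≤ g i + i := strictAnti_int_shift hanti hij
    have := hshift i
    have := hshift j
    omega
  · intro i hi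
    have := htail i hi
    omega
  · rw [betaSet_eq_range]
    refine Eq.trans ?_ hrange
    apply congrArg Set.range
    funext i
    show ((g i + i + 1).toNat : ℤ) - (i + 1) = g i
    rw [Int.toNat_of_nonneg (by have := hshift i; omega)]
    ring

/-- Union of downward arithmetic progressions with maxima `x r - s`. -/
def BX (s : ℕ) (x : Fin s → ℤ) : Set ℤ :=
  {b | ∃ r : Fin s, (s:ℤ) ∣ (x r - s - b) ∧ b ≤ x r - s}

lemma fin_cast_lt {s : ℕ} (r : Fin s) : ((r:ℕ):ℤ) < s := by exact_mod_cast r.isLt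

lemma BX_incong {s : ℕ} {x : Fin s → ℤ} (hres : ∀ r, (s:ℤ) ∣ (x r - r)) {r r' : Fin s}
    (hne : r ≠ r') : ¬ (s:ℤ) ∣ (x r - x r') := by
  intro hdvd
  have h1 := hres r
  have h2 := hres r'
  have h3 : (s:ℤ) ∣ ((r:ℤ) - (r':ℤ)) := by
    have : (r:ℤ) - (r':ℤ) = (x r - x r') - (x r - r) + (x r' - r') := by ring
    rw [this]
    exact dvd_add (dvd_sub hdvd h1) h2
  have h4 : ((r:ℕ):ℤ) - ((r':ℕ):ℤ) = 0 := by
    refine Int.eq_zero_of_abs_lt_dvd h3 ?_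
    have := fin_cast_lt r
    have := fin_cast_lt r'
    have hr0 : (0:ℤ) ≤ (r:ℕ) := Int.ofNat_nonneg _
    have hr0' : (0:ℤ) ≤ (r':ℕ) := Int.ofNat_nonneg _
    rw [abs_lt]
    omega
  apply hne
  have : ((r:ℕ):ℤ) = ((r':ℕ):ℤ) := by omega
  have : (r:ℕ) = (r':ℕ) := by exact_mod_cast this
  exact Fin.ext this

lemma BX_le_of_dvd {s : ℕ} {x : Fin s → ℤ} (hres : ∀ r, (s:ℤ) ∣ (x r - r)) {b : ℤ}
    (hb : b ∈ BX s x) {r : Fin s} (hdvd : (s:ℤ) ∣ (x r - s - b)) : b ≤ x r - s := by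
  obtain ⟨r', hd', hle'⟩ := hb
  by_cases h : r = r'
  · exact h ▸ hle'
  · exfalso
    apply BX_incong hres h
    have : x r - x r' = (x r - s - b) - (x r' - s - b) := by ring
    rw [this]
    exact dvd_sub hdvd hd'

lemma BX_max_mem {s : ℕ} (x : Fin s → ℤ) (r : Fin s) : x r - s ∈ BX s x :=
  ⟨r, by simp, le_refl _⟩

lemma BX_flush {s : ℕ} (x : Fin s → ℤ) : ∀ b ∈ BX s x, b - s ∈ BX s x := by
  rintro b ⟨r, hd, hle⟩
  refine ⟨r, ?_, by omega⟩
  have : x r - s - (b - s) = (x r - s - b) + s := by ring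
  rw [this]
  exact dvd_add hd (dvd_refl _)

lemma BX_covers {s : ℕ} (hs : 0 < s) {x : Fin s → ℤ} (hres : ∀ r, (s:ℤ) ∣ (x r - r))
    (y : ℤ) : ∃ r : Fin s, (s:ℤ) ∣ (x r - s - y) := by
  have hsne : (s:ℤ) ≠ 0 := by exact_mod_cast hs.ne'
  have hmod : 0 ≤ y % s := Int.emod_nonneg y hsne
  have hmod2 : y % s < s := Int.emod_lt_of_pos y (by exact_mod_cast hs)
  refine ⟨⟨(y % s).toNat, ?_⟩, ?_⟩
  · have : ((y % s).toNat : ℤ) = y % s := Int.toNat_of_nonneg hmod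
    omega
  · set r : Fin s := ⟨(y % s).toNat, by omega⟩ with hrdef
    have hr : ((r:ℕ):ℤ) = y % s := Int.toNat_of_nonneg hmod
    have h1 := hres r
    have h2 : (s:ℤ) ∣ (y - y % s) := ⟨y / s, by rw [Int.emod_def]; ring⟩
    have heq : x r - s - y = (x r - (r:ℕ)) - (y - y % s) - s := by rw [hr]; ring
    rw [heq]
    exact dvd_sub (dvd_sub h1 h2) (dvd_refl _)

lemma sSet_of_BX {s : ℕ} (hs : 0 < s) {x : Fin s → ℤ} (hres : ∀ r, (s:ℤ) ∣ (x r - r))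
    {p : Partn} (hp : betaSet p = BX s x) : sSet s p = Set.range x := by
  have hspos : (0:ℤ) < s := by exact_mod_cast hs
  ext y
  simp only [sSet, Set.mem_setOf_eq, hp, Set.mem_range]
  constructor
  · rintro ⟨⟨r, hd, hle⟩, hnot⟩
    refine ⟨r, ?_⟩
    have hd' : (s:ℤ) ∣ (x r - s - y) := by
      have : x r - s - y = (x r - s - (y - s)) - s := by ring
      rw [this]
      exact dvd_sub hd (dvd_refl _)
    by_contra hne
    rcases lt_trichotomy y (x r) with h | h | h
    · apply hnot
      refine ⟨r, hd', ?_⟩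
      obtain ⟨t, ht⟩ := hd'
      have ht' : 0 ≤ t := by
        by_contra hneg
        push_neg at hneg
        have : (s:ℤ) * t ≤ s * (-1) := mul_le_mul_of_nonneg_left (by omega) (le_of_lt hspos)
        omega
      have : 0 ≤ (s:ℤ) * t := mul_nonneg (le_of_lt hspos) ht'
      omega
    · exact hne h.symm
    · have := BX_le_of_dvd hres (⟨r, hd, hle⟩ : y - s ∈ BX s x) (r := r) hd
      omega
  · rintro ⟨r, rfl⟩
    constructor
    · exact BX_max_mem x r
    · intro hmem
      have hd : (s:ℤ) ∣ (x r - s - x r) := by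
        have : x r - s - x r = -s := by ring
        rw [this]
        exact dvd_neg.mpr (dvd_refl _)
      have := BX_le_of_dvd hres hmem hd
      omega

lemma BX_charge (s : ℕ) (hs : 0 < s) (x u : Fin s → ℤ) (hx : ∀ r, x r = ((r:ℕ):ℤ) + s * u r)
    (M : ℕ) (hM : ∀ r, 0 ≤ u r + M) :
    ({y ∈ BX s x | -((s:ℤ)*M) ≤ y}.ncard : ℤ) = (∑ r, u r) + s * M := by
  classical
  have hspos : (0:ℤ) < s := by exact_mod_cast hs
  have hres : ∀ r, (s:ℤ) ∣ (x r - r) := fun r => ⟨u r, by rw [hx r]; ring⟩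
  set T : Finset ℤ := Finset.univ.biUnion
    (fun r : Fin s => (Finset.range ((u r + M).toNat)).image (fun j : ℕ => x r - s - j * s))
    with hT
  have hset : {y ∈ BX s x | -((s:ℤ)*M) ≤ y} = ↑T := by
    ext y
    simp only [Set.mem_setOf_eq, Finset.mem_coe]
    constructor
    · rintro ⟨⟨r, hd, hle⟩, hy⟩
      obtain ⟨t, ht⟩ := hd
      have ht0 : 0 ≤ t := by
        by_contra hneg
        push_neg at hneg
        have : (s:ℤ) * t ≤ s * (-1) := mul_le_mul_of_nonneg_left (by omega) (le_of_lt hspos)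
        omega
      have hexp : (s:ℤ)*(u r + M) = s*(u r) + s*M := by ring
      have hst : (s:ℤ)*t < s*(u r + M) := by
        have h1 := fin_cast_lt r
        have h2 : (0:ℤ) ≤ ((r:ℕ):ℤ) := Int.ofNat_nonneg _
        have ht' : ((r:ℕ):ℤ) + s * u r - s - y = s * t := by rw [← hx r]; exact ht
        omega
      have hlt : t < u r + M := lt_of_mul_lt_mul_left hst (le_of_lt hspos)
      refine Finset.mem_biUnion.mpr ⟨r, Finset.mem_univ r, Finset.mem_image.mpr
        ⟨t.toNat, Finset.mem_range.mpr (by omega), ?_⟩⟩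
      rw [Int.toNat_of_nonneg ht0]
      linear_combination ht
    · intro hyT
      obtain ⟨r, -, hy⟩ := Finset.mem_biUnion.mp hyT
      obtain ⟨j, hjr, rfl⟩ := Finset.mem_image.mp hy
      have hj : j < (u r + M).toNat := Finset.mem_range.mp hjr
      have hj' : (j:ℤ) ≤ u r + M - 1 := by omega
      have hjs : (0:ℤ) ≤ (j:ℤ) * s := mul_nonneg (Int.ofNat_nonneg _) (le_of_lt hspos)
      refine ⟨⟨r, ⟨(j:ℤ), by ring⟩, by omega⟩, ?_⟩
      have key : (j:ℤ)*s ≤ (u r + M - 1)*s := mul_le_mul_of_nonneg_right hj' (le_of_lt hspos)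
      have h2 : (0:ℤ) ≤ ((r:ℕ):ℤ) := Int.ofNat_nonneg _
      have h3 := hx r
      nlinarith [key, h3]
  rw [hset, Set.ncard_coe_finset]
  have hdisj : ∀ r ∈ (Finset.univ : Finset (Fin s)), ∀ r' ∈ Finset.univ, r ≠ r' →
      Disjoint ((Finset.range ((u r + M).toNat)).image (fun j : ℕ => x r - s - j * s))
        ((Finset.range ((u r' + M).toNat)).image (fun j : ℕ => x r' - s - j * s)) := by
    intro r _ r' _ hne
    rw [Finset.disjoint_left]
    rintro y hy hy'
    simp only [Finset.mem_image, Finset.mem_range] at hy hy'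
    obtain ⟨j, _, hj⟩ := hy
    obtain ⟨j', _, hj'⟩ := hy'
    apply BX_incong hres hne
    refine ⟨(j:ℤ) - j', ?_⟩
    have : x r - s - j*s = x r' - s - j'*s := by rw [hj, hj']
    linear_combination this
  rw [Finset.card_biUnion hdisj]
  have hinj : ∀ r : Fin s, Function.Injective (fun j : ℕ => x r - s - j * s) := by
    intro r a b hab
    simp only at hab
    have : (a:ℤ) * s = b * s := by omega
    have := mul_right_cancel₀ (hspos.ne') this
    exact_mod_cast this
  have hcards : ∀ r : Fin s,
      ((Finset.range ((u r + M).toNat)).image (fun j : ℕ => x r - s - j * s)).card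
      = (u r + M).toNat := by
    intro r
    rw [Finset.card_image_of_injective _ (hinj r), Finset.card_range]
  push_cast [hcards]
  have : ∀ r : Fin s, (((u r + M).toNat : ℤ)) = u r + M := fun r => Int.toNat_of_nonneg (hM r)
  calc (∑ r : Fin s, (((u r + M).toNat : ℕ) : ℤ)) = ∑ r : Fin s, (u r + M) := by
        exact Finset.sum_congr rfl (fun r _ => this r)
    _ = (∑ r, u r) + s * M := by
        rw [Finset.sum_add_distrib, Finset.sum_const, Finset.card_univ, Fintype.card_fin]
        push_cast
        ring

lemma construct (s N : ℕ) (hs : 2 ≤ s) (hN : 0 < N) (a : Fin s → ZMod N)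
    (hsum : ∑ r, a r = 0) :
    ∃ p : Partn, ∃ x u : Fin s → ℤ, betaSet p = BX s x ∧
      (∀ r, x r = ((r:ℕ):ℤ) + s * u r) ∧ (∑ r, u r = 0) ∧
      (∀ r, ((u r : ℤ) : ZMod N) = a r) ∧
      (∀ r r', x r - x r' < (N:ℤ) * s) := by
  haveI : NeZero N := ⟨hN.ne'⟩
  classical
  have hs0 : 0 < s := by omega
  have hspos : (0:ℤ) < s := by exact_mod_cast hs0
  have hNpos : (0:ℤ) < N := by exact_mod_cast hN
  set val : Fin s → ℕ := fun r => (a r).val with hval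
  have hvlt : ∀ r, val r < N := fun r => ZMod.val_lt (a r)
  have hdvdsum : N ∣ ∑ r, val r := by
    rw [← ZMod.natCast_eq_zero_iff]
    push_cast
    rw [← hsum]
    exact Finset.sum_congr rfl (fun r _ => ZMod.natCast_rightInverse (a r))
  set d : ℕ := (∑ r, val r) / N with hd
  have hsumval : ∑ r, val r = N * d := (Nat.mul_div_cancel' hdvdsum).symm
  have hdle : d ≤ s := by
    have h1 : ∑ r, val r ≤ ∑ _r : Fin s, N :=
      Finset.sum_le_sum (fun r _ => (hvlt r).le)
    rw [Finset.sum_const, Finset.card_univ, Fintype.card_fin, smul_eq_mul] at h1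
    have h3 : N * d ≤ N * s := by rw [Nat.mul_comm N s]; omega
    exact Nat.le_of_mul_le_mul_left h3 hN
  set v : Fin s → ℤ := fun r => ((r:ℕ):ℤ) + s * val r with hv
  have hvres : ∀ r, (s:ℤ) ∣ (v r - r) := fun r => ⟨val r, by simp [hv]⟩
  have hvinj : Function.Injective v := by
    intro r r' h
    by_contra hne
    exact BX_incong hvres hne (by rw [h]; simp)
  have hvlb : ∀ r, 0 ≤ v r := by
    intro r
    have := Int.ofNat_nonneg (r : ℕ)
    have : (0:ℤ) ≤ s * val r := mul_nonneg hspos.le (Int.ofNat_nonneg _)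
    simp only [hv]
    omega
  have hvub : ∀ r, v r ≤ s * N - 1 := by
    intro r
    have h1 : ((r:ℕ):ℤ) ≤ s - 1 := by have := fin_cast_lt r; omega
    have h2 : (val r : ℤ) ≤ (N:ℤ) - 1 := by
      have := hvlt r
      have : (val r : ℤ) < N := by exact_mod_cast this
      omega
    have h3 : (s:ℤ) * val r ≤ s * ((N:ℤ) - 1) := mul_le_mul_of_nonneg_left h2 hspos.le
    simp only [hv]
    nlinarith
  set rank : Fin s → ℕ := fun r => (Finset.univ.filter (fun r' => v r < v r')).card
    with hrank
  have hrank_lt : ∀ r r', v r' < v r → rank r < rank r' := by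
    intro r r' hlt
    have hsub : insert r (Finset.univ.filter (fun r'' => v r < v r'')) ⊆
        Finset.univ.filter (fun r'' => v r' < v r'') := by
      intro y hy
      rcases Finset.mem_insert.mp hy with rfl | hy
      · simp [hlt]
      · simp only [Finset.mem_filter, Finset.mem_univ, true_and] at hy ⊢
        omega
    have hnot : r ∉ Finset.univ.filter (fun r'' => v r < v r'') := by simp
    have := Finset.card_le_card hsub
    rw [Finset.card_insert_of_notMem hnot] at this
    simp only [hrank]
    omega
  have hrank_inj : Function.Injective rank := by
    intro r r' h
    rcases lt_trichotomy (v r) (v r') with hlt | heq | hgt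
    · exact absurd h (by have := hrank_lt r' r hlt; omega)
    · exact hvinj heq
    · exact absurd h (by have := hrank_lt r r' hgt; omega)
  have hrank_bd : ∀ r, rank r < s := by
    intro r
    have hsub : Finset.univ.filter (fun r'' => v r < v r'') ⊆ Finset.univ.erase r := by
      intro y hy
      simp only [Finset.mem_filter, Finset.mem_univ, true_and] at hy
      apply Finset.mem_erase.mpr
      exact ⟨fun hh => by rw [hh] at hy; omega, Finset.mem_univ y⟩
    have := Finset.card_le_card hsub
    rw [Finset.card_erase_of_mem (Finset.mem_univ r), Finset.card_univ, Fintype.card_fin]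
      at this
    simp only [hrank]
    omega
  have hrank_count : (Finset.univ.filter (fun r => rank r < d)).card = d := by
    have himg : Finset.univ.image rank = Finset.range s := by
      apply Finset.eq_of_subset_of_card_le
      · intro y hy
        obtain ⟨r, _, rfl⟩ := Finset.mem_image.mp hy
        exact Finset.mem_range.mpr (hrank_bd r)
      · rw [Finset.card_range, Finset.card_image_of_injective _ hrank_inj,
          Finset.card_univ, Fintype.card_fin]
    have h1 : (Finset.univ.image rank).filter (fun y => y < d)
        = (Finset.univ.filter (fun r => rank r < d)).image rank :=
      Finset.filter_image
    have h2 : ((Finset.univ.filter (fun r => rank r < d)).image rank).card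
        = (Finset.univ.filter (fun r => rank r < d)).card :=
      Finset.card_image_of_injective _ hrank_inj
    have h3 : (Finset.range s).filter (fun y => y < d) = Finset.range d := by
      ext y
      simp only [Finset.mem_filter, Finset.mem_range]
      omega
    rw [← h2, ← h1, himg, h3, Finset.card_range]
  set u : Fin s → ℤ := fun r => (val r : ℤ) - (if rank r < d then (N:ℤ) else 0) with hu
  set x : Fin s → ℤ := fun r => ((r:ℕ):ℤ) + s * u r with hxdef
  have hxres : ∀ r, x r = ((r:ℕ):ℤ) + s * u r := fun r => rfl
  have husum : ∑ r, u r = 0 := by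
    simp only [hu]
    rw [Finset.sum_sub_distrib, Finset.sum_ite, Finset.sum_const, Finset.sum_const_zero,
      hrank_count]
    have : ∑ r, (val r : ℤ) = ((N * d : ℕ) : ℤ) := by
      rw [← hsumval]
      push_cast
      rfl
    rw [this]
    push_cast
    ring
  have humod : ∀ r, ((u r : ℤ) : ZMod N) = a r := by
    intro r
    simp only [hu]
    push_cast
    rw [ZMod.natCast_rightInverse (a r)]
    split_ifs with h
    · simp [ZMod.natCast_self]
    · simp
  have hxv : ∀ r, x r = v r - (if rank r < d then (N:ℤ) * s else 0) := by
    intro r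
    simp only [hxdef, hu, hv]
    split_ifs with h <;> ring
  have hvne : ∀ r r' : Fin s, r ≠ r' → v r ≠ v r' := fun r r' hne h => hne (hvinj h)
  have hNs1 : (1:ℤ) ≤ (N:ℤ) * s := by nlinarith
  have hbound : ∀ r r', x r - x r' < (N:ℤ) * s := by
    intro r r'
    rw [hxv r, hxv r']
    have hb1 := hvlb r
    have hb2 := hvub r
    have hb3 := hvlb r'
    have hb4 := hvub r'
    have hsN : (s:ℤ) * N = (N:ℤ) * s := by ring
    by_cases h1 : rank r < d <;> by_cases h2 : rank r' < d
    · rw [if_pos h1, if_pos h2]; omega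
    · rw [if_pos h1, if_neg h2]; omega
    · rw [if_neg h1, if_pos h2]
      have hrr' : r ≠ r' := fun h => by rw [h] at h1; exact h1 h2
      have hvlt' : v r < v r' := by
        rcases lt_trichotomy (v r) (v r') with h | h | h
        · exact h
        · exact absurd h (hvne r r' hrr')
        · exact absurd (hrank_lt r r' h) (by omega)
      omega
    · rw [if_neg h1, if_neg h2]; omega
  -- charge
  have hM : ∀ r, 0 ≤ u r + ((N+1 : ℕ):ℤ) := by
    intro r
    simp only [hu]
    have : (0:ℤ) ≤ val r := Int.ofNat_nonneg _
    split_ifs <;> push_cast <;> omega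
  have hch0 := BX_charge s hs0 x u hxres (N+1) hM
  rw [husum] at hch0
  have hchval : ({y ∈ BX s x | -((s * (N+1) : ℕ) : ℤ) ≤ y}.ncard) = s * (N+1) := by
    have hset : {y ∈ BX s x | -((s * (N+1) : ℕ) : ℤ) ≤ y}
        = {y ∈ BX s x | -((s:ℤ) * ((N+1:ℕ):ℤ)) ≤ y} := by
      have : -((s * (N+1) : ℕ) : ℤ) = -((s:ℤ) * ((N+1:ℕ):ℤ)) := by push_cast; ring
      rw [this]
    rw [hset]
    have : ((({y ∈ BX s x | -((s:ℤ) * ((N+1:ℕ):ℤ)) ≤ y}).ncard : ℤ)) = (s:ℤ) * ((N+1:ℕ):ℤ) := by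
      rw [hch0]; ring
    have h2 : ((s * (N+1) : ℕ) : ℤ) = (s:ℤ) * ((N+1:ℕ):ℤ) := by push_cast; ring
    omega
  obtain ⟨p, hp⟩ := exists_partn (BX s x) ((N:ℤ)*s) (-((N:ℤ)*s) - s)
    (by
      rintro y ⟨r, hd', hle⟩
      have := hvub r
      have hsN : (s:ℤ) * N = (N:ℤ) * s := by ring
      have hite : (0:ℤ) ≤ (if rank r < d then (N:ℤ)*s else 0) := by
        split_ifs
        · omega
        · omega
      have h1 : x r ≤ v r := by rw [hxv r]; omega
      omega)
    (by
      intro y hy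
      obtain ⟨r, hdvd⟩ := BX_covers hs0 (x := x) (fun r => ⟨u r, by rw [hxres r]; ring⟩) y
      refine ⟨r, hdvd, ?_⟩
      have hite : (if rank r < d then (N:ℤ)*s else 0) ≤ (N:ℤ)*s := by
        split_ifs
        · omega
        · omega
      have h1 : v r - (N:ℤ)*s ≤ x r := by rw [hxv r]; omega
      have := hvlb r
      omega)
    (s * (N+1))
    (by push_cast; nlinarith)
    hchval
  exact ⟨p, x, u, hp, hxres, husum, humod, hbound⟩

lemma x_unique (s N : ℕ) (hs : 2 ≤ s) (hN : 0 < N) (x x' u u' : Fin s → ℤ)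
    (hx : ∀ r, x r = ((r:ℕ):ℤ) + s * u r) (hx' : ∀ r, x' r = ((r:ℕ):ℤ) + s * u' r)
    (hsu : ∑ r, u r = 0) (hsu' : ∑ r, u' r = 0)
    (hb : ∀ r r', x r - x r' < (N:ℤ) * s) (hb' : ∀ r r', x' r - x' r' < (N:ℤ) * s)
    (hmod : ∀ r, (N:ℤ) ∣ (u r - u' r)) : x = x' := by
  have hs0 : 0 < s := by omega
  have hspos : (0:ℤ) < s := by exact_mod_cast hs0
  have hgen : ∀ (w : Fin s → ℤ), (∀ r r' : Fin s, (((r:ℕ):ℤ) + s * w r) - (((r':ℕ):ℤ) + s * w r') < (N:ℤ) * s) →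
      ∀ r r', w r - w r' ≤ N := by
    intro w hw r r'
    have h := hw r r'
    have h1 := fin_cast_lt r
    have h2 := fin_cast_lt r'
    have h1' : (0:ℤ) ≤ ((r:ℕ):ℤ) := Int.ofNat_nonneg _
    have h2' : (0:ℤ) ≤ ((r':ℕ):ℤ) := Int.ofNat_nonneg _
    have h3 : (s:ℤ) * (w r - w r') < s * (N + 1) := by
      have e1 : (s:ℤ)*(w r - w r') = s*w r - s*w r' := by ring
      have e2 : (s:ℤ)*(N+1) = s*N + s := by ring
      have e3 : (N:ℤ)*s = s*N := by ring
      omega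
    have := lt_of_mul_lt_mul_left h3 hspos.le
    omega
  have hubd : ∀ r r' : Fin s, u r - u r' ≤ N := by
    apply hgen
    intro r r'
    rw [← hx r, ← hx r']
    exact hb r r'
  have hubd' : ∀ r r' : Fin s, u' r - u' r' ≤ N := by
    apply hgen
    intro r r'
    rw [← hx' r, ← hx' r']
    exact hb' r r'
  set k : Fin s → ℤ := fun r => u r - u' r with hk
  have hksum : ∑ r, k r = 0 := by
    simp only [hk]
    rw [Finset.sum_sub_distrib, hsu, hsu']
    omega
  have hkzero : ∀ r, k r = 0 := by
    by_contra hne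
    push_neg at hne
    obtain ⟨r0, hr0⟩ := hne
    obtain ⟨rmax, -, hmax⟩ := Finset.exists_max_image Finset.univ k ⟨r0, Finset.mem_univ r0⟩
    obtain ⟨rmin, -, hmin⟩ := Finset.exists_min_image Finset.univ k ⟨r0, Finset.mem_univ r0⟩
    have hkmaxpos : 0 < k rmax := by
      by_contra h
      push_neg at h
      have hlt : ∑ r, k r < ∑ _r : Fin s, (0:ℤ) := by
        apply Finset.sum_lt_sum (fun r _ => le_trans (hmax r (Finset.mem_univ r)) h)
        refine ⟨r0, Finset.mem_univ r0, ?_⟩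
        have := hmax r0 (Finset.mem_univ r0)
        omega
      rw [hksum, Finset.sum_const, smul_zero] at hlt
      omega
    have hkminneg : k rmin < 0 := by
      by_contra h
      push_neg at h
      have hlt : ∑ _r : Fin s, (0:ℤ) < ∑ r, k r := by
        apply Finset.sum_lt_sum (fun r _ => le_trans h (hmin r (Finset.mem_univ r)))
        refine ⟨r0, Finset.mem_univ r0, ?_⟩
        have := hmin r0 (Finset.mem_univ r0)
        omega
      rw [hksum, Finset.sum_const, smul_zero] at hlt
      omega
    have hNle : (N:ℤ) ≤ k rmax := Int.le_of_dvd hkmaxpos (hmod rmax)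
    have hNle' : k rmin ≤ -(N:ℤ) := by
      have := Int.le_of_dvd (by omega : (0:ℤ) < -(k rmin)) (dvd_neg.mpr (hmod rmin))
      omega
    have hne' : rmax ≠ rmin := by
      intro h
      rw [h] at hkmaxpos
      omega
    have h1 := hubd rmax rmin
    have h2 := hubd' rmin rmax
    have hkk : k rmax - k rmin = (u rmax - u rmin) + (u' rmin - u' rmax) := by
      simp only [hk]; ring
    have heq1 : u rmax - u rmin = N := by omega
    have heq2 : u' rmin - u' rmax = N := by omega
    have hc1 : ((rmax:ℕ):ℤ) < ((rmin:ℕ):ℤ) := by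
      have h := hb rmax rmin
      rw [hx rmax, hx rmin] at h
      have e1 : (s:ℤ)*u rmax - s*u rmin = s*N := by rw [← mul_sub, heq1]
      have e3 : (N:ℤ)*s = s*N := by ring
      omega
    have hc2 : ((rmin:ℕ):ℤ) < ((rmax:ℕ):ℤ) := by
      have h := hb' rmin rmax
      rw [hx' rmin, hx' rmax] at h
      have e1 : (s:ℤ)*u' rmin - s*u' rmax = s*N := by rw [← mul_sub, heq2]
      have e3 : (N:ℤ)*s = s*N := by ring
      omega
    omega
  funext r
  rw [hx r, hx' r]
  have : u r = u' r := by
    have := hkzero r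
    simp only [hk] at this
    omega
  rw [this]

lemma BX_inj {s : ℕ} {x x' : Fin s → ℤ} (hres : ∀ r, (s:ℤ) ∣ (x r - r))
    (hres' : ∀ r, (s:ℤ) ∣ (x' r - r)) (h : BX s x = BX s x') : x = x' := by
  have key : ∀ (y y' : Fin s → ℤ), (∀ r, (s:ℤ) ∣ (y r - r)) → (∀ r, (s:ℤ) ∣ (y' r - r)) →
      BX s y = BX s y' → ∀ r, y r ≤ y' r := by
    intro y y' hr hr' hBB r
    have h1 : y r - s ∈ BX s y' := hBB ▸ BX_max_mem y r
    have hd : (s:ℤ) ∣ (y' r - s - (y r - s)) := by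
      have e : y' r - s - (y r - s) = (y' r - r) - (y r - r) := by ring
      rw [e]
      exact dvd_sub (hr' r) (hr r)
    have := BX_le_of_dvd hr' h1 hd
    omega
  funext r
  have h1 := key x x' hres hres' h r
  have h2 := key x' x hres' hres h.symm r
  omega

lemma deconstruct (s N : ℕ) (hs : 2 ≤ s) (hN : 0 < N) (p : Partn) (hcore : IsCore s p)
    (hbdd : ∀ k ∈ sSet s p, ∀ l ∈ sSet s p, k - l < (N:ℤ) * s) :
    ∃ x u : Fin s → ℤ, betaSet p = BX s x ∧
      (∀ r, x r = ((r:ℕ):ℤ) + s * u r) ∧ (∑ r, u r = 0) ∧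
      (∀ r r', x r - x r' < (N:ℤ) * s) := by
  have hs0 : 0 < s := by omega
  have hspos : (0:ℤ) < s := by exact_mod_cast hs0
  have hfl := (isCore_iff p s hs0).mp hcore
  obtain ⟨n, hn⟩ := p.eventually_zero
  have hlow : ∀ y : ℤ, y ≤ -(n:ℤ) - 1 → y ∈ betaSet p := by
    intro y hy
    refine ⟨(-y - 1).toNat, ?_⟩
    have h1 : (0:ℤ) ≤ -y - 1 := by omega
    have h2 : ((-y-1).toNat : ℤ) = -y-1 := Int.toNat_of_nonneg h1
    have h3 : n ≤ (-y-1).toNat := by omega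
    rw [hn _ h3]
    push_cast
    omega
  have hup : ∀ b ∈ betaSet p, b ≤ bseq p 0 := by
    rintro b ⟨i, rfl⟩
    exact (bseq_strictAnti p).antitone (Nat.zero_le i)
  have hmaxex : ∀ r : Fin s, ∃ mr : ℤ, (mr ∈ betaSet p ∧ (s:ℤ) ∣ (mr - r)) ∧
      ∀ y : ℤ, (y ∈ betaSet p ∧ (s:ℤ) ∣ (y - r)) → y ≤ mr := by
    intro r
    apply Int.exists_greatest_of_bdd (P := fun y => y ∈ betaSet p ∧ (s:ℤ) ∣ (y - r))
    · exact ⟨bseq p 0, fun z hz => hup z hz.1⟩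
    · refine ⟨(r:ℤ) - s*((n:ℤ)+1+r), hlow _ ?_, ⟨-((n:ℤ)+1+r), by ring⟩⟩
      have h1 : (1:ℤ) ≤ s := by exact_mod_cast hs0
      have h2 : (0:ℤ) ≤ ((r:ℕ):ℤ) := Int.ofNat_nonneg _
      nlinarith
  choose m hm using hmaxex
  set x : Fin s → ℤ := fun r => m r + s with hxdef
  have hres : ∀ r, (s:ℤ) ∣ (x r - r) := by
    intro r
    have e : x r - r = (m r - r) + s := by simp only [hxdef]; ring
    rw [e]
    exact dvd_add (hm r).1.2 (dvd_refl _)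
  have hBeq : betaSet p = BX s x := by
    ext b
    constructor
    · intro hb
      obtain ⟨r, hdvd⟩ := BX_covers hs0 (x := x) hres b
      refine ⟨r, hdvd, ?_⟩
      have hd2 : (s:ℤ) ∣ (b - r) := by
        have e : b - r = (x r - r) - (x r - s - b) - s := by ring
        rw [e]
        exact dvd_sub (dvd_sub (hres r) hdvd) (dvd_refl _)
      have := (hm r).2 b ⟨hb, hd2⟩
      simp only [hxdef]
      omega
    · rintro ⟨r, hdvd, hle⟩
      obtain ⟨t, ht⟩ := hdvd
      have ht0 : 0 ≤ t := by
        by_contra hneg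
        push_neg at hneg
        have : (s:ℤ) * t ≤ s * (-1) := mul_le_mul_of_nonneg_left (by omega) hspos.le
        omega
      have hmm := flush_pow p s hfl t.toNat (m r) (hm r).1.1
      have e : m r - (s:ℤ) * t.toNat = b := by
        rw [Int.toNat_of_nonneg ht0]
        have e2 : x r - s = m r := by simp only [hxdef]; ring
        rw [e2] at ht
        omega
      rw [e] at hmm
      exact hmm
  set u : Fin s → ℤ := fun r => (x r - r) / s with hudef
  have hxu : ∀ r, x r = ((r:ℕ):ℤ) + s * u r := by
    intro r
    have := Int.mul_ediv_cancel' (hres r)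
    simp only [hudef]
    omega
  set M : ℕ := n + (∑ r, (-(u r)).toNat) + 1 with hMdef
  have hMr : ∀ r, 0 ≤ u r + ((M:ℕ):ℤ) := by
    intro r
    have h1 : (-(u r)).toNat ≤ ∑ r', (-(u r')).toNat :=
      Finset.single_le_sum (f := fun r' => (-(u r')).toNat) (fun _ _ => Nat.zero_le _)
        (Finset.mem_univ r)
    have h2 : -(u r) ≤ ((-(u r)).toNat : ℤ) := Int.self_le_toNat _
    have h3 : (((-(u r)).toNat : ℕ) : ℤ) ≤ ((∑ r', (-(u r')).toNat : ℕ) : ℤ) := by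
      exact_mod_cast h1
    simp only [hMdef]
    push_cast at h3 ⊢
    omega
  have hchB := BX_charge s hs0 x u hxu M hMr
  have hchP := charge_partn p (s*M) (by
    intro i hi
    apply hn
    have : M ≤ s * M := Nat.le_mul_of_pos_left M hs0
    omega)
  rw [hBeq] at hchP
  have hcast : -((s*M : ℕ) : ℤ) = -((s:ℤ)*(M:ℤ)) := by push_cast; ring
  rw [hcast] at hchP
  have husum : ∑ r, u r = 0 := by
    rw [hchP] at hchB
    push_cast at hchB
    linarith
  have hxmem : ∀ r, x r ∈ sSet s p := by
    intro r
    constructor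
    · have e : x r - s = m r := by simp only [hxdef]; ring
      rw [e]
      exact (hm r).1.1
    · intro hmem
      have := (hm r).2 (x r) ⟨hmem, by
        have e : x r - r = (m r - r) + s := by simp only [hxdef]; ring
        rw [e]
        exact dvd_add (hm r).1.2 (dvd_refl _)⟩
      simp only [hxdef] at this
      omega
  exact ⟨x, u, hBeq, hxu, husum, fun r r' => hbdd _ (hxmem r) _ (hxmem r')⟩

lemma card_sum_zero (s N : ℕ) (hs : 0 < s) (hN : 0 < N) :
    Nat.card {a : Fin s → ZMod N // ∑ r, a r = 0} = N ^ (s - 1) := by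
  haveI : NeZero N := ⟨hN.ne'⟩
  obtain ⟨s', rfl⟩ : ∃ s', s = s' + 1 := ⟨s - 1, by omega⟩
  have e : {a : Fin (s'+1) → ZMod N // ∑ r, a r = 0} ≃ (Fin s' → ZMod N) :=
    { toFun := fun a i => a.1 i.succ
      invFun := fun g => ⟨Fin.cons (-(∑ i, g i)) g, by rw [Fin.sum_cons]; ring⟩
      left_inv := by
        intro a
        apply Subtype.ext
        funext i
        refine Fin.cases ?_ ?_ i
        · simp only [Fin.cons_zero]
          have h2 := a.2
          rw [Fin.sum_univ_succ] at h2
          exact (eq_neg_of_add_eq_zero_left h2).symm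
        · intro j
          simp [Fin.cons_succ]
      right_inv := by
        intro g
        funext i
        simp [Fin.cons_succ] }
  rw [Nat.card_congr e, Nat.card_eq_fintype_card]
  simp [ZMod.card]

theorem count_bounded_cores' (s N : ℕ) (hs : 2 ≤ s) (hN : 0 < N) :
    Set.ncard {p : Partn | IsCore s p ∧
        ∀ k ∈ sSet s p, ∀ l ∈ sSet s p, k - l < (N : ℤ) * s} = N ^ (s - 1) := by
  haveI : NeZero N := ⟨hN.ne'⟩
  classical
  have hs0 : 0 < s := by omega
  set S : Set Partn := {p : Partn | IsCore s p ∧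
      ∀ k ∈ sSet s p, ∀ l ∈ sSet s p, k - l < (N : ℤ) * s} with hSdef
  have hFex : ∀ a : {a : Fin s → ZMod N // ∑ r, a r = 0},
      ∃ p : Partn, ∃ x u : Fin s → ℤ, betaSet p = BX s x ∧
      (∀ r, x r = ((r:ℕ):ℤ) + s * u r) ∧ (∑ r, u r = 0) ∧
      (∀ r, ((u r : ℤ) : ZMod N) = a.1 r) ∧
      (∀ r r', x r - x r' < (N:ℤ) * s) := fun a => construct s N hs hN a.1 a.2
  choose F x u hbeta hxu hsum hmod hbnd using hFex
  have hresx : ∀ a, ∀ r, (s:ℤ) ∣ (x a r - r) := fun a r => ⟨u a r, by rw [hxu a r]; ring⟩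
  have hFS : ∀ a, F a ∈ S := by
    intro a
    constructor
    · rw [isCore_iff _ s hs0, hbeta a]
      exact BX_flush (x a)
    · have hss := sSet_of_BX hs0 (hresx a) (hbeta a)
      rw [hss]
      rintro k ⟨r, rfl⟩ l ⟨r', rfl⟩
      exact hbnd a r r'
  have hFinj : Function.Injective F := by
    intro a a' h
    have hBB : BX s (x a) = BX s (x a') := by rw [← hbeta a, ← hbeta a', h]
    have hxx : x a = x a' := BX_inj (hresx a) (hresx a') hBB
    have huu : ∀ r, u a r = u a' r := by
      intro r
      have h1 := hxu a r
      have h2 := hxu a' r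
      rw [hxx] at h1
      have h3 : (s:ℤ) * u a r = s * u a' r := by omega
      have hsne : (s:ℤ) ≠ 0 := by exact_mod_cast hs0.ne'
      exact mul_left_cancel₀ hsne h3
    apply Subtype.ext
    funext r
    rw [← hmod a r, ← hmod a' r, huu r]
  have hFsurj : ∀ p ∈ S, ∃ a, F a = p := by
    intro p hp
    obtain ⟨hcore, hbd⟩ := hp
    obtain ⟨x', u', hbeta', hxu', hsum', hbnd'⟩ := deconstruct s N hs hN p hcore hbd
    have hasum : ∑ r, ((u' r : ℤ) : ZMod N) = 0 := by
      have h0 := congrArg (fun z : ℤ => ((z : ZMod N))) hsum'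
      push_cast at h0
      exact h0
    set aa : {a : Fin s → ZMod N // ∑ r, a r = 0} :=
      ⟨fun r => ((u' r : ℤ) : ZMod N), hasum⟩ with haa
    refine ⟨aa, ?_⟩
    have hmod2 : ∀ r, (N:ℤ) ∣ (u aa r - u' r) := by
      intro r
      rw [← ZMod.intCast_zmod_eq_zero_iff_dvd]
      push_cast
      rw [hmod aa r]
      simp only [haa]
      ring
    have hxx : x aa = x' := x_unique s N hs hN (x aa) x' (u aa) u' (hxu aa) hxu'
      (hsum aa) hsum' (hbnd aa) hbnd' hmod2
    apply betaSet_inj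
    rw [hbeta aa, hxx, ← hbeta']
  have hbij : Function.Bijective
      (fun a : {a : Fin s → ZMod N // ∑ r, a r = 0} => (⟨F a, hFS a⟩ : ↥S)) := by
    constructor
    · intro a a' h
      apply hFinj
      exact congrArg Subtype.val h
    · rintro ⟨p, hp⟩
      obtain ⟨a, ha⟩ := hFsurj p hp
      exact ⟨a, Subtype.ext ha⟩
  have hcardS : Nat.card ↥S = Nat.card {a : Fin s → ZMod N // ∑ r, a r = 0} :=
    (Nat.card_congr (Equiv.ofBijective _ hbij)).symm
  rw [(Nat.card_coe_set_eq S).symm, hcardS, card_sum_zero s N hs0 hN]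


end CBC

/-- The number of `s`-cores `λ` with `k - l < Ns` for all `k, l ∈ S(λ)` is `N^(s-1)`. -/
theorem count_bounded_cores (s N : ℕ) (hs : 2 ≤ s) (hN : 0 < N) :
    Set.ncard {p : Partn | IsCore s p ∧
        ∀ k ∈ sSet s p, ∀ l ∈ sSet s p, k - l < (N : ℤ) * s} = N ^ (s - 1) :=
  CBC.count_bounded_cores' s N hs hN
end

section
/- Define λ ≡_N μ for s-cores λ, μ if there is a bijection φ: S(λ) → S(μ) with φ(k) ≡ k (mod Ns) for all k ∈ S(λ). Then every equivalence class of s-cores under ≡_N contains a unique s-core ν such that k - l < Ns for all k, l ∈ S(ν). -/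
/-- `λ ≡_N μ` iff there is a bijection `φ : S(λ) → S(μ)` with `φ(k) ≡ k (mod Ns)`. -/
def simRel (s N : ℕ) (p q : Partn) : Prop :=
  ∃ φ : ℤ → ℤ, Set.BijOn φ (sSet s p) (sSet s q) ∧
    ∀ k ∈ sSet s p, ((N : ℤ) * s) ∣ (φ k - k)

/-! ### Auxiliary development -/

namespace CoreAux

/-- The strictly decreasing beta enumeration. -/
def bfun (p : Partn) (i : ℕ) : ℤ := (p.f i : ℤ) - (i + 1)

lemma betaSet_eq_range (p : Partn) : betaSet p = Set.range (bfun p) := by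
  ext x; simp [betaSet, bfun, eq_comm, Set.range]

lemma bfun_strictAnti (p : Partn) : StrictAnti (bfun p) := by
  apply strictAnti_nat_of_succ_lt
  intro n
  have := p.antitone (by omega : n ≤ n + 1)
  simp only [bfun]
  push_cast
  omega

lemma downset_eq_Iio {S : Set ℕ} (hfin : S.Finite)
    (hdown : ∀ i j : ℕ, i ≤ j → j ∈ S → i ∈ S) : S = Set.Iio S.ncard := by
  have hne : Sᶜ.Nonempty := by
    by_contra h
    rw [Set.not_nonempty_iff_eq_empty, Set.compl_empty_iff] at h
    exact Set.infinite_univ (h ▸ hfin)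
  set n := sInf Sᶜ with hn
  have hnmem : n ∉ S := Nat.sInf_mem hne
  have hS : S = Set.Iio n := by
    ext y
    simp only [Set.mem_Iio]
    constructor
    · intro hy
      by_contra hlt
      push_neg at hlt
      exact hnmem (hdown n y hlt hy)
    · intro hy
      by_contra hmem
      have : n ≤ y := Nat.sInf_le hmem
      omega
  have hcard : S.ncard = n := by
    rw [hS, ← Finset.coe_range, Set.ncard_coe_finset, Finset.card_range]
  rw [hcard, hS]

lemma conj_finite (p : Partn) (c : ℕ) : {i : ℕ | c + 1 ≤ p.f i}.Finite := by
  obtain ⟨M, hM⟩ := p.eventually_zero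
  apply Set.Finite.subset (Set.finite_Iio M)
  intro i hi
  simp only [Set.mem_setOf_eq] at hi
  by_contra h
  simp only [Set.mem_Iio, not_lt] at h
  have := hM i h
  omega

lemma conj_iff (p : Partn) (c r : ℕ) : c < p.f r ↔ r < conjCount p c := by
  have h := downset_eq_Iio (conj_finite p c)
    (fun i j hij hj => by
      simp only [Set.mem_setOf_eq] at *
      exact le_trans hj (p.antitone hij))
  constructor
  · intro hcf
    have hmem : r ∈ {i : ℕ | c + 1 ≤ p.f i} := by
      simp only [Set.mem_setOf_eq]; omega
    rw [h] at hmem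
    simpa [conjCount] using hmem
  · intro hr
    have hmem : r ∈ Set.Iio {i : ℕ | c + 1 ≤ p.f i}.ncard := by
      simpa [conjCount] using hr
    rw [← h] at hmem
    simp only [Set.mem_setOf_eq] at hmem
    omega

/-- The increasing enumeration of the complement of the beta set. -/
noncomputable def ufun (p : Partn) (c : ℕ) : ℤ := (c : ℤ) - conjCount p c

lemma conj_antitone (p : Partn) : Antitone (conjCount p) := by
  intro c d hcd
  apply Set.ncard_le_ncard _ (conj_finite p c)
  intro i hi
  simp only [Set.mem_setOf_eq] at *
  omega

lemma ufun_strictMono (p : Partn) : StrictMono (ufun p) := by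
  apply strictMono_nat_of_lt_succ
  intro c
  have := conj_antitone p (by omega : c ≤ c + 1)
  simp only [ufun]
  push_cast
  omega

lemma ufun_not_mem (p : Partn) (c : ℕ) : ufun p c ∉ betaSet p := by
  rintro ⟨i, hi⟩
  simp only [ufun] at hi
  by_cases hc : c < p.f i
  · have h1 := (conj_iff p c i).mp hc
    have h2 : (conjCount p c : ℤ) ≥ i + 1 := by exact_mod_cast h1
    have : (p.f i : ℤ) ≤ c := by omega
    have : (c : ℤ) < p.f i := by exact_mod_cast hc
    omega
  · have h1 : ¬ (i < conjCount p c) := fun h => hc ((conj_iff p c i).mpr h)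
    have h2 : (conjCount p c : ℤ) ≤ i := by
      have : conjCount p c ≤ i := by omega
      exact_mod_cast this
    have h3 : (p.f i : ℤ) ≤ c := by exact_mod_cast (by omega : p.f i ≤ c)
    omega

lemma ufun_lb (p : Partn) (c : ℕ) : ufun p 0 + c ≤ ufun p c := by
  induction c with
  | zero => simp
  | succ n ih =>
    have := ufun_strictMono p (by omega : n < n + 1)
    push_cast
    push_cast at ih
    omega

lemma ufun_surj (p : Partn) {x : ℤ} (hx : x ∉ betaSet p) : ∃ c, ufun p c = x := by
  by_cases hlow : x < ufun p 0
  · exfalso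
    apply hx
    have h0 : ufun p 0 = -(conjCount p 0 : ℤ) := by simp [ufun]
    set i : ℕ := (-x - 1).toNat with hi
    have hxi : (i : ℤ) = -x - 1 := by
      rw [hi, Int.toNat_of_nonneg]; omega
    have hige : conjCount p 0 ≤ i := by omega
    have hfz : p.f i = 0 := by
      by_contra h
      have : 0 < p.f i := by omega
      have := (conj_iff p 0 i).mp this
      omega
    exact ⟨i, by rw [hfz]; push_cast; omega⟩
  · push_neg at hlow
    set B := (x - ufun p 0).toNat with hB
    have hBx : (B : ℤ) ≥ x - ufun p 0 := Int.self_le_toNat _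
    set c := Nat.findGreatest (fun c => ufun p c ≤ x) B with hc
    have hcle : ufun p c ≤ x :=
      Nat.findGreatest_spec (P := fun c => ufun p c ≤ x) (Nat.zero_le B) hlow
    by_cases hceq : ufun p c = x
    · exact ⟨c, hceq⟩
    have hclt : ufun p c < x := lt_of_le_of_ne hcle hceq
    have hcB : c + 1 ≤ B := by
      by_contra h
      push_neg at h
      have h1 : B ≤ c := by omega
      have h2 := ufun_lb p c
      have h3 : (B : ℤ) ≤ c := by exact_mod_cast h1
      omega
    have hnext : ¬ (ufun p (c + 1) ≤ x) :=
      Nat.findGreatest_is_greatest (P := fun c => ufun p c ≤ x)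
        (hc ▸ Nat.lt_succ_self c) hcB
    push_neg at hnext
    exfalso
    apply hx
    -- x ∈ betaSet p with index i = c - x
    have h1 : x ≤ (c : ℤ) - conjCount p (c + 1) := by
      have : ufun p (c+1) = (c:ℤ) + 1 - conjCount p (c+1) := by
        simp only [ufun]; push_cast; ring
      omega
    have h2 : (c : ℤ) - conjCount p c < x := by
      simpa [ufun] using hclt
    set i : ℕ := ((c : ℤ) - x).toNat with hi
    have hxi : (i : ℤ) = (c : ℤ) - x := by
      rw [hi, Int.toNat_of_nonneg]; omega
    have hilt : i < conjCount p c := by omega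
    have hige : conjCount p (c+1) ≤ i := by omega
    have hfge : c + 1 ≤ p.f i := (conj_iff p c i).mpr hilt
    have hfle : ¬ (c + 1 + 1 ≤ p.f i) := by
      intro h
      have : c + 1 < p.f i := by omega
      have := (conj_iff p (c+1) i).mp this
      omega
    have hf : p.f i = c + 1 := by omega
    exact ⟨i, by rw [hf]; push_cast; omega⟩

lemma hookLen_eq (p : Partn) (r c : ℕ) :
    hookLen p r c = bfun p r - ufun p c := by
  simp only [hookLen, bfun, ufun]; ring

lemma lt_iff_ulb (p : Partn) (r c : ℕ) : c < p.f r ↔ ufun p c < bfun p r := by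
  constructor
  · intro h
    have h1 := (conj_iff p c r).mp h
    have h1' : (r : ℤ) + 1 ≤ conjCount p c := by exact_mod_cast h1
    have h2 : (c : ℤ) < p.f r := by exact_mod_cast h
    simp only [ufun, bfun]
    omega
  · intro h
    by_contra hc
    push_neg at hc
    have h1 : ¬ (r < conjCount p c) := fun hh => by
      have := (conj_iff p c r).mpr hh; omega
    have h1' : (conjCount p c : ℤ) ≤ r := by
      have : conjCount p c ≤ r := by omega
      exact_mod_cast this
    have h2 : (p.f r : ℤ) ≤ c := by exact_mod_cast hc
    simp only [ufun, bfun] at h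
    omega

lemma closure_iter {B : Set ℤ} {s : ℕ} (hB : ∀ b ∈ B, b - (s:ℤ) ∈ B)
    (n : ℕ) : ∀ b ∈ B, b - (s:ℤ) * n ∈ B := by
  induction n with
  | zero => simpa using fun b hb => hb
  | succ n ih =>
    intro b hb
    have h1 := hB _ (ih b hb)
    have h2 : b - (s:ℤ) * ((n:ℤ) + 1) = b - (s:ℤ) * (n:ℤ) - s := by ring
    push_cast
    rw [h2]
    exact h1

lemma isCore_iff {s : ℕ} (hs : 1 ≤ s) (p : Partn) :
    IsCore s p ↔ ∀ b ∈ betaSet p, b - (s:ℤ) ∈ betaSet p := by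
  constructor
  · intro hcore b hb
    by_contra hnot
    obtain ⟨r, hr⟩ := hb
    obtain ⟨c, hc⟩ := ufun_surj p hnot
    have hb' : b = bfun p r := hr
    have hlt : ufun p c < bfun p r := by
      rw [hc, ← hb']; omega
    have hcf : c < p.f r := (lt_iff_ulb p r c).mpr hlt
    apply hcore r c hcf
    rw [hookLen_eq, ← hb', hc]
    exact ⟨1, by ring⟩
  · intro hclosed r c hcf hdvd
    rw [hookLen_eq] at hdvd
    have hlt : ufun p c < bfun p r := (lt_iff_ulb p r c).mp hcf
    obtain ⟨k, hk⟩ := hdvd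
    have hspos : (0:ℤ) < s := by exact_mod_cast hs
    have hkpos : 0 < k := by nlinarith
    have hbr : bfun p r ∈ betaSet p := ⟨r, rfl⟩
    have := closure_iter hclosed k.toNat _ hbr
    rw [Int.toNat_of_nonneg (by omega)] at this
    have heq : bfun p r - (s:ℤ) * k = ufun p c := by omega
    rw [heq] at this
    exact ufun_not_mem p c this

lemma strictAnti_eq_of_range_eq {b1 b2 : ℕ → ℤ} (h1 : StrictAnti b1) (h2 : StrictAnti b2)
    (h : Set.range b1 = Set.range b2) : b1 = b2 := by
  have aux : ∀ (c1 c2 : ℕ → ℤ), StrictAnti c1 → StrictAnti c2 →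
      Set.range c1 = Set.range c2 → ∀ n, (∀ k, k < n → c1 k = c2 k) → c2 n ≤ c1 n := by
    intro c1 c2 hc1 hc2 hr n ih
    have hmem : c2 n ∈ Set.range c1 := by rw [hr]; exact ⟨n, rfl⟩
    obtain ⟨m, hm⟩ := hmem
    rcases lt_or_ge m n with hmn | hmn
    · exfalso
      have h3 := ih m hmn
      have h4 := hc2 hmn
      omega
    · calc c2 n = c1 m := hm.symm
        _ ≤ c1 n := hc1.antitone hmn
  funext n
  induction n using Nat.strong_induction_on with
  | _ n ih =>
    exact le_antisymm (aux b2 b1 h2 h1 h.symm n (fun k hk => (ih k hk).symm))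
      (aux b1 b2 h1 h2 h n ih)

lemma partn_eq_of_betaSet_eq {p q : Partn} (h : betaSet p = betaSet q) : p = q := by
  have hb : bfun p = bfun q := strictAnti_eq_of_range_eq (bfun_strictAnti p) (bfun_strictAnti q)
    (by rw [← betaSet_eq_range, ← betaSet_eq_range, h])
  have hf : p.f = q.f := by
    funext i
    have h2 := congrFun hb i
    simp only [bfun] at h2
    omega
  cases p; cases q; simp_all

lemma low_mem (p : Partn) {M : ℕ} (hM : ∀ i, M ≤ i → p.f i = 0) {y : ℤ}
    (hy : y ≤ -(M:ℤ) - 1) : y ∈ betaSet p := by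
  set i := (-y - 1).toNat with hi
  have hxi : (i : ℤ) = -y - 1 := by
    rw [hi, Int.toNat_of_nonneg]; omega
  have hMi : M ≤ i := by omega
  exact ⟨i, by rw [hM i hMi]; push_cast; omega⟩

lemma mem_le (p : Partn) {y : ℤ} (hy : y ∈ betaSet p) : y ≤ (p.f 0 : ℤ) - 1 := by
  obtain ⟨i, rfl⟩ := hy
  have h1 : p.f i ≤ p.f 0 := p.antitone (Nat.zero_le i)
  have h2 : (p.f i : ℤ) ≤ p.f 0 := by exact_mod_cast h1
  omega

lemma j_emod {s j : ℕ} (hj : j < s) : (j : ℤ) % s = j :=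
  Int.emod_eq_of_lt (by positivity) (by exact_mod_cast hj)

lemma sub_mul_emod (a b c : ℤ) : (a - b * c) % b = a % b := by
  rw [show a - b * c = a + b * (-c) by ring, Int.add_mul_emod_self_left]

lemma dvd_of_emod_eq {a b c : ℤ} (h : a % c = b % c) : c ∣ a - b :=
  (Int.ModEq.symm (h : Int.ModEq c a b)).dvd

lemma exists_tops {s : ℕ} (hs : 1 ≤ s) (p : Partn) :
    ∃ t : ℕ → ℤ, ∀ j, j < s → (t j ∈ betaSet p ∧ t j % s = j ∧
      ∀ z ∈ betaSet p, z % s = j → z ≤ t j) := by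
  have key : ∀ j : ℕ, ∃ y : ℤ, j < s →
      (y ∈ betaSet p ∧ y % s = j ∧ ∀ z ∈ betaSet p, z % s = j → z ≤ y) := by
    intro j
    by_cases hj : j < s
    · obtain ⟨N0, hN0⟩ := p.eventually_zero
      have hsp : (1:ℤ) ≤ s := by exact_mod_cast hs
      have hinh : ∃ y : ℤ, y ∈ betaSet p ∧ y % s = j := by
        refine ⟨(j:ℤ) - (s:ℤ) * (N0 + j + 1), low_mem p hN0 ?_, ?_⟩
        · nlinarith [Int.natCast_nonneg N0, Int.natCast_nonneg j]
        · rw [sub_mul_emod]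
          exact j_emod hj
      have hbdd : ∃ b : ℤ, ∀ z, (z ∈ betaSet p ∧ z % s = j) → z ≤ b :=
        ⟨(p.f 0 : ℤ) - 1, fun z hz => mem_le p hz.1⟩
      obtain ⟨lub, hlub1, hlub2⟩ := Int.exists_greatest_of_bdd hbdd
        ⟨_, hinh.choose_spec⟩
      exact ⟨lub, fun _ => ⟨hlub1.1, hlub1.2, fun z hz hzr => hlub2 z ⟨hz, hzr⟩⟩⟩
    · exact ⟨0, fun h => absurd h hj⟩
  choose t ht using key
  exact ⟨t, ht⟩

lemma sSet_eq_image {s : ℕ} (hs : 1 ≤ s) (p : Partn)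
    (hcl : ∀ b ∈ betaSet p, b - (s:ℤ) ∈ betaSet p)
    {t : ℕ → ℤ} (ht : ∀ j, j < s → (t j ∈ betaSet p ∧ t j % s = j ∧
      ∀ z ∈ betaSet p, z % s = j → z ≤ t j)) :
    sSet s p = ↑((Finset.range s).image (fun j => t j + s)) := by
  have hsp : (1:ℤ) ≤ s := by exact_mod_cast hs
  ext x
  simp only [Finset.coe_image, Finset.coe_range, Set.mem_image, Set.mem_Iio, sSet,
    Set.mem_setOf_eq]
  constructor
  · rintro ⟨hx1, hx2⟩
    set j := (x % s).toNat with hj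
    have hj1 : (j:ℤ) = x % s := Int.toNat_of_nonneg (Int.emod_nonneg x (by omega))
    have hjs : j < s := by
      have := Int.emod_lt_of_pos x (show (0:ℤ) < s by omega)
      omega
    obtain ⟨hmem, hres, hmax⟩ := ht j hjs
    have hxs : (x - s) % s = (j:ℤ) := by
      rw [show x - (s:ℤ) = x - (s:ℤ) * 1 by ring, sub_mul_emod]
      omega
    have hle : x - s ≤ t j := hmax _ hx1 hxs
    have hdvd2 : (s:ℤ) ∣ (t j - x) := dvd_of_emod_eq (by omega)
    rcases eq_or_lt_of_le hle with heq | hlt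
    · exact ⟨j, hjs, by omega⟩
    · exfalso
      apply hx2
      obtain ⟨d, hd⟩ := hdvd2
      have hd0 : 0 ≤ d := by nlinarith
      have := closure_iter hcl d.toNat _ hmem
      rw [Int.toNat_of_nonneg hd0] at this
      rw [show x = t j - (s:ℤ) * d by omega]
      exact this
  · rintro ⟨j, hjs, rfl⟩
    obtain ⟨hmem, hres, hmax⟩ := ht j hjs
    constructor
    · rw [show t j + (s:ℤ) - s = t j by ring]
      exact hmem
    · intro hbad
      have := hmax _ hbad (by rw [show t j + (s:ℤ) = t j + (s:ℤ)*1 by ring,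
        Int.add_mul_emod_self_left]; exact hres)
      omega

lemma betaSet_eq_rays {s : ℕ} (hs : 1 ≤ s) (p : Partn)
    (hcl : ∀ b ∈ betaSet p, b - (s:ℤ) ∈ betaSet p)
    {t : ℕ → ℤ} (ht : ∀ j, j < s → (t j ∈ betaSet p ∧ t j % s = j ∧
      ∀ z ∈ betaSet p, z % s = j → z ≤ t j)) :
    betaSet p = {y : ℤ | ∃ j, j < s ∧ (s:ℤ) ∣ (t j - y) ∧ y ≤ t j} := by
  have hsp : (1:ℤ) ≤ s := by exact_mod_cast hs
  ext y
  simp only [Set.mem_setOf_eq]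
  constructor
  · intro hy
    set j := (y % s).toNat with hj
    have hj1 : (j:ℤ) = y % s := Int.toNat_of_nonneg (Int.emod_nonneg y (by omega))
    have hjs : j < s := by
      have := Int.emod_lt_of_pos y (show (0:ℤ) < s by omega)
      omega
    obtain ⟨hmem, hres, hmax⟩ := ht j hjs
    exact ⟨j, hjs, dvd_of_emod_eq (by omega), hmax _ hy (by omega)⟩
  · rintro ⟨j, hjs, hdvd, hle⟩
    obtain ⟨hmem, hres, hmax⟩ := ht j hjs
    obtain ⟨d, hd⟩ := hdvd
    have hd0 : 0 ≤ d := by nlinarith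
    have := closure_iter hcl d.toNat _ hmem
    rw [Int.toNat_of_nonneg hd0] at this
    rw [show y = t j - (s:ℤ) * d by omega]
    exact this

lemma ray_count {s : ℕ} (hs : 1 ≤ s) (t : ℕ → ℤ) (hres : ∀ j, j < s → t j % s = j)
    (m : ℕ) (hnn : ∀ j, j < s → 0 ≤ t j + (s*m : ℕ) - j) :
    ∃ F : Finset ℤ,
      (↑F = {y : ℤ | ∃ j, j < s ∧ (s:ℤ) ∣ (t j - y) ∧ y ≤ t j} ∩
        Set.Ici (-((s*m : ℕ) : ℤ))) ∧
      ((F.card : ℤ) = s + ∑ j ∈ Finset.range s, (t j + ((s*m : ℕ) : ℤ) - j) / s) := by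
  have hsp : (1:ℤ) ≤ s := by exact_mod_cast hs
  set M : ℤ := ((s*m : ℕ) : ℤ) with hM
  have hMdvd : (s:ℤ) ∣ M := by
    rw [hM]; push_cast; exact Dvd.intro m rfl
  have hjdvd : ∀ j, j < s → (s:ℤ) ∣ (t j + M - j) := by
    intro j hj
    have h1 : (s:ℤ) ∣ (t j - j) := dvd_of_emod_eq (by rw [hres j hj, j_emod hj])
    have : t j + M - j = (t j - j) + M := by ring
    rw [this]
    exact dvd_add h1 hMdvd
  set K : ℕ → ℕ := fun j => ((t j + M - j) / s).toNat with hK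
  have hKc : ∀ j, j < s → (K j : ℤ) = (t j + M - j) / s := by
    intro j hj
    exact Int.toNat_of_nonneg (Int.ediv_nonneg (hnn j hj) (by omega))
  have hsK : ∀ j, j < s → (s:ℤ) * (K j) = t j + M - j := by
    intro j hj
    rw [hKc j hj]
    exact Int.mul_ediv_cancel' (hjdvd j hj)
  refine ⟨(Finset.range s).biUnion
    (fun j => (Finset.range (K j + 1)).image (fun k : ℕ => t j - (s:ℤ) * k)), ?_, ?_⟩
  · ext y
    simp only [Finset.coe_biUnion, Finset.coe_image, Finset.coe_range, Set.mem_iUnion,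
      Set.mem_image, Set.mem_Iio, Set.mem_inter_iff, Set.mem_setOf_eq, Set.mem_Ici]
    constructor
    · rintro ⟨j, hjs, k, hk, rfl⟩
      have hknn : (0:ℤ) ≤ (s:ℤ) * k := by positivity
      have hkK : (s:ℤ) * k ≤ (s:ℤ) * K j := by
        have : (k:ℤ) ≤ K j := by exact_mod_cast Nat.lt_succ_iff.mp hk
        nlinarith
      refine ⟨⟨j, hjs, Dvd.intro k (by ring), by omega⟩, ?_⟩
      have := hsK j hjs
      have hj0 : (0:ℤ) ≤ j := by positivity
      omega
    · rintro ⟨⟨j, hjs, hdvd, hle⟩, hyM⟩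
      obtain ⟨d, hd⟩ := hdvd
      have hd0 : 0 ≤ d := by nlinarith
      refine ⟨j, hjs, d.toNat, ?_, ?_⟩
      · rw [Nat.lt_succ_iff]
        have hsKj := hsK j hjs
        have hdK : d ≤ K j := by
          by_contra hcon
          push_neg at hcon
          have : (K j : ℤ) + 1 ≤ d := by omega
          have hj0 : (0:ℤ) ≤ j := by positivity
          have hjlt : (j:ℤ) < s := by exact_mod_cast hjs
          nlinarith
        have : (d.toNat : ℤ) ≤ K j := by rw [Int.toNat_of_nonneg hd0]; exact hdK
        exact_mod_cast this
      · rw [Int.toNat_of_nonneg hd0]; omega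
  · rw [Finset.card_biUnion]
    · push_cast
      have : ∀ j ∈ Finset.range s,
          (((Finset.range (K j + 1)).image (fun k : ℕ => t j - (s:ℤ) * k)).card : ℤ)
            = (t j + M - j) / s + 1 := by
        intro j hj
        rw [Finset.card_image_of_injective _ (fun a b hab => by
          have h1 : (s:ℤ) * a = s * b := by omega
          have h2 : (a:ℤ) = b := by
            have := mul_left_cancel₀ (show (s:ℤ) ≠ 0 by omega) h1
            exact this
          exact_mod_cast h2), Finset.card_range]
        push_cast
        rw [← hKc j (Finset.mem_range.mp hj)]
      rw [Finset.sum_congr rfl this, Finset.sum_add_distrib, Finset.sum_const,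
        Finset.card_range]
      simp
      ring
    · intro a ha b hb hab
      simp only [Finset.disjoint_left, Finset.mem_image, Finset.mem_range]
      rintro y ⟨k, hk, rfl⟩ ⟨k', hk', hy⟩
      apply hab
      have ha' := Finset.mem_range.mp ha
      have hb' := Finset.mem_range.mp hb
      have hra : (t a - (s:ℤ) * k) % s = a := by rw [sub_mul_emod, hres a ha']
      have hrb : (t b - (s:ℤ) * k') % s = b := by rw [sub_mul_emod, hres b hb']
      rw [hy] at hrb
      have : (a : ℤ) = b := by rw [← hra, ← hrb]
      exact_mod_cast this

lemma tops_sum {s : ℕ} (hs : 1 ≤ s) (p : Partn)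
    (hcl : ∀ b ∈ betaSet p, b - (s:ℤ) ∈ betaSet p)
    {t : ℕ → ℤ} (ht : ∀ j, j < s → (t j ∈ betaSet p ∧ t j % s = j ∧
      ∀ z ∈ betaSet p, z % s = j → z ≤ t j)) :
    ∑ j ∈ Finset.range s, t j = ∑ j ∈ Finset.range s, (j:ℤ) - (s:ℤ)^2 := by
  classical
  have hsp : (1:ℤ) ≤ s := by exact_mod_cast hs
  obtain ⟨N0, hN0⟩ := p.eventually_zero
  set SP : ℕ := (Finset.range s).sup (fun j : ℕ => ((j:ℤ) - t j).toNat) with hSP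
  set m : ℕ := N0 + SP + 1 with hm
  have hmM : m ≤ s * m := Nat.le_mul_of_pos_left m (by omega)
  have hnn : ∀ j, j < s → 0 ≤ t j + (s*m : ℕ) - j := by
    intro j hj
    have hsup : ((j:ℤ) - t j).toNat ≤ SP := by
      rw [hSP]
      exact Finset.le_sup (f := fun j : ℕ => ((j:ℤ) - t j).toNat) (Finset.mem_range.mpr hj)
    have h1 : (j:ℤ) - t j ≤ ((j:ℤ) - t j).toNat := Int.self_le_toNat _
    have h2 : (((j:ℤ) - t j).toNat : ℤ) ≤ (SP : ℤ) := by exact_mod_cast hsup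
    have h3 : (m : ℤ) ≤ ((s*m : ℕ) : ℤ) := by exact_mod_cast hmM
    have h4 : (SP : ℤ) < m := by rw [hm]; push_cast; omega
    omega
  have hres : ∀ j, j < s → t j % s = j := fun j hj => (ht j hj).2.1
  obtain ⟨F, hF, hcard⟩ := ray_count hs t hres m hnn
  -- the beta-set side
  set Fb : Finset ℤ := (Finset.range (s*m)).image (bfun p) with hFb
  have hcardb : Fb.card = s * m := by
    rw [hFb, Finset.card_image_of_injective _ (bfun_strictAnti p).injective,
      Finset.card_range]
  have hFbeq : (↑Fb : Set ℤ) = betaSet p ∩ Set.Ici (-((s*m : ℕ) : ℤ)) := by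
    ext y
    simp only [hFb, Finset.coe_image, Finset.coe_range, Set.mem_image, Set.mem_Iio,
      Set.mem_inter_iff, Set.mem_Ici]
    constructor
    · rintro ⟨i, hi, rfl⟩
      refine ⟨⟨i, rfl⟩, ?_⟩
      simp only [bfun]
      have : (i:ℤ) < (s*m : ℕ) := by exact_mod_cast hi
      have := Int.natCast_nonneg (p.f i)
      omega
    · rintro ⟨⟨i, rfl⟩, hy⟩
      refine ⟨i, ?_, rfl⟩
      by_contra hcon
      push_neg at hcon
      have hN0m : N0 ≤ m := by omega
      have hfz : p.f i = 0 := hN0 i (le_trans (le_trans hN0m hmM) hcon)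
      have hb : bfun p i = -((i:ℤ)+1) := by simp [bfun, hfz]
      have hi : ((s*m : ℕ) : ℤ) ≤ i := by exact_mod_cast hcon
      omega
  have hFeq : Fb = F := by
    apply Finset.coe_injective
    rw [hFbeq, hF, betaSet_eq_rays hs p hcl ht]
  have hcount : ((s*m : ℕ) : ℤ) = s + ∑ j ∈ Finset.range s, (t j + ((s*m : ℕ) : ℤ) - j) / s := by
    rw [← hcard, ← hFeq, hcardb]
  have hjdvd : ∀ j ∈ Finset.range s, (s:ℤ) * ((t j + ((s*m : ℕ) : ℤ) - j) / s)
      = t j + ((s*m : ℕ) : ℤ) - j := by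
    intro j hj
    have hj' := Finset.mem_range.mp hj
    apply Int.mul_ediv_cancel'
    have h1 : (s:ℤ) ∣ (t j - j) := dvd_of_emod_eq (by rw [hres j hj', j_emod hj'])
    have h2 : (s:ℤ) ∣ ((s*m : ℕ) : ℤ) := by push_cast; exact Dvd.intro m rfl
    have : t j + ((s*m : ℕ) : ℤ) - j = (t j - j) + ((s*m : ℕ) : ℤ) := by ring
    rw [this]
    exact dvd_add h1 h2
  have hmul : (s:ℤ) * (∑ j ∈ Finset.range s, (t j + ((s*m : ℕ) : ℤ) - j) / s)
      = ∑ j ∈ Finset.range s, (t j + ((s*m : ℕ) : ℤ) - j) := by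
    rw [Finset.mul_sum]
    exact Finset.sum_congr rfl hjdvd
  have hsum3 : ∑ j ∈ Finset.range s, (t j + ((s*m : ℕ) : ℤ) - j)
      = (∑ j ∈ Finset.range s, t j) + (s:ℤ) * ((s*m : ℕ) : ℤ)
        - ∑ j ∈ Finset.range s, (j:ℤ) := by
    rw [Finset.sum_sub_distrib, Finset.sum_add_distrib, Finset.sum_const, Finset.card_range,
      nsmul_eq_mul]
  have hA : ∑ j ∈ Finset.range s, (t j + ((s*m : ℕ) : ℤ) - j) / s
      = ((s*m : ℕ) : ℤ) - s := by omega
  have hkey : (s:ℤ) * (((s*m : ℕ) : ℤ) - s) = (∑ j ∈ Finset.range s, t j)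
      + (s:ℤ) * ((s*m : ℕ) : ℤ) - ∑ j ∈ Finset.range s, (j:ℤ) := by
    rw [← hA, hmul, hsum3]
  linear_combination -hkey

lemma exists_partn_of {B : Set ℤ} {M : ℕ} {F : Finset ℤ} (hM : 0 < M)
    (hF : ↑F = B ∩ Set.Ici (-(M:ℤ))) (hcard : F.card = M)
    (hlow : ∀ y : ℤ, y < -(M:ℤ) → y ∈ B) :
    ∃ p : Partn, betaSet p = B := by
  classical
  set L := F.sort (· ≥ ·) with hL
  have hlen : L.length = M := by rw [hL, Finset.length_sort, hcard]
  have hmemL : ∀ a, a ∈ L ↔ a ∈ F := fun a => by rw [hL, Finset.mem_sort]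
  have hsorted : L.Pairwise (· ≥ ·) := Finset.pairwise_sort _ _
  have hnodup : L.Nodup := Finset.sort_nodup _ _
  have hFmem : ∀ y, y ∈ F ↔ (y ∈ B ∧ -(M:ℤ) ≤ y) := by
    intro y
    constructor
    · intro hy
      have h := (show y ∈ (↑F : Set ℤ) from hy)
      rw [hF] at h
      exact ⟨h.1, h.2⟩
    · intro hy
      have h : y ∈ B ∩ Set.Ici (-(M:ℤ)) := ⟨hy.1, hy.2⟩
      rw [← hF] at h
      exact h
  have hstrict : ∀ (i j : Fin L.length), i < j → L.get j < L.get i := by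
    intro i j hij
    have h1 : L.get i ≥ L.get j := List.Pairwise.rel_get_of_lt hsorted hij
    have h2 : L.get i ≠ L.get j := fun h =>
      absurd ((List.Nodup.get_inj_iff hnodup).mp h) (Fin.ne_of_lt hij)
    omega
  have hgetF : ∀ (i : Fin L.length), L.get i ∈ F := fun i => (hmemL _).mp (List.get_mem L i)
  have chain : ∀ (j : ℕ) (hj : j < M) (i : ℕ) (hi : i ≤ j),
      L.get ⟨j, by omega⟩ + (j:ℤ) - (i:ℤ) ≤ L.get ⟨i, by omega⟩ := by
    intro j
    induction j with
    | zero =>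
      intro hj i hi
      have : i = 0 := by omega
      subst this
      simp
    | succ j ih =>
      intro hj i hi
      rcases Nat.eq_or_lt_of_le hi with heq | hlt
      · subst heq
        simp
      · have h1 := ih (by omega) i (by omega)
        have h2 : L.get ⟨j+1, by omega⟩ < L.get ⟨j, by omega⟩ :=
          hstrict ⟨j, by omega⟩ ⟨j+1, by omega⟩ (Fin.mk_lt_mk.mpr (by omega))
        push_cast at h1 ⊢
        omega
  set b : ℕ → ℤ := fun i => if h : i < M then L.get ⟨i, by omega⟩ else -((i:ℤ)+1) with hbdef
  have hb1 : ∀ i (h : i < M), b i = L.get ⟨i, by omega⟩ := fun i h => dif_pos h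
  have hb2 : ∀ i, M ≤ i → b i = -((i:ℤ)+1) := fun i h => dif_neg (by omega)
  have hbF : ∀ i (h : i < M), b i ∈ F := fun i h => by
    rw [hb1 i h]; exact hgetF _
  have hbB : ∀ i (h : i < M), b i ∈ B ∧ -(M:ℤ) ≤ b i := fun i h =>
    (hFmem _).mp (hbF i h)
  have hlbb : ∀ i : ℕ, -((i:ℤ)+1) ≤ b i := by
    intro i
    by_cases h : i < M
    · rw [hb1 i h]
      have h1 := chain (M-1) (by omega) i (by omega)
      have h2 := (hFmem _).mp (hgetF ⟨M-1, by omega⟩)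
      omega
    · rw [hb2 i (by omega)]
  have hstrictb : ∀ i : ℕ, b (i+1) < b i := by
    intro i
    by_cases h1 : i + 1 < M
    · rw [hb1 i (by omega), hb1 (i+1) h1]
      exact hstrict _ _ (Fin.mk_lt_mk.mpr (by omega))
    · by_cases h2 : i < M
      · rw [hb1 i h2, hb2 (i+1) (by omega)]
        have h3 := (hFmem _).mp (hgetF ⟨i, by omega⟩)
        omega
      · rw [hb2 i (by omega), hb2 (i+1) (by omega)]
        omega
  set p : Partn := ⟨fun i => (b i + i + 1).toNat,
    antitone_nat_of_succ_le (fun i => by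
      have := hstrictb i
      apply Int.toNat_le_toNat
      push_cast
      omega),
    ⟨M, fun i h => by
      show (b i + i + 1).toNat = 0
      rw [hb2 i h]
      simp⟩⟩ with hpdef
  refine ⟨p, ?_⟩
  have hbfun : bfun p = b := by
    funext i
    have := hlbb i
    show ((b i + i + 1).toNat : ℤ) - (i + 1) = b i
    rw [Int.toNat_of_nonneg (by omega)]
    ring
  rw [betaSet_eq_range, hbfun]
  ext y
  constructor
  · rintro ⟨i, rfl⟩
    by_cases h : i < M
    · exact (hbB i h).1
    · rw [hb2 i (by omega)]
      apply hlow
      push_cast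
      omega
  · intro hy
    by_cases h : -(M:ℤ) ≤ y
    · have hyF : y ∈ F := (hFmem y).mpr ⟨hy, h⟩
      obtain ⟨n, hn⟩ := List.mem_iff_get.mp ((hmemL y).mpr hyF)
      have hnM : (n : ℕ) < M := by
        have := n.isLt
        omega
      exact ⟨n, by rw [hb1 _ hnM]; exact hn⟩
    · push_neg at h
      set i := (-y-1).toNat with hi
      have hxi : (i : ℤ) = -y - 1 := by
        rw [hi, Int.toNat_of_nonneg]; omega
      refine ⟨i, ?_⟩
      rw [hb2 i (by omega)]
      omega

lemma core_of_sset {s : ℕ} (hs : 1 ≤ s) (x : ℕ → ℤ)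
    (hres : ∀ j, j < s → x j % s = j)
    (hsum : ∑ j ∈ Finset.range s, x j = ∑ j ∈ Finset.range s, (j:ℤ)) :
    ∃ q : Partn, IsCore s q ∧ sSet s q = ↑((Finset.range s).image x) := by
  classical
  have hsp : (1:ℤ) ≤ s := by exact_mod_cast hs
  set t : ℕ → ℤ := fun j => x j - s with htdef
  have htres : ∀ j, j < s → t j % s = j := by
    intro j hj
    show (x j - (s:ℤ)) % s = j
    rw [show x j - (s:ℤ) = x j - (s:ℤ)*1 by ring, sub_mul_emod]
    exact hres j hj
  set B : Set ℤ := {y : ℤ | ∃ j, j < s ∧ (s:ℤ) ∣ (t j - y) ∧ y ≤ t j} with hBdef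
  have hclB : ∀ y ∈ B, y - (s:ℤ) ∈ B := by
    rintro y ⟨j, hjs, hdvd, hle⟩
    exact ⟨j, hjs, by
      obtain ⟨d, hd⟩ := hdvd
      exact ⟨d + 1, by rw [mul_add, mul_one]; omega⟩, by omega⟩
  set SP : ℕ := (Finset.range s).sup (fun j : ℕ => ((j:ℤ) - t j).toNat) with hSP
  set m : ℕ := SP + 1 with hm
  have hmM : m ≤ s * m := Nat.le_mul_of_pos_left m (by omega)
  have hnn : ∀ j, j < s → 0 ≤ t j + (s*m : ℕ) - j := by
    intro j hj
    have hsup : ((j:ℤ) - t j).toNat ≤ SP := by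
      rw [hSP]
      exact Finset.le_sup (f := fun j : ℕ => ((j:ℤ) - t j).toNat) (Finset.mem_range.mpr hj)
    have h1 : (j:ℤ) - t j ≤ ((j:ℤ) - t j).toNat := Int.self_le_toNat _
    have h2 : (((j:ℤ) - t j).toNat : ℤ) ≤ (SP : ℤ) := by exact_mod_cast hsup
    have h3 : (m : ℤ) ≤ ((s*m : ℕ) : ℤ) := by exact_mod_cast hmM
    have h4 : (SP : ℤ) < m := by rw [hm]; push_cast; omega
    omega
  obtain ⟨F, hF, hcard⟩ := ray_count hs t htres m hnn
  have hsumt : ∑ j ∈ Finset.range s, t j = ∑ j ∈ Finset.range s, (j:ℤ) - (s:ℤ)^2 := by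
    rw [htdef]
    rw [Finset.sum_sub_distrib, Finset.sum_const, Finset.card_range, nsmul_eq_mul, hsum]
    ring
  have hjdvd : ∀ j ∈ Finset.range s, (s:ℤ) * ((t j + ((s*m : ℕ) : ℤ) - j) / s)
      = t j + ((s*m : ℕ) : ℤ) - j := by
    intro j hj
    have hj' := Finset.mem_range.mp hj
    apply Int.mul_ediv_cancel'
    have h1 : (s:ℤ) ∣ (t j - j) := dvd_of_emod_eq (by rw [htres j hj', j_emod hj'])
    have h2 : (s:ℤ) ∣ ((s*m : ℕ) : ℤ) := by push_cast; exact Dvd.intro m rfl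
    rw [show t j + ((s*m : ℕ) : ℤ) - j = (t j - j) + ((s*m : ℕ) : ℤ) by ring]
    exact dvd_add h1 h2
  have hmul : (s:ℤ) * (∑ j ∈ Finset.range s, (t j + ((s*m : ℕ) : ℤ) - j) / s)
      = ∑ j ∈ Finset.range s, (t j + ((s*m : ℕ) : ℤ) - j) := by
    rw [Finset.mul_sum]
    exact Finset.sum_congr rfl hjdvd
  have hsum3 : ∑ j ∈ Finset.range s, (t j + ((s*m : ℕ) : ℤ) - j)
      = (s:ℤ) * ((s*m : ℕ) : ℤ) - (s:ℤ)^2 := by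
    rw [Finset.sum_sub_distrib, Finset.sum_add_distrib, Finset.sum_const, Finset.card_range,
      nsmul_eq_mul, hsumt]
    ring
  have hdivsum : ∑ j ∈ Finset.range s, (t j + ((s*m : ℕ) : ℤ) - j) / s
      = ((s*m : ℕ) : ℤ) - s := by
    apply mul_left_cancel₀ (show (s:ℤ) ≠ 0 by omega)
    rw [hmul, hsum3]
    ring
  have hcardM : F.card = s * m := by
    have : (F.card : ℤ) = ((s*m : ℕ) : ℤ) := by
      rw [hcard, hdivsum]
      ring
    exact_mod_cast this
  have hlow : ∀ y : ℤ, y < -(((s*m : ℕ) : ℕ):ℤ) → y ∈ B := by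
    intro y hy
    set j := (y % s).toNat with hj
    have hj1 : (j:ℤ) = y % s := Int.toNat_of_nonneg (Int.emod_nonneg y (by omega))
    have hjs : j < s := by
      have := Int.emod_lt_of_pos y (show (0:ℤ) < s by omega)
      omega
    refine ⟨j, hjs, dvd_of_emod_eq (by rw [htres j hjs, hj1] : t j % (s:ℤ) = y % s), ?_⟩
    · have := hnn j hjs
      have hj0 : (0:ℤ) ≤ j := by positivity
      omega
  obtain ⟨q, hq⟩ := exists_partn_of (show 0 < s*m by positivity) hF hcardM hlow
  have hcl : ∀ y ∈ betaSet q, y - (s:ℤ) ∈ betaSet q := by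
    rw [hq]; exact hclB
  have htop : ∀ j, j < s → (t j ∈ betaSet q ∧ t j % s = j ∧
      ∀ z ∈ betaSet q, z % s = j → z ≤ t j) := by
    intro j hj
    refine ⟨by rw [hq]; exact ⟨j, hj, by simp, le_refl _⟩, htres j hj, ?_⟩
    intro z hz hzr
    rw [hq] at hz
    obtain ⟨j', hj's, hdvd', hle'⟩ := hz
    have h2 : z % (s:ℤ) = t j' % s := Int.modEq_iff_dvd.mpr hdvd'
    have h3 : (j:ℤ) = j' := by rw [← hzr, h2, htres j' hj's]
    have h4 : j' = j := by exact_mod_cast h3.symm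
    subst h4
    exact hle'
  refine ⟨q, (isCore_iff hs q).mpr hcl, ?_⟩
  rw [sSet_eq_image hs q hcl htop]
  have himg : (Finset.range s).image (fun j => t j + (s:ℤ)) = (Finset.range s).image x :=
    Finset.image_congr (fun j hj => by simp only [htdef]; ring)
  rw [himg]

/-- The representative of `x` modulo `D` in the window `[c, c+D)`. -/
def rep (D c x : ℤ) : ℤ := c + (x - c) % D

lemma rep_lb {D : ℤ} (hD : 0 < D) (c x : ℤ) : c ≤ rep D c x := by
  have := Int.emod_nonneg (x - c) (by omega : D ≠ 0)
  simp only [rep]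
  omega

lemma rep_ub {D : ℤ} (hD : 0 < D) (c x : ℤ) : rep D c x < c + D := by
  have := Int.emod_lt_of_pos (x - c) hD
  simp only [rep]
  omega

lemma rep_dvd (D c x : ℤ) : D ∣ rep D c x - x :=
  ⟨-((x - c) / D), by simp only [rep]; rw [Int.emod_def]; ring⟩

lemma rep_cases {D : ℤ} (hD : 0 < D) (c x : ℤ) :
    rep D (c+1) x = rep D c x ∨ rep D (c+1) x = rep D c x + D := by
  have h1 := rep_lb hD c x
  have h2 := rep_ub hD c x
  have h3 := rep_lb hD (c+1) x
  have h4 := rep_ub hD (c+1) x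
  have hdvd : D ∣ rep D (c+1) x - rep D c x := by
    have h5 := dvd_sub (rep_dvd D (c+1) x) (rep_dvd D c x)
    rw [show rep D (c+1) x - x - (rep D c x - x) = rep D (c+1) x - rep D c x by ring] at h5
    exact h5
  obtain ⟨e, he⟩ := hdvd
  have he0 : -1 < e := by nlinarith
  have he1 : e < 2 := by nlinarith
  interval_cases e
  · left; omega
  · right; omega

lemma rep_jump {D : ℤ} (hD : 0 < D) {c x : ℤ}
    (h : rep D (c+1) x = rep D c x + D) : D ∣ x - c := by
  have h1 := rep_lb hD c x
  have h4 := rep_ub hD (c+1) x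
  have hc : rep D c x = c := by omega
  have h5 := rep_dvd D c x
  rw [hc] at h5
  rw [show x - c = -(c - x) by ring]
  exact dvd_neg.mpr h5

lemma rep_shift {D : ℤ} (hD : 0 < D) (c x : ℤ) : rep D (c + D) x = rep D c x + D := by
  simp only [rep]
  rw [show x - (c + D) = x - c - D * 1 by ring, sub_mul_emod]
  ring

lemma staircase {D : ℤ} (hD : 0 < D) {s : ℕ} (hs : 1 ≤ s) (x : ℕ → ℤ)
    (hdist : ∀ i j, i < s → j < s → i ≠ j → ¬ (D ∣ x i - x j))
    (target : ℤ) (hmod : D ∣ target - ∑ j ∈ Finset.range s, x j) :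
    ∃ c : ℤ, ∑ j ∈ Finset.range s, rep D c (x j) = target := by
  classical
  set g : ℤ → ℤ := fun c => ∑ j ∈ Finset.range s, rep D c (x j) with hg
  have hgmod : ∀ c, D ∣ g c - ∑ j ∈ Finset.range s, x j := by
    intro c
    rw [hg]
    simp only
    rw [← Finset.sum_sub_distrib]
    exact Finset.dvd_sum (fun j _ => rep_dvd D c (x j))
  have hstep : ∀ c, g c ≤ g (c+1) ∧ g (c+1) ≤ g c + D := by
    intro c
    constructor
    · apply Finset.sum_le_sum
      intro j _
      rcases rep_cases hD c (x j) with h | h <;> omega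
    · by_cases hex : ∃ j, j < s ∧ rep D (c+1) (x j) = rep D c (x j) + D
      · obtain ⟨j0, hj0, hj0e⟩ := hex
        have hother : ∀ j ∈ Finset.range s \ {j0}, rep D (c+1) (x j) = rep D c (x j) := by
          intro j hj
          obtain ⟨hj1, hj2⟩ := Finset.mem_sdiff.mp hj
          have hne : j ≠ j0 := by simpa using hj2
          rcases rep_cases hD c (x j) with h | h
          · exact h
          · exfalso
            apply hdist j j0 (Finset.mem_range.mp hj1) hj0 hne
            have d1 := rep_jump hD h
            have d2 := rep_jump hD hj0e
            have d3 := dvd_sub d1 d2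
            rw [show x j - c - (x j0 - c) = x j - x j0 by ring] at d3
            exact d3
        have hj0m : j0 ∈ Finset.range s := Finset.mem_range.mpr hj0
        have e1 := Finset.sum_eq_sum_sdiff_singleton_add hj0m (fun j => rep D (c+1) (x j))
        have e2 := Finset.sum_eq_sum_sdiff_singleton_add hj0m (fun j => rep D c (x j))
        have hsame : ∑ j ∈ Finset.range s \ {j0}, rep D (c+1) (x j)
            = ∑ j ∈ Finset.range s \ {j0}, rep D c (x j) :=
          Finset.sum_congr rfl hother
        rw [hg]
        simp only
        omega
      · push_neg at hex
        have hsame : ∀ j ∈ Finset.range s, rep D (c+1) (x j) = rep D c (x j) := by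
          intro j hj
          rcases rep_cases hD c (x j) with h | h
          · exact h
          · exact absurd h (hex j (Finset.mem_range.mp hj))
        rw [hg]
        simp only
        rw [Finset.sum_congr rfl hsame]
        omega
  have hmono : ∀ a b : ℤ, a ≤ b → g a ≤ g b := by
    intro a b hab
    refine Int.le_induction (motive := fun n _ => g a ≤ g n) le_rfl ?_ b hab
    intro n hn ih
    exact le_trans ih (hstep n).1
  have hshift : ∀ c, g (c + D) = g c + (s:ℤ) * D := by
    intro c
    rw [hg]
    simp only
    rw [Finset.sum_congr rfl (fun j _ => rep_shift hD c (x j)), Finset.sum_add_distrib,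
      Finset.sum_const, Finset.card_range, nsmul_eq_mul]
  have hup : ∀ n : ℕ, g ((n:ℤ) * D) = g 0 + (n:ℤ) * ((s:ℤ) * D) := by
    intro n
    induction n with
    | zero => simp
    | succ n ih =>
      have harg : ((n+1:ℕ):ℤ) * D = (n:ℤ) * D + D := by push_cast; ring
      rw [harg, hshift, ih]
      push_cast
      ring
  have hdown : ∀ n : ℕ, g (-(n:ℤ) * D) = g 0 - (n:ℤ) * ((s:ℤ) * D) := by
    intro n
    induction n with
    | zero => simp
    | succ n ih =>
      have h1 := hshift (-((n:ℤ)+1) * D)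
      have harg : -((n:ℤ)+1) * D + D = -(n:ℤ) * D := by ring
      rw [harg, ih] at h1
      have harg2 : (-((n+1:ℕ):ℤ)) * D = -((n:ℤ)+1) * D := by push_cast; ring
      rw [harg2]
      push_cast
      linarith [h1]
  have hsD1 : 1 ≤ (s:ℤ) * D := by
    have : (1:ℤ) ≤ s := by exact_mod_cast hs
    nlinarith
  have hub : ∃ n : ℕ, target ≤ g ((n:ℤ) * D) := by
    refine ⟨(target - g 0).toNat, ?_⟩
    rw [hup]
    have h2 : (target - g 0 : ℤ) ≤ ((target - g 0).toNat : ℤ) := Int.self_le_toNat _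
    nlinarith [Int.natCast_nonneg (target - g 0).toNat]
  have hlbd : ∃ n : ℕ, g (-(n:ℤ) * D) < target := by
    refine ⟨(g 0 - target + 1).toNat, ?_⟩
    rw [hdown]
    have h2 : (g 0 - target + 1 : ℤ) ≤ ((g 0 - target + 1).toNat : ℤ) := Int.self_le_toNat _
    nlinarith [Int.natCast_nonneg (g 0 - target + 1).toNat]
  obtain ⟨n1, hn1⟩ := hub
  obtain ⟨n0, hn0⟩ := hlbd
  have hbdd : ∃ b : ℤ, ∀ z, (target ≤ g z) → b ≤ z := by
    refine ⟨-(n0:ℤ) * D + 1, ?_⟩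
    intro z hz
    by_contra hcon
    push_neg at hcon
    have := hmono z (-(n0:ℤ) * D) (by omega)
    omega
  obtain ⟨cstar, hc1, hc2⟩ := Int.exists_least_of_bdd hbdd ⟨(n1:ℤ)*D, hn1⟩
  have hprev : g (cstar - 1) < target := by
    by_contra hcon
    push_neg at hcon
    have := hc2 _ hcon
    omega
  have hstep' := hstep (cstar - 1)
  rw [show cstar - 1 + 1 = cstar by ring] at hstep'
  have hdvd : D ∣ g cstar - target := by
    have h1 := hgmod cstar
    have h2 := dvd_sub h1 hmod
    rw [show g cstar - ∑ j ∈ Finset.range s, x j - (target - ∑ j ∈ Finset.range s, x j)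
      = g cstar - target by ring] at h2
    exact h2
  obtain ⟨e, he⟩ := hdvd
  have he0 : e = 0 := by nlinarith [hstep'.1, hstep'.2]
  rw [he0, mul_zero] at he
  refine ⟨cstar, ?_⟩
  have hfin : g cstar = target := by omega
  exact hfin

lemma gauss_sum (s : ℕ) : ∑ j ∈ Finset.range s, (j:ℤ) = (s.choose 2 : ℤ) := by
  have h1 : ∑ j ∈ Finset.range s, j = s.choose 2 := by
    rw [Finset.sum_range_id, Nat.choose_two_right]
  rw [← h1]
  push_cast
  rfl

lemma core_eq_of_sSet_eq {s : ℕ} (hs : 1 ≤ s) {q1 q2 : Partn}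
    (h1 : IsCore s q1) (h2 : IsCore s q2) (h : sSet s q1 = sSet s q2) : q1 = q2 := by
  have hcl1 := (isCore_iff hs q1).mp h1
  have hcl2 := (isCore_iff hs q2).mp h2
  obtain ⟨t1, ht1⟩ := exists_tops hs q1
  obtain ⟨t2, ht2⟩ := exists_tops hs q2
  have hi1 := sSet_eq_image hs q1 hcl1 ht1
  have hi2 := sSet_eq_image hs q2 hcl2 ht2
  have hteq : ∀ j, j < s → t1 j = t2 j := by
    intro j hj
    have hm : t1 j + (s:ℤ) ∈ sSet s q2 := by
      rw [← h, hi1]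
      simp only [Finset.coe_image, Finset.coe_range, Set.mem_image, Set.mem_Iio]
      exact ⟨j, hj, rfl⟩
    rw [hi2] at hm
    simp only [Finset.coe_image, Finset.coe_range, Set.mem_image, Set.mem_Iio] at hm
    obtain ⟨j', hj', hx⟩ := hm
    have hr1 : (t1 j + (s:ℤ)) % s = j := by
      rw [show t1 j + (s:ℤ) = t1 j + (s:ℤ)*1 by ring, Int.add_mul_emod_self_left]
      exact (ht1 j hj).2.1
    have hr2 : (t2 j' + (s:ℤ)) % s = j' := by
      rw [show t2 j' + (s:ℤ) = t2 j' + (s:ℤ)*1 by ring, Int.add_mul_emod_self_left]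
      exact (ht2 j' hj').2.1
    rw [hx] at hr2
    have : (j:ℤ) = j' := by omega
    have hjj : j = j' := by exact_mod_cast this
    subst hjj
    omega
  apply partn_eq_of_betaSet_eq
  rw [betaSet_eq_rays hs q1 hcl1 ht1, betaSet_eq_rays hs q2 hcl2 ht2]
  ext y
  simp only [Set.mem_setOf_eq]
  constructor
  · rintro ⟨j, hj, hd, hl⟩
    exact ⟨j, hj, by rw [← hteq j hj]; exact hd, by rw [← hteq j hj]; exact hl⟩
  · rintro ⟨j, hj, hd, hl⟩
    exact ⟨j, hj, by rw [hteq j hj]; exact hd, by rw [hteq j hj]; exact hl⟩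

end CoreAux

/-- Every `≡_N`-class of `s`-cores contains a unique `s`-core `ν` with
`k - l < Ns` for all `k, l ∈ S(ν)`. -/
theorem unique_bounded_rep (s N : ℕ) (hs : 2 ≤ s) (hN : 0 < N)
    (p : Partn) (hp : IsCore s p) :
    ∃! q : Partn, IsCore s q ∧ simRel s N p q ∧
      ∀ k ∈ sSet s q, ∀ l ∈ sSet s q, k - l < (N : ℤ) * s := by
  classical
  have hs1 : 1 ≤ s := by omega
  set D : ℤ := (N:ℤ) * s with hD
  have hD0 : 0 < D := by
    have h1 : (0:ℤ) < N := by exact_mod_cast hN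
    have h2 : (0:ℤ) < s := by exact_mod_cast (by omega : 0 < s)
    rw [hD]
    exact mul_pos h1 h2
  have hsD : (s:ℤ) ∣ D := ⟨N, by rw [hD]; ring⟩
  have hclp := (CoreAux.isCore_iff hs1 p).mp hp
  obtain ⟨t, ht⟩ := CoreAux.exists_tops hs1 p
  set x : ℕ → ℤ := fun j => t j + s with hx
  have hxres : ∀ j, j < s → x j % s = j := by
    intro j hj
    show (t j + (s:ℤ)) % s = j
    rw [show t j + (s:ℤ) = t j + (s:ℤ)*1 by ring, Int.add_mul_emod_self_left]
    exact (ht j hj).2.1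
  have hsSetp : sSet s p = ↑((Finset.range s).image x) := CoreAux.sSet_eq_image hs1 p hclp ht
  have hxsum : ∑ j ∈ Finset.range s, x j = ∑ j ∈ Finset.range s, (j:ℤ) := by
    show ∑ j ∈ Finset.range s, (t j + (s:ℤ)) = _
    rw [Finset.sum_add_distrib, CoreAux.tops_sum hs1 p hclp ht, Finset.sum_const,
      Finset.card_range, nsmul_eq_mul]
    ring
  have hdist : ∀ i j, i < s → j < s → i ≠ j → ¬ (D ∣ x i - x j) := by
    intro i j hi hj hne hdvd
    have h1 : (s:ℤ) ∣ x i - x j := dvd_trans hsD hdvd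
    have h2 : x j % (s:ℤ) = x i % s := Int.modEq_iff_dvd.mpr h1
    rw [hxres i hi, hxres j hj] at h2
    exact hne (by exact_mod_cast h2.symm)
  obtain ⟨c, hc⟩ := CoreAux.staircase hD0 hs1 x hdist ((s.choose 2 : ℕ) : ℤ)
    (by rw [hxsum, CoreAux.gauss_sum]; simp)
  set y : ℕ → ℤ := fun j => CoreAux.rep D c (x j) with hy
  have hydvd : ∀ j, D ∣ y j - x j := fun j => CoreAux.rep_dvd D c (x j)
  have hyres : ∀ j, j < s → y j % s = j := by
    intro j hj
    have h1 : (s:ℤ) ∣ y j - x j := dvd_trans hsD (hydvd j)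
    have h2 : x j % (s:ℤ) = y j % s := Int.modEq_iff_dvd.mpr h1
    rw [hxres j hj] at h2
    omega
  have hysum : ∑ j ∈ Finset.range s, y j = ∑ j ∈ Finset.range s, (j:ℤ) := by
    rw [CoreAux.gauss_sum]
    exact hc
  obtain ⟨q, hqcore, hqsset⟩ := CoreAux.core_of_sset hs1 y hyres hysum
  have hmemx : ∀ k, k ∈ sSet s p ↔ ∃ j, j < s ∧ x j = k := by
    intro k
    rw [hsSetp]
    simp [Finset.coe_image, Finset.coe_range, Set.mem_image]
  have hmemy : ∀ k, k ∈ sSet s q ↔ ∃ j, j < s ∧ y j = k := by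
    intro k
    rw [hqsset]
    simp [Finset.coe_image, Finset.coe_range, Set.mem_image]
  have hwin : ∀ k ∈ sSet s q, ∀ l ∈ sSet s q, k - l < D := by
    intro k hk l hl
    obtain ⟨i, hi, rfl⟩ := (hmemy k).mp hk
    obtain ⟨j, hj, rfl⟩ := (hmemy l).mp hl
    have h1 : CoreAux.rep D c (x i) < c + D := CoreAux.rep_ub hD0 c (x i)
    have h2 : c ≤ CoreAux.rep D c (x j) := CoreAux.rep_lb hD0 c (x j)
    show CoreAux.rep D c (x i) - CoreAux.rep D c (x j) < D
    omega
  have hsim : simRel s N p q := by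
    refine ⟨fun k => CoreAux.rep D c k, ⟨?_, ?_, ?_⟩, ?_⟩
    · intro k hk
      obtain ⟨j, hj, rfl⟩ := (hmemx k).mp hk
      exact (hmemy _).mpr ⟨j, hj, rfl⟩
    · intro a ha b hb hab
      obtain ⟨i, hi, rfl⟩ := (hmemx a).mp ha
      obtain ⟨j, hj, rfl⟩ := (hmemx b).mp hb
      have h1 : y i = y j := hab
      have h2 := hyres i hi
      have h3 := hyres j hj
      rw [h1] at h2
      have : i = j := by
        have : (i:ℤ) = j := by omega
        exact_mod_cast this
      rw [this]
    · intro z hz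
      obtain ⟨j, hj, rfl⟩ := (hmemy z).mp hz
      exact ⟨x j, (hmemx _).mpr ⟨j, hj, rfl⟩, rfl⟩
    · intro k hk
      exact CoreAux.rep_dvd D c k
  refine ⟨q, ⟨hqcore, hsim, fun k hk l hl => hwin k hk l hl⟩, ?_⟩
  rintro q' ⟨hq'core, ⟨φ, hφbij, hφdvd⟩, hq'win⟩
  have hclq' := (CoreAux.isCore_iff hs1 q').mp hq'core
  obtain ⟨t', ht'⟩ := CoreAux.exists_tops hs1 q'
  set x' : ℕ → ℤ := fun j => t' j + s with hx'
  have hx'res : ∀ j, j < s → x' j % s = j := by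
    intro j hj
    show (t' j + (s:ℤ)) % s = j
    rw [show t' j + (s:ℤ) = t' j + (s:ℤ)*1 by ring, Int.add_mul_emod_self_left]
    exact (ht' j hj).2.1
  have hsSetq' : sSet s q' = ↑((Finset.range s).image x') :=
    CoreAux.sSet_eq_image hs1 q' hclq' ht'
  have hx'sum : ∑ j ∈ Finset.range s, x' j = ∑ j ∈ Finset.range s, (j:ℤ) := by
    show ∑ j ∈ Finset.range s, (t' j + (s:ℤ)) = _
    rw [Finset.sum_add_distrib, CoreAux.tops_sum hs1 q' hclq' ht', Finset.sum_const,
      Finset.card_range, nsmul_eq_mul]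
    ring
  have hmemx' : ∀ k, k ∈ sSet s q' ↔ ∃ j, j < s ∧ x' j = k := by
    intro k
    rw [hsSetq']
    simp [Finset.coe_image, Finset.coe_range, Set.mem_image]
  have hkey : ∀ j, j < s → x' j = φ (x j) ∧ D ∣ x' j - x j := by
    intro j hj
    have hxj : x j ∈ sSet s p := (hmemx _).mpr ⟨j, hj, rfl⟩
    have h1 : φ (x j) ∈ sSet s q' := hφbij.1 hxj
    obtain ⟨j', hj', hjx⟩ := (hmemx' _).mp h1
    have hdvdφ : D ∣ φ (x j) - x j := hφdvd _ hxj
    have hsd : (s:ℤ) ∣ φ (x j) - x j := dvd_trans hsD hdvdφ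
    have h2 : (x j) % (s:ℤ) = φ (x j) % s := Int.modEq_iff_dvd.mpr hsd
    rw [hxres j hj, ← hjx, hx'res j' hj'] at h2
    have hjj : j = j' := by exact_mod_cast h2
    subst hjj
    refine ⟨hjx, ?_⟩
    rw [hjx]
    exact hdvdφ
  have hxy : ∀ j, j < s → x' j = y j := by
    set a : ℕ → ℤ := fun j => (x' j - y j) / D with ha
    have haD : ∀ j, j < s → D * a j = x' j - y j := by
      intro j hj
      apply Int.mul_ediv_cancel'
      have d1 := (hkey j hj).2
      have d2 := hydvd j
      have d3 := dvd_sub d1 d2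
      rw [show x' j - x j - (y j - x j) = x' j - y j by ring] at d3
      exact d3
    have hasum : ∑ j ∈ Finset.range s, a j = 0 := by
      have h1 : ∑ j ∈ Finset.range s, D * a j = 0 := by
        have h2 : ∑ j ∈ Finset.range s, D * a j = ∑ j ∈ Finset.range s, (x' j - y j) :=
          Finset.sum_congr rfl (fun j hj => haD j (Finset.mem_range.mp hj))
        rw [h2, Finset.sum_sub_distrib, hx'sum, hysum]
        ring
      rw [← Finset.mul_sum] at h1
      exact (mul_eq_zero.mp h1).resolve_left (by omega)
    by_contra hcon
    push_neg at hcon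
    obtain ⟨j0, hj0, hne⟩ := hcon
    have hane : a j0 ≠ 0 := fun h => hne (by
      have h5 := haD j0 hj0
      rw [h, mul_zero] at h5
      omega)
    have hpos : ∃ i, i < s ∧ 0 < a i := by
      by_contra hno
      push_neg at hno
      have hlt : ∑ j ∈ Finset.range s, a j < ∑ j ∈ Finset.range s, (0:ℤ) :=
        Finset.sum_lt_sum (fun i hi => hno i (Finset.mem_range.mp hi))
          ⟨j0, Finset.mem_range.mpr hj0, lt_of_le_of_ne (hno j0 hj0) hane⟩
      rw [Finset.sum_const_zero] at hlt
      omega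
    have hneg : ∃ l, l < s ∧ a l < 0 := by
      by_contra hno
      push_neg at hno
      have hlt : ∑ j ∈ Finset.range s, (0:ℤ) < ∑ j ∈ Finset.range s, a j :=
        Finset.sum_lt_sum (fun i hi => hno i (Finset.mem_range.mp hi))
          ⟨j0, Finset.mem_range.mpr hj0, lt_of_le_of_ne (hno j0 hj0) (Ne.symm hane)⟩
      rw [Finset.sum_const_zero] at hlt
      omega
    obtain ⟨i, hi, hai⟩ := hpos
    obtain ⟨l, hl, hal⟩ := hneg
    have w1 : x' i - x' l < (N:ℤ) * s :=
      hq'win _ ((hmemx' _).mpr ⟨i, hi, rfl⟩) _ ((hmemx' _).mpr ⟨l, hl, rfl⟩)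
    rw [← hD] at w1
    have w2 : y l - y i < D :=
      hwin _ ((hmemy _).mpr ⟨l, hl, rfl⟩) _ ((hmemy _).mpr ⟨i, hi, rfl⟩)
    have e1 := haD i hi
    have e2 := haD l hl
    have b1 : D ≤ D * a i := by nlinarith
    have b2 : D * a l ≤ -D := by nlinarith
    omega
  apply CoreAux.core_eq_of_sSet_eq hs1 hq'core hqcore
  rw [hsSetq', hqsset]
  have himg : (Finset.range s).image x' = (Finset.range s).image y :=
    Finset.image_congr (fun j hj => hxy j (by simpa using hj))
  rw [himg]
end
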